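/- arXiv:1704.03539 — 9 statements merged into one kernel-verified Lean document; each statement's English description precedes it below -/
import Mathlib

section
/- Fix n ≥ 0. Let R = ℤ[b_0, b_1, …, λ_1, λ_2, …] be the polynomial ring over ℤ in the commuting indeterminates b_i (i ≥ 0) and λ_i (i ≥ 1), and let μ_m ∈ R be the m-th moment of (b, λ). Then the (n+1)×(n+1) Hankel matrix (μ_{i+j})_{0≤i,j≤n} has SSNF diag(1, λ_1, λ_1λ_2, …, λ_1λ_2⋯λ_n) over R. -/
/-- The finite set of Motzkin paths of length `t`: functions `ω : {0,…,t} → ℕ`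
(0-indexed version of `ω : {1,…,t+1} → ℕ`) with `ω 0 = ω t = 0` and steps of size at most 1.
Since such a path starting at 0 has all values `≤ t`, restricting values to `Finset.range (t+1)`
loses nothing. -/
def motzkinPaths (t : ℕ) : Finset (Fin (t+1) → ℕ) :=
  (Fintype.piFinset fun _ : Fin (t+1) => Finset.range (t+1)).filter
    (fun ω => ω 0 = 0 ∧ ω (Fin.last t) = 0 ∧
      ∀ i : Fin t, ω i.succ ≤ ω i.castSucc + 1 ∧ ω i.castSucc ≤ ω i.succ + 1)

/-- The weight of a Motzkin path: a factor `b (ω i)` for every level step at height `ω i`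
and a factor `lam (ω j)` for every down step starting at height `ω j`. -/
def motzkinWeight {R : Type*} [CommRing R] (b lam : ℕ → R) {t : ℕ} (ω : Fin (t+1) → ℕ) : R :=
  ∏ i : Fin t, if ω i.succ = ω i.castSucc then b (ω i.castSucc)
    else if ω i.succ + 1 = ω i.castSucc then lam (ω i.castSucc) else 1

/-- The `t`-th moment of the pair of sequences `(b, lam)`: the weighted generating function of
Motzkin paths of length `t`. -/
def motzkinMoment {R : Type*} [CommRing R] (b lam : ℕ → R) (t : ℕ) : R :=
  ∑ ω ∈ motzkinPaths t, motzkinWeight b lam ω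

open Matrix

section Aux
variable {R : Type*} [CommRing R] (b lam : ℕ → R)

/-- prefix Motzkin paths from height `0` to height `k` of length `t`. -/
def ppaths (t k : ℕ) : Finset (Fin (t+1) → ℕ) :=
  (Fintype.piFinset fun _ : Fin (t+1) => Finset.range (t+1)).filter
    (fun ω => ω 0 = 0 ∧ ω (Fin.last t) = k ∧
      ∀ i : Fin t, ω i.succ ≤ ω i.castSucc + 1 ∧ ω i.castSucc ≤ ω i.succ + 1)

/-- the sum of weights of paths in `ppaths t k`. -/
def SS (t k : ℕ) : R := ∑ ω ∈ ppaths t k, motzkinWeight b lam ω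

lemma motzkinMoment_eq_SS (t : ℕ) : motzkinMoment b lam t = SS b lam t 0 := rfl

lemma ppaths_le {t k : ℕ} {ω : Fin (t+1) → ℕ} (h : ω ∈ ppaths t k) :
    ∀ i : Fin (t+1), ω i ≤ i := by
  rw [ppaths, Finset.mem_filter] at h
  obtain ⟨-, h0, -, hstep⟩ := h
  intro i
  induction i using Fin.induction with
  | zero => simp [h0]
  | succ i ih =>
      have h1 := (hstep i).1
      simp only [Fin.coe_castSucc, Fin.val_succ] at *
      omega

lemma ppaths_eq_empty {t k : ℕ} (h : t < k) : ppaths t k = ∅ := by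
  rw [Finset.eq_empty_iff_forall_notMem]
  intro ω hω
  have h1 := ppaths_le hω (Fin.last t)
  have h2 : ω (Fin.last t) = k := (Finset.mem_filter.1 hω).2.2.1
  simp only [Fin.val_last] at h1
  omega

lemma SS_eq_zero {t k : ℕ} (h : t < k) : SS b lam t k = 0 := by
  rw [SS, ppaths_eq_empty h, Finset.sum_empty]

lemma ppaths_zero_zero : ppaths 0 0 = {fun _ => (0:ℕ)} := by
  ext ω
  simp only [ppaths, Finset.mem_filter, Finset.mem_singleton, Fintype.mem_piFinset,
    Finset.mem_range]
  constructor
  · rintro ⟨-, h0, -, -⟩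
    funext i
    rw [Fin.fin_one_eq_zero i, h0]
  · rintro rfl
    exact ⟨fun i => by simp, rfl, rfl, fun i => i.elim0⟩

lemma SS_zero (k : ℕ) : SS b lam 0 k = if k = 0 then 1 else 0 := by
  rcases eq_or_ne k 0 with rfl | hk
  · rw [SS, ppaths_zero_zero, Finset.sum_singleton, if_pos rfl, motzkinWeight]
    exact Finset.prod_of_isEmpty _
  · rw [SS, ppaths_eq_empty (by omega), Finset.sum_empty, if_neg hk]

/-- the weight of a single step. -/
def stepf (x y : ℕ) : R := if y = x then b x else if y + 1 = x then lam x else 1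

lemma motzkinWeight_eq {t : ℕ} (ω : Fin (t+1) → ℕ) :
    motzkinWeight b lam ω = ∏ i : Fin t, stepf b lam (ω i.castSucc) (ω i.succ) := rfl

lemma wt_snoc {t : ℕ} (ω : Fin (t+1) → ℕ) (k : ℕ) :
    motzkinWeight b lam (Fin.snoc ω k : Fin (t+1+1) → ℕ) =
      motzkinWeight b lam ω * stepf b lam (ω (Fin.last t)) k := by
  rw [motzkinWeight_eq, motzkinWeight_eq, Fin.prod_univ_castSucc]
  congr 1
  · refine Finset.prod_congr rfl fun i _ => ?_
    rw [Fin.succ_castSucc, Fin.snoc_castSucc, Fin.snoc_castSucc]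
  · rw [Fin.succ_last, Fin.snoc_last, Fin.snoc_castSucc]

lemma snoc_mem {t k m : ℕ} (hk : k ≤ t + 1) (h1 : m ≤ k+1) (h2 : k ≤ m+1)
    {ω : Fin (t+1) → ℕ} (hω : ω ∈ ppaths t m) :
    (Fin.snoc ω k : Fin (t+1+1) → ℕ) ∈ ppaths (t+1) k := by
  simp only [ppaths, Finset.mem_filter, Fintype.mem_piFinset, Finset.mem_range] at hω ⊢
  obtain ⟨hb, h0, hl, hs⟩ := hω
  refine ⟨?_, ?_, ?_, ?_⟩
  · intro i
    induction i using Fin.lastCases with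
    | last => rw [Fin.snoc_last]; omega
    | cast j => rw [Fin.snoc_castSucc]; have := hb j; omega
  · show (Fin.snoc ω k : Fin (t+1+1) → ℕ) (Fin.castSucc 0) = 0
    rw [Fin.snoc_castSucc]; exact h0
  · rw [Fin.snoc_last]
  · intro i
    induction i using Fin.lastCases with
    | last =>
        rw [Fin.succ_last, Fin.snoc_last, Fin.snoc_castSucc, hl]
        exact ⟨h2, h1⟩
    | cast j => rw [Fin.succ_castSucc, Fin.snoc_castSucc, Fin.snoc_castSucc]; exact hs j

lemma init_mem {t k : ℕ} {ω : Fin (t+1+1) → ℕ} (hω : ω ∈ ppaths (t+1) k) :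
    Fin.init ω ∈ ppaths t (ω (Fin.castSucc (Fin.last t))) := by
  have hle := ppaths_le hω
  simp only [ppaths, Finset.mem_filter, Fintype.mem_piFinset, Finset.mem_range] at hω ⊢
  obtain ⟨hb, h0, hl, hs⟩ := hω
  refine ⟨fun i => ?_, ?_, rfl, fun i => ?_⟩
  · have := hle i.castSucc
    simp only [Fin.init, Fin.coe_castSucc] at *
    have : (i : ℕ) ≤ t := by omega
    omega
  · show ω (Fin.castSucc 0) = 0
    simpa using h0
  · have := hs i.castSucc
    simp only [Fin.init]
    rwa [Fin.succ_castSucc] at this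

lemma pen_bound {t k : ℕ} {ω : Fin (t+1+1) → ℕ} (hω : ω ∈ ppaths (t+1) k) :
    ω (Fin.castSucc (Fin.last t)) ≤ k + 1 ∧ k ≤ ω (Fin.castSucc (Fin.last t)) + 1 := by
  simp only [ppaths, Finset.mem_filter] at hω
  obtain ⟨-, -, hl, hs⟩ := hω
  have h := hs (Fin.last t)
  rw [Fin.succ_last, hl] at h
  exact ⟨h.2, h.1⟩

lemma sum_filter_pen (t k m : ℕ) (hk : k ≤ t+1) (h1 : m ≤ k+1) (h2 : k ≤ m+1) :
    ∑ ω ∈ (ppaths (t+1) k).filter (fun ω => ω (Fin.castSucc (Fin.last t)) = m),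
      motzkinWeight b lam ω = SS b lam t m * stepf b lam m k := by
  rw [SS, Finset.sum_mul]
  refine Finset.sum_nbij' (i := fun ω => Fin.init ω)
    (j := fun ω => (Fin.snoc ω k : Fin (t+1+1) → ℕ)) ?_ ?_ ?_ ?_ ?_
  · intro a ha
    rw [Finset.mem_filter] at ha
    have := init_mem ha.1
    rwa [ha.2] at this
  · intro a ha
    rw [Finset.mem_filter]
    have hm : a (Fin.last t) = m := (Finset.mem_filter.1 ha).2.2.1
    refine ⟨snoc_mem hk h1 h2 ha, ?_⟩
    show (Fin.snoc a k : Fin (t+1+1) → ℕ) (Fin.castSucc (Fin.last t)) = m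
    rw [Fin.snoc_castSucc, hm]
  · intro a ha
    rw [Finset.mem_filter] at ha
    have hk' : a (Fin.last (t+1)) = k := (Finset.mem_filter.1 ha.1).2.2.1
    rw [← hk']
    exact Fin.snoc_init_self a
  · intro a _
    simp
  · intro a ha
    rw [Finset.mem_filter] at ha
    have hm : a (Fin.castSucc (Fin.last t)) = m := ha.2
    have hk' : a (Fin.last (t+1)) = k := (Finset.mem_filter.1 ha.1).2.2.1
    calc motzkinWeight b lam a
        = motzkinWeight b lam (Fin.snoc (Fin.init a) (a (Fin.last (t+1)))) := by
          rw [Fin.snoc_init_self]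
      _ = motzkinWeight b lam (Fin.init a) * stepf b lam (Fin.init a (Fin.last t)) (a (Fin.last (t+1))) := wt_snoc b lam _ _
      _ = motzkinWeight b lam (Fin.init a) * stepf b lam m k := by
          rw [hk', show Fin.init a (Fin.last t) = m from hm]

lemma SS_succ (t k : ℕ) :
    SS b lam (t+1) k = lam (k+1) * SS b lam t (k+1) + b k * SS b lam t k +
      (if k = 0 then 0 else SS b lam t (k-1)) := by
  rcases le_or_gt k (t+1) with hk | hk
  swap
  · rw [SS_eq_zero b lam hk, SS_eq_zero b lam (show t < k+1 by omega),
      SS_eq_zero b lam (show t < k by omega), SS_eq_zero b lam (show t < k-1 by omega)]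
    simp
  · rw [SS, ← Finset.sum_filter_add_sum_filter_not (ppaths (t+1) k)
      (fun ω => ω (Fin.castSucc (Fin.last t)) = k+1),
      ← Finset.sum_filter_add_sum_filter_not ((ppaths (t+1) k).filter
        (fun ω => ¬ ω (Fin.castSucc (Fin.last t)) = k+1))
        (fun ω => ω (Fin.castSucc (Fin.last t)) = k)]
    have e2 : ((ppaths (t+1) k).filter (fun ω => ¬ ω (Fin.castSucc (Fin.last t)) = k+1)).filter
        (fun ω => ω (Fin.castSucc (Fin.last t)) = k)
        = (ppaths (t+1) k).filter (fun ω => ω (Fin.castSucc (Fin.last t)) = k) := by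
      rw [Finset.filter_filter]
      exact Finset.filter_congr fun ω _ => by constructor <;> intro h <;> [exact h.2; exact ⟨by omega, h⟩]
    have h1 := sum_filter_pen b lam t k (k+1) hk (by omega) (by omega)
    have h2 := sum_filter_pen b lam t k k hk (by omega) (by omega)
    rw [e2, h1, h2]
    have hstep1 : stepf b lam (k+1) k = lam (k+1) := by
      rw [stepf, if_neg (by omega), if_pos rfl]
    have hstep2 : stepf b lam k k = b k := by rw [stepf, if_pos rfl]
    rw [hstep1, hstep2]
    rcases eq_or_ne k 0 with rfl | hk0
    · have e3 : ((ppaths (t+1) 0).filter (fun ω => ¬ ω (Fin.castSucc (Fin.last t)) = 0+1)).filter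
          (fun ω => ¬ ω (Fin.castSucc (Fin.last t)) = 0) = ∅ := by
        rw [Finset.filter_filter, Finset.filter_eq_empty_iff]
        intro ω hω
        have := pen_bound hω
        omega
      rw [e3, Finset.sum_empty, if_pos rfl]
      ring
    · have e3 : ((ppaths (t+1) k).filter (fun ω => ¬ ω (Fin.castSucc (Fin.last t)) = k+1)).filter
          (fun ω => ¬ ω (Fin.castSucc (Fin.last t)) = k)
          = (ppaths (t+1) k).filter (fun ω => ω (Fin.castSucc (Fin.last t)) = k-1) := by
        rw [Finset.filter_filter]
        refine Finset.filter_congr fun ω hω => ?_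
        have := pen_bound hω
        constructor
        · intro h; omega
        · intro h; omega
      rw [e3, sum_filter_pen b lam t k (k-1) hk (by omega) (by omega), if_neg hk0]
      have hstep3 : stepf b lam (k-1) k = 1 := by
        rw [stepf, if_neg (by omega), if_neg (by omega)]
      rw [hstep3]
      ring

lemma SS_diag : ∀ t : ℕ, SS b lam t t = 1 := by
  intro t
  induction t with
  | zero => rw [SS_zero]; simp
  | succ t ih =>
      rw [SS_succ, SS_eq_zero b lam (by omega), SS_eq_zero b lam (by omega), if_neg (by omega)]
      simpa using ih

lemma SS_swap (i j M : ℕ) (hj : j < M) :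
    ∑ k ∈ Finset.range (M+1), (∏ x ∈ Finset.Icc 1 k, lam x) * SS b lam (i+1) k * SS b lam j k
  = ∑ k ∈ Finset.range (M+1), (∏ x ∈ Finset.Icc 1 k, lam x) * SS b lam i k * SS b lam (j+1) k := by
  have hΛ : ∀ k : ℕ, (∏ x ∈ Finset.Icc 1 (k+1), lam x) = (∏ x ∈ Finset.Icc 1 k, lam x) * lam (k+1) :=
    fun k => Finset.prod_Icc_succ_top (by omega) _
  have shift1 : ∀ u v : ℕ → R, v M = 0 →
      ∑ k ∈ Finset.range (M+1), (∏ x ∈ Finset.Icc 1 k, lam x) * (lam (k+1) * u (k+1)) * v k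
      = ∑ k ∈ Finset.range (M+1), (∏ x ∈ Finset.Icc 1 k, lam x) * u k *
          (if k = 0 then 0 else v (k-1)) := by
    intro u v hv
    rw [Finset.sum_range_succ, hv, mul_zero, add_zero,
      Finset.sum_range_succ' (f := fun k => (∏ x ∈ Finset.Icc 1 k, lam x) * u k *
        (if k = 0 then 0 else v (k-1)))]
    rw [if_pos rfl, mul_zero, add_zero]
    refine Finset.sum_congr rfl fun k _ => ?_
    rw [if_neg (Nat.succ_ne_zero k), Nat.add_sub_cancel, hΛ k]
    ring
  have shift2 : ∀ u v : ℕ → R, v (M+1) = 0 →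
      ∑ k ∈ Finset.range (M+1), (∏ x ∈ Finset.Icc 1 k, lam x) *
          (if k = 0 then 0 else u (k-1)) * v k
      = ∑ k ∈ Finset.range (M+1), (∏ x ∈ Finset.Icc 1 k, lam x) * u k * (lam (k+1) * v (k+1)) := by
    intro u v hv
    rw [Finset.sum_range_succ (f := fun k => (∏ x ∈ Finset.Icc 1 k, lam x) * u k *
      (lam (k+1) * v (k+1))), hv, mul_zero, mul_zero, add_zero,
      Finset.sum_range_succ' (f := fun k => (∏ x ∈ Finset.Icc 1 k, lam x) *
        (if k = 0 then 0 else u (k-1)) * v k)]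
    rw [if_pos rfl, mul_zero, zero_mul, add_zero]
    refine Finset.sum_congr rfl fun k _ => ?_
    rw [if_neg (Nat.succ_ne_zero k), Nat.add_sub_cancel, hΛ k]
    ring
  have hsplit : ∀ a c : ℕ → R,
      (∑ k ∈ Finset.range (M+1), (∏ x ∈ Finset.Icc 1 k, lam x) *
        (lam (k+1) * a (k+1) + b k * a k + (if k = 0 then 0 else a (k-1))) * c k)
      = (∑ k ∈ Finset.range (M+1), (∏ x ∈ Finset.Icc 1 k, lam x) * (lam (k+1) * a (k+1)) * c k)
      + (∑ k ∈ Finset.range (M+1), (∏ x ∈ Finset.Icc 1 k, lam x) * (b k * a k) * c k)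
      + (∑ k ∈ Finset.range (M+1), (∏ x ∈ Finset.Icc 1 k, lam x) *
          (if k = 0 then 0 else a (k-1)) * c k) := by
    intro a c
    rw [← Finset.sum_add_distrib, ← Finset.sum_add_distrib]
    exact Finset.sum_congr rfl fun k _ => by ring
  calc ∑ k ∈ Finset.range (M+1), (∏ x ∈ Finset.Icc 1 k, lam x) * SS b lam (i+1) k * SS b lam j k
      = ∑ k ∈ Finset.range (M+1), (∏ x ∈ Finset.Icc 1 k, lam x) *
        (lam (k+1) * SS b lam i (k+1) + b k * SS b lam i k +
          (if k = 0 then 0 else SS b lam i (k-1))) * SS b lam j k := by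
        exact Finset.sum_congr rfl fun k _ => by rw [SS_succ]
    _ = _ := by
        rw [hsplit (fun m => SS b lam i m) (fun m => SS b lam j m)]
        have T1 := shift1 (fun m => SS b lam i m) (fun m => SS b lam j m)
          (SS_eq_zero b lam hj)
        have T3 := shift2 (fun m => SS b lam i m) (fun m => SS b lam j m)
          (SS_eq_zero b lam (by omega))
        rw [T1, T3]
        have : ∀ k : ℕ, lam (k+1) * SS b lam j (k+1) + b k * SS b lam j k +
            (if k = 0 then 0 else SS b lam j (k-1)) = SS b lam (j+1) k :=
          fun k => (SS_succ b lam j k).symm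
        rw [← Finset.sum_add_distrib, ← Finset.sum_add_distrib]
        refine Finset.sum_congr rfl fun k _ => ?_
        rw [SS_succ b lam j k]
        ring


lemma moment_sum (M : ℕ) : ∀ j i : ℕ, j < M + 1 → motzkinMoment b lam (i + j) =
    ∑ k ∈ Finset.range (M+1), (∏ x ∈ Finset.Icc 1 k, lam x) * SS b lam i k * SS b lam j k := by
  intro j
  induction j with
  | zero =>
      intro i _
      rw [Nat.add_zero, motzkinMoment_eq_SS]
      have h1 : ∑ k ∈ Finset.range (M+1), (∏ x ∈ Finset.Icc 1 k, lam x) * SS b lam i k *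
          SS b lam 0 k
          = (∏ x ∈ Finset.Icc 1 0, lam x) * SS b lam i 0 * SS b lam 0 0 :=
        Finset.sum_eq_single 0 (fun k _ hk => by rw [SS_zero, if_neg hk, mul_zero])
          (fun h => absurd (Finset.mem_range.2 (by omega)) h)
      rw [h1, SS_zero, if_pos rfl, mul_one, show Finset.Icc 1 0 = (∅ : Finset ℕ) from rfl,
        Finset.prod_empty, one_mul]
  | succ j ih =>
      intro i hj
      rw [show i + (j+1) = (i+1) + j by omega, ih (i+1) (by omega)]
      exact SS_swap b lam i j M (by omega)

end Aux

/-- `A` has special Smith normal form `diag d` over `R`: `P * A * Q = diagonal d` for some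
`P, Q` of determinant `1`, and `d j ∣ d i` whenever `j ≤ i`. -/
def HasSSNF {R : Type*} [CommRing R] {n : ℕ} (A : Matrix (Fin n) (Fin n) R) (d : Fin n → R) :
    Prop :=
  (∃ P Q : Matrix (Fin n) (Fin n) R, P.det = 1 ∧ Q.det = 1 ∧ P * A * Q = Matrix.diagonal d) ∧
  ∀ i j : Fin n, j ≤ i → d j ∣ d i

/-- Over `R = ℤ[b₀, b₁, …, λ₁, λ₂, …]`, the Hankel matrix `(μ_{i+j})` of
moments has SSNF `diag(1, λ₁, λ₁λ₂, …, λ₁⋯λ_n)`. -/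
theorem hankel_moment_SSNF (n : ℕ) :
    let R := MvPolynomial (ℕ ⊕ ℕ+) ℤ
    let b : ℕ → R := fun i => MvPolynomial.X (Sum.inl i)
    let lam : ℕ → R := fun i => if h : 0 < i then MvPolynomial.X (Sum.inr ⟨i, h⟩) else 0
    HasSSNF (fun i j : Fin (n+1) => motzkinMoment b lam ((i : ℕ) + (j : ℕ)))
      (fun i => ∏ t ∈ Finset.Icc 1 (i : ℕ), lam t) := by
  intro R b lam
  set L : Matrix (Fin (n+1)) (Fin (n+1)) R :=
    Matrix.of (fun i k : Fin (n+1) => SS b lam (i:ℕ) (k:ℕ)) with hLdef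
  have hLtri : L.BlockTriangular OrderDual.toDual := by
    intro i k hik
    exact SS_eq_zero b lam (show (i:ℕ) < (k:ℕ) from hik)
  have hdetL : L.det = 1 := by
    rw [Matrix.det_of_lowerTriangular L hLtri]
    exact Finset.prod_eq_one fun i _ => SS_diag b lam (i : ℕ)
  have hunit : IsUnit L.det := by rw [hdetL]; exact isUnit_one
  have hunitT : IsUnit (Matrix.det Lᵀ) := by rw [Matrix.det_transpose, hdetL]; exact isUnit_one
  have hA : (fun i j : Fin (n+1) => motzkinMoment b lam ((i:ℕ)+(j:ℕ)))
      = L * Matrix.diagonal (fun k : Fin (n+1) => ∏ x ∈ Finset.Icc 1 (k:ℕ), lam x) * Lᵀ := by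
    funext i j
    have := moment_sum b lam n (j:ℕ) (i:ℕ) (by omega)
    rw [this]
    show _ = ((L * Matrix.diagonal (fun k : Fin (n+1) => ∏ x ∈ Finset.Icc 1 (k:ℕ), lam x)) * Lᵀ) i j
    rw [Matrix.mul_apply]
    simp only [Matrix.mul_diagonal, Matrix.transpose_apply, hLdef, Matrix.of_apply]
    rw [Fin.sum_univ_eq_sum_range (fun m => SS b lam (i:ℕ) m *
      (∏ x ∈ Finset.Icc 1 m, lam x) * SS b lam (j:ℕ) m)]
    exact Finset.sum_congr rfl fun k _ => by ring
  constructor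
  · refine ⟨L⁻¹, (Lᵀ)⁻¹, ?_, ?_, ?_⟩
    · rw [Matrix.det_nonsing_inv, hdetL, Ring.inverse_one]
    · rw [Matrix.det_nonsing_inv, Matrix.det_transpose, hdetL, Ring.inverse_one]
    · rw [hA]
      simp only [← Matrix.mul_assoc]
      rw [Matrix.nonsing_inv_mul L hunit, Matrix.one_mul, Matrix.mul_assoc,
        Matrix.mul_nonsing_inv _ hunitT, Matrix.mul_one]
  · intro i j hij
    exact Finset.prod_dvd_prod_of_subset _ _ lam (Finset.Icc_subset_Icc_right hij)
end

section
/- Fix n ≥ 0. Over ℤ[q]: (a) the (n+1)×(n+1) Hankel matrix (C_{i+j}(q))_{0≤i,j≤n} has SSNF diag(q^{binom(0,2)}, q^{binom(2,2)}, q^{binom(4,2)}, …, q^{binom(2n,2)}); (b) the (n+1)×(n+1) Hankel matrix (C_{i+j+1}(q))_{0≤i,j≤n} has SSNF diag(q^{binom(1,2)}, q^{binom(3,2)}, q^{binom(5,2)}, …, q^{binom(2n+1,2)}). Here binom(m,2) = m(m−1)/2. -/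
open Polynomial

/-- The `q`-Catalan numbers: `C 0 = 1`, `C (n+1) = ∑_{k=0}^n q^k C k C (n-k)`. -/
noncomputable def qCatalan : ℕ → Polynomial ℤ
  | 0 => 1
  | n + 1 => ∑ k ∈ (Finset.range (n+1)).attach,
      Polynomial.X ^ (k : ℕ) * qCatalan k * qCatalan (n - (k : ℕ))
  decreasing_by
  · exact Finset.mem_range.mp k.2
  · exact Nat.lt_succ_of_le (Nat.sub_le n k)

noncomputable def pf : ℕ → ℕ → Polynomial ℤ
  | 0, 0 => 1
  | 0, _ + 1 => 0
  | n + 1, k => (if k = 0 then 0 else pf n (k - 1)) + X ^ k * pf n (k + 1)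

lemma pf_zero (k : ℕ) : pf 0 k = if k = 0 then 1 else 0 := by
  cases k <;> simp [pf]

lemma pf_succ (n k : ℕ) :
    pf (n + 1) k = (if k = 0 then 0 else pf n (k - 1)) + X ^ k * pf n (k + 1) := by
  rfl

lemma pf_eq_zero : ∀ n k, (n < k ∨ (n + k) % 2 = 1) → pf n k = 0 := by
  intro n
  induction n with
  | zero =>
    intro k h
    have : k ≠ 0 := by omega
    rw [pf_zero]; simp [this]
  | succ n ih =>
    intro k h
    rw [pf_succ]
    have h1 : pf n (k + 1) = 0 := ih _ (by omega)
    rcases Nat.eq_zero_or_pos k with hk | hk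
    · subst hk; simpa using h1
    · have hk' : k ≠ 0 := by omega
      have h2 : pf n (k - 1) = 0 := ih _ (by omega)
      simp [hk', h1, h2]

lemma pf_diag : ∀ n, pf n n = 1 := by
  intro n
  induction n with
  | zero => simp [pf_zero]
  | succ n ih =>
    rw [pf_succ, pf_eq_zero n (n + 2) (by omega)]
    simp [ih]



noncomputable def pS (M a b : ℕ) : Polynomial ℤ :=
  ∑ k ∈ Finset.range M, pf a k * X ^ k.choose 2 * pf b k

lemma choose_two_succ (k : ℕ) : (k + 1).choose 2 = k.choose 2 + k := by
  rw [Nat.choose_two_right, Nat.choose_two_right]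
  rcases k with _ | k
  · rfl
  · have h1 : (k + 1 + 1) * (k + 1) = (k + 1) * k + 2 * (k + 1) := by ring
    have h2 : 2 ∣ (k + 1) * k := by
      rw [Nat.mul_comm]; exact (Nat.even_mul_succ_self k).two_dvd
    simp only [Nat.add_sub_cancel]
    omega

lemma sum_shift (M : ℕ) (g : ℕ → Polynomial ℤ) (h0 : g 0 = 0) :
    ∑ k ∈ Finset.range (M + 1), g k = ∑ k ∈ Finset.range M, g (k + 1) := by
  rw [Finset.sum_range_succ', h0, add_zero]

lemma sum_drop (M : ℕ) (g : ℕ → Polynomial ℤ) (htop : g M = 0) :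
    ∑ k ∈ Finset.range (M + 1), g k = ∑ k ∈ Finset.range M, g k := by
  rw [Finset.sum_range_succ, htop, add_zero]

lemma pS_exchange {M a b : ℕ} (ha : a < M) (hb : b < M) :
    pS M (a + 1) b = pS M a (b + 1) := by
  obtain ⟨M', rfl⟩ : ∃ M', M = M' + 1 := ⟨M - 1, by omega⟩
  unfold pS
  have lhs : ∑ k ∈ Finset.range (M' + 1), pf (a+1) k * X ^ k.choose 2 * pf b k
      = (∑ k ∈ Finset.range (M' + 1), (if k = 0 then 0 else pf a (k-1)) * X ^ k.choose 2 * pf b k)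
        + ∑ k ∈ Finset.range (M' + 1), X ^ k * pf a (k+1) * X ^ k.choose 2 * pf b k := by
    rw [← Finset.sum_add_distrib]
    refine Finset.sum_congr rfl fun k _ => ?_
    rw [pf_succ]; ring
  have rhs : ∑ k ∈ Finset.range (M' + 1), pf a k * X ^ k.choose 2 * pf (b+1) k
      = (∑ k ∈ Finset.range (M' + 1), pf a k * X ^ k.choose 2 * (if k = 0 then 0 else pf b (k-1)))
        + ∑ k ∈ Finset.range (M' + 1), pf a k * X ^ k.choose 2 * (X ^ k * pf b (k+1)) := by
    rw [← Finset.sum_add_distrib]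
    refine Finset.sum_congr rfl fun k _ => ?_
    rw [pf_succ]; ring
  have E1 : ∑ k ∈ Finset.range (M' + 1), (if k = 0 then 0 else pf a (k-1)) * X ^ k.choose 2 * pf b k
      = ∑ k ∈ Finset.range (M' + 1), pf a k * X ^ k.choose 2 * (X ^ k * pf b (k+1)) :=
    calc ∑ k ∈ Finset.range (M' + 1), (if k = 0 then 0 else pf a (k-1)) * X ^ k.choose 2 * pf b k
        = ∑ k ∈ Finset.range M',
            (if k + 1 = 0 then 0 else pf a (k+1-1)) * X ^ (k+1).choose 2 * pf b (k+1) :=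
          sum_shift M' (fun k => (if k = 0 then 0 else pf a (k-1)) * X ^ k.choose 2 * pf b k)
            (by simp)
      _ = ∑ k ∈ Finset.range M', pf a k * X ^ k.choose 2 * (X ^ k * pf b (k+1)) := by
          refine Finset.sum_congr rfl fun k _ => ?_
          simp only [Nat.succ_ne_zero, if_false, Nat.add_sub_cancel, choose_two_succ, pow_add]
          ring
      _ = ∑ k ∈ Finset.range (M' + 1), pf a k * X ^ k.choose 2 * (X ^ k * pf b (k+1)) :=
          (sum_drop M' _ (by rw [pf_eq_zero b (M' + 1) (by omega)]; ring)).symm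
  have E2 : ∑ k ∈ Finset.range (M' + 1), X ^ k * pf a (k+1) * X ^ k.choose 2 * pf b k
      = ∑ k ∈ Finset.range (M' + 1), pf a k * X ^ k.choose 2 * (if k = 0 then 0 else pf b (k-1)) :=
    calc ∑ k ∈ Finset.range (M' + 1), X ^ k * pf a (k+1) * X ^ k.choose 2 * pf b k
        = ∑ k ∈ Finset.range M', X ^ k * pf a (k+1) * X ^ k.choose 2 * pf b k :=
          sum_drop M' _ (by rw [pf_eq_zero a (M' + 1) (by omega)]; ring)
      _ = ∑ k ∈ Finset.range M',
            pf a (k+1) * X ^ (k+1).choose 2 * (if k + 1 = 0 then 0 else pf b (k+1-1)) := by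
          refine Finset.sum_congr rfl fun k _ => ?_
          simp only [Nat.succ_ne_zero, if_false, Nat.add_sub_cancel, choose_two_succ, pow_add]
          ring
      _ = ∑ k ∈ Finset.range (M' + 1), pf a k * X ^ k.choose 2 * (if k = 0 then 0 else pf b (k-1)) :=
          (sum_shift M' (fun k => pf a k * X ^ k.choose 2 * (if k = 0 then 0 else pf b (k-1)))
            (by simp)).symm
  rw [lhs, rhs, E1, E2, add_comm]

lemma pS_split : ∀ b a M, a + b < M → pS M a b = pf (a + b) 0 := by
  intro b
  induction b with
  | zero =>
    intro a M h
    unfold pS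
    rw [Finset.sum_eq_single 0]
    · simp [pf_zero]
    · intro k _ hk
      rw [pf_zero, if_neg hk]; ring
    · intro h0; exact absurd (Finset.mem_range.mpr (by omega)) h0
  | succ b ih =>
    intro a M h
    rw [← pS_exchange (by omega) (by omega), ih (a+1) M (by omega)]
    congr 1
    omega

lemma pT : ∀ n k, pf (n+1) (k+1)
    = ∑ m ∈ Finset.range (n+1), X ^ ((m - k)/2) * pf m k * pf (n - m) 0 := by
  intro n
  induction n with
  | zero =>
    intro k
    rw [pf_succ, pf_eq_zero 0 (k+2) (by omega)]
    simp [pf_zero]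
  | succ n ih =>
    intro k
    have hL : pf (n+2) (k+1) = pf (n+1) k + X ^ (k+1) * pf (n+1) (k+2) := by
      rw [pf_succ]; simp
    rw [hL, Finset.sum_range_succ'
      (fun m => X ^ ((m - k)/2) * pf m k * pf (n + 1 - m) 0) (n+1)]
    rcases k with _ | k'
    · -- k = 0
      have hz : X ^ ((0 - 0)/2) * pf 0 0 * pf (n + 1 - 0) 0 = pf (n+1) 0 := by
        simp [pf_zero]
      rw [hz]
      have hsum : ∑ m ∈ Finset.range (n+1),
            X ^ ((m + 1 - 0)/2) * pf (m+1) 0 * pf (n + 1 - (m+1)) 0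
          = X ^ 1 * pf (n+1) 2 := by
        rw [ih 1, Finset.mul_sum]
        refine Finset.sum_congr rfl fun m hm => ?_
        have hstep : pf (m+1) 0 = pf m 1 := by rw [pf_succ]; simp
        rw [hstep]
        have hnm : n + 1 - (m + 1) = n - m := by omega
        rw [hnm]
        by_cases h : m < 1 ∨ (m + 1) % 2 = 1
        · rw [pf_eq_zero m 1 h]; ring
        · have : (m + 1 - 0) / 2 = 1 + (m - 1)/2 := by omega
          rw [this, pow_add]; ring
      rw [hsum]; ring
    · -- k = k' + 1
      rw [pf_eq_zero 0 (k'+1) (by omega)]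
      have hsum : ∑ m ∈ Finset.range (n+1),
            X ^ ((m + 1 - (k'+1))/2) * pf (m+1) (k'+1) * pf (n + 1 - (m+1)) 0
          = (∑ m ∈ Finset.range (n+1), X ^ ((m - k')/2) * pf m k' * pf (n - m) 0)
            + X ^ (k'+2) * ∑ m ∈ Finset.range (n+1),
                X ^ ((m - (k'+2))/2) * pf m (k'+2) * pf (n - m) 0 := by
        rw [Finset.mul_sum, ← Finset.sum_add_distrib]
        refine Finset.sum_congr rfl fun m hm => ?_
        have hnm : n + 1 - (m + 1) = n - m := by omega
        have hss : m + 1 - (k' + 1) = m - k' := by omega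
        rw [hnm, hss, pf_succ]
        simp only [Nat.succ_ne_zero, if_false, Nat.add_sub_cancel]
        by_cases h : m < k' + 2 ∨ (m + (k'+2)) % 2 = 1
        · rw [pf_eq_zero m (k'+2) h]
          by_cases h2 : m < k' ∨ (m + k') % 2 = 1
          · rw [pf_eq_zero m k' h2]; ring
          · ring
        · have hexp : (m - k')/2 + (k'+1) = (k'+2) + (m - (k'+2))/2 := by omega
          have : (X : Polynomial ℤ) ^ ((m - k')/2) * X ^ (k'+1) = X ^ (k'+2) * X ^ ((m - (k'+2))/2) := by
            rw [← pow_add, ← pow_add, hexp]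
          calc X ^ ((m - k')/2) * (pf m k' + X ^ (k'+1) * pf m (k'+2)) * pf (n-m) 0
              = X ^ ((m - k')/2) * pf m k' * pf (n-m) 0
                + (X ^ ((m - k')/2) * X ^ (k'+1)) * (pf m (k'+2) * pf (n-m) 0) := by ring
            _ = _ := by rw [this]; ring
      rw [hsum, ih k', ih (k'+2)]
      ring

lemma sum_range_even (N : ℕ) (t : ℕ → Polynomial ℤ) (hodd : ∀ m, m % 2 = 1 → t m = 0) :
    ∑ m ∈ Finset.range (2*N+1), t m = ∑ a ∈ Finset.range (N+1), t (2*a) := by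
  induction N with
  | zero => simp
  | succ N ih =>
    have h1 : 2*(N+1)+1 = (2*N+1) + 1 + 1 := by ring
    rw [h1, Finset.sum_range_succ, Finset.sum_range_succ, ih,
      Finset.sum_range_succ (fun a => t (2*a)) (N+1), hodd (2*N+1) (by omega)]
    have h2 : 2*N+1+1 = 2*(N+1) := by ring
    rw [h2]; ring

lemma sum_range_odd (N : ℕ) (t : ℕ → Polynomial ℤ) (heven : ∀ m, m % 2 = 0 → t m = 0) :
    ∑ m ∈ Finset.range (2*N), t m = ∑ a ∈ Finset.range N, t (2*a+1) := by
  induction N with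
  | zero => simp
  | succ N ih =>
    have h1 : 2*(N+1) = (2*N) + 1 + 1 := by ring
    rw [h1, Finset.sum_range_succ, Finset.sum_range_succ, ih,
      Finset.sum_range_succ (fun a => t (2*a+1)) N, heven (2*N) (by omega)]
    have h2 : 2*N+1 = 2*N+1 := rfl
    ring

lemma pf_rec (n : ℕ) : pf (2*(n+1)) 0
    = ∑ a ∈ Finset.range (n+1), X ^ a * pf (2*a) 0 * pf (2*(n-a)) 0 := by
  have h0 : pf (2*(n+1)) 0 = pf (2*n+1) 1 := by
    have : 2*(n+1) = (2*n+1) + 1 := by ring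
    rw [this, pf_succ]; simp
  rw [h0, pT (2*n) 0,
    sum_range_even n (fun m => X ^ ((m - 0)/2) * pf m 0 * pf (2*n - m) 0)
      (fun m hm => by simp only [pf_eq_zero m 0 (by omega : m < 0 ∨ (m + 0) % 2 = 1), zero_mul, mul_zero])]
  refine Finset.sum_congr rfl fun a ha => ?_
  have h1 : (2*a - 0)/2 = a := by omega
  have h2 : 2*n - 2*a = 2*(n-a) := by omega
  rw [h1, h2]

lemma pf_qCatalan : ∀ n, pf (2*n) 0 = qCatalan n := by
  intro n
  induction n using Nat.strong_induction_on with
  | _ n ih =>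
    rcases n with _ | n
    · rw [qCatalan]; simp [pf_zero]
    · rw [pf_rec, qCatalan, Finset.sum_attach (Finset.range (n+1))
        (fun k => X ^ (k:ℕ) * qCatalan k * qCatalan (n - k))]
      refine Finset.sum_congr rfl fun a ha => ?_
      have ha' : a < n + 1 := Finset.mem_range.mp ha
      rw [ih a (by omega), ih (n-a) (by omega)]

section MatrixPart

open Matrix

/-- If `H = L * diag d * Lᵀ` with `det L = 1` and the divisibility holds, then `H` has SSNF. -/
lemma hasSSNF_of_LDL {n : ℕ} (H L : Matrix (Fin n) (Fin n) (Polynomial ℤ))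
    (d : Fin n → Polynomial ℤ) (hL : L.det = 1)
    (hH : H = L * Matrix.diagonal d * L.transpose)
    (hdvd : ∀ i j : Fin n, j ≤ i → d j ∣ d i) : HasSSNF H d := by
  refine ⟨⟨L.adjugate, L.transpose.adjugate, ?_, ?_, ?_⟩, hdvd⟩
  · rw [Matrix.det_adjugate, hL, one_pow]
  · rw [Matrix.det_adjugate, Matrix.det_transpose, hL, one_pow]
  · have h1 : L.adjugate * L = 1 := by
      rw [Matrix.adjugate_mul, hL, one_smul]
    have h2 : L.transpose * L.transpose.adjugate = 1 := by
      rw [Matrix.mul_adjugate, Matrix.det_transpose, hL, one_smul]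
    rw [hH]
    calc L.adjugate * (L * Matrix.diagonal d * L.transpose) * L.transpose.adjugate
        = (L.adjugate * L) * Matrix.diagonal d * (L.transpose * L.transpose.adjugate) := by
          simp only [Matrix.mul_assoc]
      _ = Matrix.diagonal d := by rw [h1, h2, Matrix.one_mul, Matrix.mul_one]

lemma entryA (n i j : ℕ) (hi : i ≤ n) (hj : j ≤ n) :
    ∑ m ∈ Finset.range (n+1), pf (2*i) (2*m) * X ^ ((2*m).choose 2) * pf (2*j) (2*m)
      = qCatalan (i + j) := by
  rw [← pf_qCatalan (i + j)]
  have hs : pf (2*(i+j)) 0 = pS (2*(i+j)+1) (2*i) (2*j) := by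
    rw [pS_split (2*j) (2*i) (2*(i+j)+1) (by omega)]
    congr 1; omega
  rw [hs]
  unfold pS
  rw [show 2*(i+j)+1 = 2*(i+j)+1 from rfl,
    sum_range_even (i+j) (fun k => pf (2*i) k * X ^ k.choose 2 * pf (2*j) k)
      (fun m hm => by
        simp only [pf_eq_zero (2*i) m (by omega : 2*i < m ∨ (2*i + m) % 2 = 1),
          zero_mul, mul_zero])]
  -- both sides reduce to the sum over `range (i+1)`
  have key : ∀ B : ℕ, i < B →
      ∑ a ∈ Finset.range B, pf (2*i) (2*a) * X ^ ((2*a).choose 2) * pf (2*j) (2*a)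
        = ∑ a ∈ Finset.range (i+1), pf (2*i) (2*a) * X ^ ((2*a).choose 2) * pf (2*j) (2*a) := by
    intro B hB
    refine (Finset.sum_subset (by intro x hx; simp only [Finset.mem_range] at *; omega) ?_).symm
    intro x _ hx
    simp only [Finset.mem_range] at hx
    rw [pf_eq_zero (2*i) (2*x) (by omega)]
    ring
  rw [key (i+j+1) (by omega), key (n+1) (by omega)]

lemma entryB (n i j : ℕ) (hi : i ≤ n) (hj : j ≤ n) :
    ∑ m ∈ Finset.range (n+1),
        pf (2*i+1) (2*m+1) * X ^ ((2*m+1).choose 2) * pf (2*j+1) (2*m+1)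
      = qCatalan (i + j + 1) := by
  rw [← pf_qCatalan (i + j + 1)]
  have hs : pf (2*(i+j+1)) 0 = pS (2*(i+j+2)) (2*i+1) (2*j+1) := by
    rw [pS_split (2*j+1) (2*i+1) (2*(i+j+2)) (by omega)]
    congr 1; omega
  rw [hs]
  unfold pS
  rw [sum_range_odd (i+j+2) (fun k => pf (2*i+1) k * X ^ k.choose 2 * pf (2*j+1) k)
      (fun m hm => by
        simp only [pf_eq_zero (2*i+1) m (by omega : 2*i+1 < m ∨ (2*i+1 + m) % 2 = 1),
          zero_mul, mul_zero])]
  have key : ∀ B : ℕ, i < B →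
      ∑ a ∈ Finset.range B, pf (2*i+1) (2*a+1) * X ^ ((2*a+1).choose 2) * pf (2*j+1) (2*a+1)
        = ∑ a ∈ Finset.range (i+1),
            pf (2*i+1) (2*a+1) * X ^ ((2*a+1).choose 2) * pf (2*j+1) (2*a+1) := by
    intro B hB
    refine (Finset.sum_subset (by intro x hx; simp only [Finset.mem_range] at *; omega) ?_).symm
    intro x _ hx
    simp only [Finset.mem_range] at hx
    rw [pf_eq_zero (2*i+1) (2*x+1) (by omega)]
    ring
  rw [key (i+j+2) (by omega), key (n+1) (by omega)]

end MatrixPart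

/-- Bessenrodt–Stanley. Over `ℤ[q]`:
(a) `(C_{i+j}(q))_{0≤i,j≤n}` has SSNF `diag(q^{C(0,2)}, q^{C(2,2)}, …, q^{C(2n,2)})`;
(b) `(C_{i+j+1}(q))_{0≤i,j≤n}` has SSNF `diag(q^{C(1,2)}, q^{C(3,2)}, …, q^{C(2n+1,2)})`. -/
theorem qCatalan_hankel_SSNF (n : ℕ) :
    HasSSNF (fun i j : Fin (n+1) => qCatalan ((i : ℕ) + (j : ℕ)))
      (fun i => Polynomial.X ^ ((2 * (i : ℕ)).choose 2)) ∧
    HasSSNF (fun i j : Fin (n+1) => qCatalan ((i : ℕ) + (j : ℕ) + 1))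
      (fun i => Polynomial.X ^ ((2 * (i : ℕ) + 1).choose 2)) := by
  constructor
  · set L : Matrix (Fin (n+1)) (Fin (n+1)) (Polynomial ℤ) :=
      fun i m => pf (2*(i:ℕ)) (2*(m:ℕ)) with hLdef
    have hdet : L.det = 1 := by
      rw [Matrix.det_of_lowerTriangular L (fun i j hij => ?_)]
      · exact Finset.prod_eq_one fun i _ => pf_diag (2*(i:ℕ))
      · have : (i:ℕ) < (j:ℕ) := hij
        exact pf_eq_zero _ _ (by omega)
    refine hasSSNF_of_LDL _ L _ hdet ?_ ?_
    · ext i j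
      rw [Matrix.mul_apply]
      have : ∀ m : Fin (n+1), (L * Matrix.diagonal fun i : Fin (n+1) =>
          (X:Polynomial ℤ) ^ ((2 * (i:ℕ)).choose 2)) i m * L.transpose m j
          = pf (2*(i:ℕ)) (2*(m:ℕ)) * X ^ ((2*(m:ℕ)).choose 2) * pf (2*(j:ℕ)) (2*(m:ℕ)) := by
        intro m
        rw [Matrix.mul_diagonal, Matrix.transpose_apply]
      rw [Finset.sum_congr rfl fun m _ => this m,
        Fin.sum_univ_eq_sum_range
          (fun m => pf (2*(i:ℕ)) (2*m) * X ^ ((2*m).choose 2) * pf (2*(j:ℕ)) (2*m)) (n+1),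
        entryA n i j (by omega) (by omega)]
    · intro i j hij
      exact pow_dvd_pow X (Nat.choose_le_choose 2 (by
        have : (j:ℕ) ≤ (i:ℕ) := hij
        omega))
  · set L : Matrix (Fin (n+1)) (Fin (n+1)) (Polynomial ℤ) :=
      fun i m => pf (2*(i:ℕ)+1) (2*(m:ℕ)+1) with hLdef
    have hdet : L.det = 1 := by
      rw [Matrix.det_of_lowerTriangular L (fun i j hij => ?_)]
      · exact Finset.prod_eq_one fun i _ => pf_diag (2*(i:ℕ)+1)
      · have : (i:ℕ) < (j:ℕ) := hij
        exact pf_eq_zero _ _ (by omega)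
    refine hasSSNF_of_LDL _ L _ hdet ?_ ?_
    · ext i j
      rw [Matrix.mul_apply]
      have : ∀ m : Fin (n+1), (L * Matrix.diagonal fun i : Fin (n+1) =>
          (X:Polynomial ℤ) ^ ((2 * (i:ℕ) + 1).choose 2)) i m * L.transpose m j
          = pf (2*(i:ℕ)+1) (2*(m:ℕ)+1) * X ^ ((2*(m:ℕ)+1).choose 2)
              * pf (2*(j:ℕ)+1) (2*(m:ℕ)+1) := by
        intro m
        rw [Matrix.mul_diagonal, Matrix.transpose_apply]
      rw [Finset.sum_congr rfl fun m _ => this m,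
        Fin.sum_univ_eq_sum_range
          (fun m => pf (2*(i:ℕ)+1) (2*m+1) * X ^ ((2*m+1).choose 2)
            * pf (2*(j:ℕ)+1) (2*m+1)) (n+1),
        entryB n i j (by omega) (by omega)]
    · intro i j hij
      exact pow_dvd_pow X (Nat.choose_le_choose 2 (by
        have : (j:ℕ) ≤ (i:ℕ) := hij
        omega))
end

section
/- Fix n ≥ 0. Define C*_m(q) ∈ ℤ[q] by C*_m(q) = C_{m/2}(q) if m is even and C*_m(q) = 0 if m is odd. Then the (n+1)×(n+1) Hankel matrix (C*_{i+j}(q))_{0≤i,j≤n} has SSNF diag(1, q^{binom(1,2)}, q^{binom(2,2)}, …, q^{binom(n,2)}) over ℤ[q], where binom(m,2) = m(m−1)/2. -/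
open Polynomial

/-- `C*_m(q)`: equal to `C_{m/2}(q)` for even `m` and to `0` for odd `m`. -/
noncomputable def qCatalanStar (m : ℕ) : Polynomial ℤ :=
  if m % 2 = 0 then qCatalan (m / 2) else 0

/-! ### Auxiliary path-counting polynomials

`fB i k` is the total weight of nonnegative lattice paths from `0` to `k` in `i` steps,
where a down step from height `h` has weight `q^(h-1)`.  `wB i k` is the analogous weight
for paths from `k` down to `0` (so `wB i k = q^(choose k 2) * fB i k`), and `pB i k` is the
weight of paths from `k` to `0` that stay positive until the final step. -/

noncomputable def fB : ℕ → ℕ → Polynomial ℤ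
  | 0, 0 => 1
  | 0, _+1 => 0
  | i+1, 0 => fB i 1
  | i+1, k+1 => fB i k + X^(k+1) * fB i (k+2)

noncomputable def wB : ℕ → ℕ → Polynomial ℤ
  | 0, 0 => 1
  | 0, _+1 => 0
  | i+1, 0 => wB i 1
  | i+1, k+1 => wB i (k+2) + X^k * wB i k

noncomputable def pB : ℕ → ℕ → Polynomial ℤ
  | 0, _ => 0
  | _+1, 0 => 0
  | i+1, 1 => pB i 2 + (if i = 0 then 1 else 0)
  | i+1, (k+2) => pB i (k+3) + X^(k+1) * pB i (k+1)

lemma fB_succ_zero (i : ℕ) : fB (i+1) 0 = fB i 1 := rfl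
lemma wB_succ_zero (i : ℕ) : wB (i+1) 0 = wB i 1 := rfl

lemma pB_zero (k : ℕ) : pB 0 k = 0 := by simp [pB]
lemma pB_one (i : ℕ) : pB (i+1) 1 = pB i 2 + (if i = 0 then 1 else 0) := by simp [pB]
lemma pB_two (i k : ℕ) : pB (i+1) (k+2) = pB i (k+3) + X^(k+1) * pB i (k+1) := by simp [pB]

lemma fB_eq_zero : ∀ i k, i < k → fB i k = 0 := by
  intro i
  induction i with
  | zero => intro k h; match k, h with | k+1, _ => rfl
  | succ i ih =>
    intro k h
    match k, h with
    | k+1, h =>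
      show fB i k + X^(k+1) * fB i (k+2) = 0
      rw [ih k (by omega), ih (k+2) (by omega)]
      ring

lemma fB_diag : ∀ i, fB i i = 1 := by
  intro i
  induction i with
  | zero => rfl
  | succ i ih =>
    show fB i i + X^(i+1) * fB i (i+2) = 1
    rw [ih, fB_eq_zero i (i+2) (by omega)]
    ring

lemma wB_odd : ∀ i k, (i + k) % 2 = 1 → wB i k = 0 := by
  intro i
  induction i with
  | zero =>
    intro k h
    match k, h with
    | k+1, _ => rfl
  | succ i ih =>
    intro k h
    match k with
    | 0 => show wB i 1 = 0; exact ih 1 (by omega)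
    | k+1 =>
      show wB i (k+2) + X^k * wB i k = 0
      rw [ih (k+2) (by omega), ih k (by omega)]
      ring

lemma wB_eq_fB : ∀ i k, wB i k = X^(k.choose 2) * fB i k := by
  intro i
  induction i with
  | zero =>
    intro k
    match k with
    | 0 => show (1:Polynomial ℤ) = X^0 * 1; ring
    | k+1 => show (0:Polynomial ℤ) = X^_ * 0; ring
  | succ i ih =>
    intro k
    match k with
    | 0 =>
      show wB i 1 = X^(Nat.choose 1 2) * fB i 1
      rw [ih 1]
    | k+1 =>
      show wB i (k+2) + X^k * wB i k = X^((k+1).choose 2) * (fB i k + X^(k+1) * fB i (k+2))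
      rw [ih (k+2), ih k]
      have h1 : (k+2).choose 2 = (k+1).choose 2 + (k+1) := by
        rw [Nat.choose_succ_succ (k+1), Nat.choose_one_right, Nat.add_comm]
      have h2 : k + k.choose 2 = (k+1).choose 2 := by
        rw [Nat.choose_succ_succ k, Nat.choose_one_right]
      rw [h1, ← h2]
      ring

lemma key_pair (i j : ℕ) :
    (∑ k ∈ Finset.range (i+j+2), fB (i+1) k * wB j k)
      = ∑ k ∈ Finset.range (i+j+2), fB i k * wB (j+1) k := by
  rw [Finset.sum_range_succ' (fun k => fB (i+1) k * wB j k) (i+j+1),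
      Finset.sum_range_succ' (fun k => fB i k * wB (j+1) k) (i+j+1)]
  have e1 : ∀ k : ℕ, fB (i+1) (k+1) * wB j (k+1)
      = fB i k * wB j (k+1) + X^(k+1) * fB i (k+2) * wB j (k+1) := by
    intro k
    show (fB i k + X^(k+1) * fB i (k+2)) * wB j (k+1) = _
    ring
  have e2 : ∀ k : ℕ, fB i (k+1) * wB (j+1) (k+1)
      = fB i (k+1) * wB j (k+2) + X^k * fB i (k+1) * wB j k := by
    intro k
    show fB i (k+1) * (wB j (k+2) + X^k * wB j k) = _
    ring
  simp only [e1, e2, Finset.sum_add_distrib]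
  have hS1 : (∑ k ∈ Finset.range (i+j+1), fB i k * wB j (k+1))
      = fB i 0 * wB j 1 + ∑ k ∈ Finset.range (i+j), fB i (k+1) * wB j (k+2) := by
    rw [Finset.sum_range_succ' (fun k => fB i k * wB j (k+1)) (i+j)]
    ring
  have hT1 : (∑ k ∈ Finset.range (i+j+1), fB i (k+1) * wB j (k+2))
      = ∑ k ∈ Finset.range (i+j), fB i (k+1) * wB j (k+2) := by
    rw [Finset.sum_range_succ, fB_eq_zero i (i+j+1) (by omega)]
    ring
  have hT2 : (∑ k ∈ Finset.range (i+j+1), X^k * fB i (k+1) * wB j k)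
      = X^(0:ℕ) * fB i 1 * wB j 0
        + ∑ k ∈ Finset.range (i+j), X^(k+1) * fB i (k+2) * wB j (k+1) := by
    rw [Finset.sum_range_succ' (fun k => X^k * fB i (k+1) * wB j k) (i+j)]
    ring
  have hS2 : (∑ k ∈ Finset.range (i+j+1), X^(k+1) * fB i (k+2) * wB j (k+1))
      = ∑ k ∈ Finset.range (i+j), X^(k+1) * fB i (k+2) * wB j (k+1) := by
    rw [Finset.sum_range_succ, fB_eq_zero i (i+j+2) (by omega)]
    ring
  rw [hS1, hT1, hT2, hS2, fB_succ_zero, wB_succ_zero]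
  ring

lemma pair : ∀ i j, (∑ k ∈ Finset.range (i+j+1), fB i k * wB j k) = wB (i+j) 0 := by
  intro i
  induction i with
  | zero =>
    intro j
    rw [Finset.sum_eq_single 0]
    · show fB 0 0 * wB j 0 = wB (0+j) 0
      rw [Nat.zero_add]
      show (1 : Polynomial ℤ) * wB j 0 = wB j 0
      ring
    · intro b _ hb
      match b, hb with
      | c+1, _ =>
        show fB 0 (c+1) * wB j (c+1) = 0
        show (0 : Polynomial ℤ) * wB j (c+1) = 0
        ring
    · intro h
      exact absurd (Finset.mem_range.mpr (by omega)) h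
  | succ i ih =>
    intro j
    rw [show i+1+j+1 = i+j+2 from by omega, key_pair i j,
        show i+j+2 = i+(j+1)+1 from by omega, ih (j+1),
        show i+(j+1) = i+1+j from by omega]

lemma pB_val : ∀ i k, pB (i+1) (k+1) = X^((i+k)/2) * wB i k := by
  intro i
  induction i with
  | zero =>
    intro k
    match k with
    | 0 => simp [pB, wB]
    | 1 => simp [pB, wB]
    | k+2 => simp [pB, wB]
  | succ i ih =>
    intro k
    match k with
    | 0 =>
      rw [show (0:ℕ)+1 = 1 from rfl, pB_one, if_neg (by omega), ih 1]
      show X^((i+1)/2) * wB i 1 + 0 = X^((i+1+0)/2) * wB i 1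
      rw [show i+1+0 = i+1 from rfl]
      ring
    | k+1 =>
      rw [pB_two, ih (k+2), ih k,
        show i+1+(k+1) = (i+k+2) from by omega,
        show wB (i+1) (k+1) = wB i (k+2) + X^k * wB i k from rfl,
        show i+(k+2) = i+k+2 from rfl]
      rcases Nat.even_or_odd (i+k) with ⟨m, hm⟩ | ⟨m, hm⟩
      · have h1 : (i+k+2)/2 = m + 1 := by omega
        have h2 : (i+k)/2 = m := by omega
        rw [h1, h2]
        ring
      · rw [wB_odd i k (by omega), wB_odd i (k+2) (by omega)]
        ring

/-- First-passage decomposition. -/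
lemma wConv : ∀ m k, wB m (k+1) = ∑ i ∈ Finset.range (m+1), pB i (k+1) * wB (m-i) 0 := by
  intro m
  induction m with
  | zero =>
    intro k
    rw [Finset.sum_range_one, pB_zero]
    show (0:Polynomial ℤ) = 0 * wB 0 0
    ring
  | succ m ih =>
    intro k
    have peel : ∀ k' : ℕ, (∑ i ∈ Finset.range (m+2), pB i (k'+1) * wB (m+1-i) 0)
        = ∑ i ∈ Finset.range (m+1), pB (i+1) (k'+1) * wB (m-i) 0 := by
      intro k'
      rw [Finset.sum_range_succ' (fun i => pB i (k'+1) * wB (m+1-i) 0) (m+1), pB_zero]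
      simp only [Nat.succ_sub_succ]
      ring
    match k with
    | 0 =>
      rw [peel 0]
      show wB m 2 + X^(0:ℕ) * wB m 0 = _
      have : ∀ i ∈ Finset.range (m+1), pB (i+1) 1 * wB (m-i) 0
          = pB i 2 * wB (m-i) 0 + (if i = 0 then 1 else 0) * wB (m-i) 0 := by
        intro i _
        rw [pB_one]
        ring
      rw [Finset.sum_congr rfl this, Finset.sum_add_distrib]
      have h2 : (∑ i ∈ Finset.range (m+1), (if i = 0 then (1:Polynomial ℤ) else 0) * wB (m-i) 0)
          = wB m 0 := by
        rw [Finset.sum_eq_single 0]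
        · simp
        · intro b _ hb
          rw [if_neg hb]
          ring
        · intro h
          exact absurd (Finset.mem_range.mpr (by omega)) h
      rw [h2, ih 1]
      ring
    | k+1 =>
      rw [peel (k+1)]
      show wB m (k+3) + X^(k+1) * wB m (k+1) = _
      have : ∀ i ∈ Finset.range (m+1), pB (i+1) (k+2) * wB (m-i) 0
          = pB i (k+3) * wB (m-i) 0 + X^(k+1) * (pB i (k+1) * wB (m-i) 0) := by
        intro i _
        rw [pB_two]
        ring
      rw [Finset.sum_congr rfl this, Finset.sum_add_distrib, ← Finset.mul_sum,
        ← ih (k+2), ← ih k]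

lemma sum_odd_terms (a : ℕ → Polynomial ℤ) (h : ∀ j, a (2*j) = 0) :
    ∀ n, ∑ i ∈ Finset.range (2*n+2), a i = ∑ j ∈ Finset.range (n+1), a (2*j+1) := by
  intro n
  induction n with
  | zero =>
    rw [show 2*0+2 = 2 from rfl]
    rw [Finset.sum_range_succ, Finset.sum_range_one, Finset.sum_range_one, h 0]
    ring
  | succ n ih =>
    rw [show 2*(n+1)+2 = (2*n+2)+1+1 from by omega, Finset.sum_range_succ, Finset.sum_range_succ,
      ih, Finset.sum_range_succ (fun j => a (2*j+1)) (n+1),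
      show (2*n+2)+1 = 2*(n+1)+1 from by omega,
      show (2*n+2) = 2*(n+1) from by omega, h (n+1)]
    ring

lemma qCatalan_wB : ∀ n, qCatalan n = wB (2*n) 0 := by
  intro n
  induction n using Nat.strong_induction_on with
  | _ n ih =>
    match n with
    | 0 => rw [qCatalan]; rfl
    | n+1 =>
      rw [qCatalan]
      rw [Finset.sum_attach (Finset.range (n+1)) (fun k => X ^ k * qCatalan k * qCatalan (n - k))]
      have step1 : ∀ k ∈ Finset.range (n+1),
          X ^ k * qCatalan k * qCatalan (n - k) = X ^ k * wB (2*k) 0 * wB (2*(n-k)) 0 := by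
        intro k hk
        have hk' := Finset.mem_range.mp hk
        rw [ih k (by omega), ih (n-k) (by omega)]
      rw [Finset.sum_congr rfl step1]
      have hw : wB (2*(n+1)) 0 = wB (2*n+1) 1 := by
        rw [show 2*(n+1) = (2*n+1)+1 from by omega]
        rfl
      rw [hw, wConv (2*n+1) 0]
      rw [show 2*n+1+1 = 2*n+2 from rfl]
      rw [sum_odd_terms (fun i => pB i 1 * wB (2*n+1-i) 0) ?_ n]
      · apply Finset.sum_congr rfl
        intro j hj
        have hj' := Finset.mem_range.mp hj
        show X ^ j * wB (2*j) 0 * wB (2*(n-j)) 0 = pB (2*j+1) 1 * wB (2*n+1-(2*j+1)) 0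
        rw [show (2*j+1) = (2*j)+1 from rfl, pB_val (2*j) 0,
          show 2*n+1-(2*j+1) = 2*(n-j) from by omega,
          show (2*j+0)/2 = j from by omega]
      · intro j
        show pB (2*j) 1 * wB (2*n+1-2*j) 0 = 0
        match j with
        | 0 => rw [pB_zero]; ring
        | j+1 =>
          rw [show 2*(j+1) = (2*j+1)+1 from by omega, pB_val (2*j+1) 0,
            wB_odd (2*j+1) 0 (by omega)]
          ring

lemma qCatalanStar_wB : ∀ m, qCatalanStar m = wB m 0 := by
  intro m
  by_cases h : m % 2 = 0
  · rw [qCatalanStar, if_pos h, qCatalan_wB, show 2 * (m/2) = m from by omega]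
  · rw [qCatalanStar, if_neg h, wB_odd m 0 (by omega)]

lemma entry (i j N : ℕ) (hN : i < N) :
    wB (i+j) 0 = ∑ k ∈ Finset.range N, fB i k * X^(k.choose 2) * fB j k := by
  have trunc : ∀ M, i < M →
      (∑ k ∈ Finset.range M, fB i k * X^(k.choose 2) * fB j k)
        = ∑ k ∈ Finset.range (i+1), fB i k * X^(k.choose 2) * fB j k := by
    intro M hM
    rw [← Finset.sum_subset (Finset.range_subset_range.mpr (show i+1 ≤ M from hM))]
    intro x _ hx
    rw [fB_eq_zero i x (by simpa using Finset.mem_range.not.mp hx)]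
    ring
  rw [← pair i j, trunc N hN, ← trunc (i+j+1) (by omega)]
  apply Finset.sum_congr rfl
  intro k _
  rw [wB_eq_fB j k]
  ring

/-- The Hankel matrix `(C*_{i+j}(q))_{0≤i,j≤n}` has SSNF
`diag(1, q^{C(1,2)}, q^{C(2,2)}, …, q^{C(n,2)})` over `ℤ[q]`. -/
theorem qCatalanStar_hankel_SSNF (n : ℕ) :
    HasSSNF (fun i j : Fin (n+1) => qCatalanStar ((i : ℕ) + (j : ℕ)))
      (fun i => Polynomial.X ^ ((i : ℕ).choose 2)) := by
  constructor
  · set A : Matrix (Fin (n+1)) (Fin (n+1)) (Polynomial ℤ) :=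
      fun i j => qCatalanStar ((i : ℕ) + (j : ℕ)) with hA
    set L : Matrix (Fin (n+1)) (Fin (n+1)) (Polynomial ℤ) :=
      Matrix.of fun i k => fB (i : ℕ) (k : ℕ) with hL
    set d : Fin (n+1) → Polynomial ℤ := fun i => Polynomial.X ^ ((i : ℕ).choose 2) with hd
    have hdet : L.det = 1 := by
      rw [Matrix.det_of_lowerTriangular L]
      · rw [Finset.prod_eq_one]
        intro i _
        exact fB_diag (i : ℕ)
      · intro i k h
        exact fB_eq_zero _ _ (by exact h)
    have hfact : A = L * Matrix.diagonal d * L.transpose := by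
      refine Matrix.ext fun i j => ?_
      rw [Matrix.mul_apply]
      have : ∀ k, (L * Matrix.diagonal d) i k * L.transpose k j
          = fB (i:ℕ) (k:ℕ) * X^((k:ℕ).choose 2) * fB (j:ℕ) (k:ℕ) := by
        intro k
        rw [Matrix.mul_diagonal, Matrix.transpose_apply]
        rfl
      rw [Fintype.sum_congr _ _ this]
      show qCatalanStar ((i:ℕ) + (j:ℕ)) = _
      rw [qCatalanStar_wB, entry (i:ℕ) (j:ℕ) (n+1) (by omega)]
      rw [← Fin.sum_univ_eq_sum_range (fun k => fB (i:ℕ) k * X^(k.choose 2) * fB (j:ℕ) k) (n+1)]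
    have hunit : IsUnit L.det := by rw [hdet]; exact isUnit_one
    have hunitT : IsUnit L.transpose.det := by
      rw [Matrix.det_transpose, hdet]; exact isUnit_one
    refine ⟨L⁻¹, L.transpose⁻¹, ?_, ?_, ?_⟩
    · rw [Matrix.det_nonsing_inv, hdet, Ring.inverse_one]
    · rw [Matrix.det_nonsing_inv, Matrix.det_transpose, hdet, Ring.inverse_one]
    · rw [hfact]
      rw [show L⁻¹ * (L * Matrix.diagonal d * L.transpose) * L.transpose⁻¹
          = (L⁻¹ * L) * Matrix.diagonal d * (L.transpose * L.transpose⁻¹) from by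
        noncomm_ring [Matrix.mul_assoc]]
      rw [Matrix.nonsing_inv_mul L hunit, Matrix.mul_nonsing_inv L.transpose hunitT,
        Matrix.one_mul, Matrix.mul_one]
  · intro i j hij
    exact pow_dvd_pow X (Nat.choose_le_choose 2 hij)
end

section
/- Fix n ≥ 0. Define the q-Motzkin numbers Motz_m(q) = Σ_{k=0}^{⌊m/2⌋} binom(m,2k) C_k(q) ∈ ℤ[q], where binom(m,2k) is the ordinary binomial coefficient. Then the (n+1)×(n+1) Hankel matrix (Motz_{i+j}(q))_{0≤i,j≤n} has SSNF diag(1, q^{binom(1,2)}, q^{binom(2,2)}, …, q^{binom(n,2)}) over ℤ[q], where binom(m,2) = m(m−1)/2. -/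
open Polynomial

/-- The `q`-Motzkin numbers: `Motz_m(q) = ∑_{k=0}^{⌊m/2⌋} binom(m, 2k) C_k(q)`. -/
noncomputable def qMotzkin (m : ℕ) : Polynomial ℤ :=
  ∑ k ∈ Finset.range (m / 2 + 1), (m.choose (2 * k) : Polynomial ℤ) * qCatalan k

lemma qCatalan_succ (n : ℕ) : qCatalan (n+1)
    = ∑ k ∈ Finset.range (n+1), X ^ k * qCatalan k * qCatalan (n - k) := by
  rw [qCatalan]
  exact Finset.sum_attach (Finset.range (n+1)) (fun k => X ^ k * qCatalan k * qCatalan (n - k))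

noncomputable def dd : ℕ → ℕ → Polynomial ℤ
  | 0, k => qCatalan k
  | (h+1), k => ∑ j ∈ Finset.range (k+1), X ^ ((h+1)*j) * qCatalan j * dd h (k - j)

lemma dd_def0 (k : ℕ) : dd 0 k = qCatalan k := by rw [dd]

lemma dd_zero_right : ∀ h, dd h 0 = 1
  | 0 => by simp [dd, qCatalan]
  | (h+1) => by simp [dd, qCatalan, dd_zero_right h]

lemma dd_one (k : ℕ) : dd 1 k = qCatalan (k+1) := by
  rw [qCatalan_succ, dd]
  simp [dd]

lemma sum_tri (f : ℕ → ℕ → Polynomial ℤ) : ∀ k : ℕ,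
    ∑ j ∈ Finset.range (k+1), ∑ i ∈ Finset.range (j+1), f i (j-i)
      = ∑ i ∈ Finset.range (k+1), ∑ l ∈ Finset.range (k+1-i), f i l := by
  intro k
  induction k with
  | zero => simp
  | succ k ih =>
    rw [Finset.sum_range_succ, ih]
    have h1 : ∀ i ∈ Finset.range (k+2), ∑ l ∈ Finset.range (k+1+1-i), f i l
        = (∑ l ∈ Finset.range (k+1-i), f i l) + f i (k+1-i) := by
      intro i hi
      have hi' : i ≤ k+1 := Nat.lt_succ_iff.mp (Finset.mem_range.mp hi)
      have h2 : k+1+1-i = (k+1-i)+1 := by omega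
      rw [h2, Finset.sum_range_succ]
    rw [Finset.sum_congr rfl h1, Finset.sum_add_distrib]
    congr 1
    conv_rhs => rw [Finset.sum_range_succ]
    simp

lemma dd_rec (h k : ℕ) :
    dd (h+1) (k+1) = dd h (k+1) + X^(h+1) * dd (h+2) k := by
  have key : ∑ j ∈ Finset.range (k+1), X ^ ((h+1)*(j+1)) * qCatalan (j+1) * dd h (k - j)
      = X^(h+1) * dd (h+2) k := by
    have step1 : ∀ j ∈ Finset.range (k+1),
        X ^ ((h+1)*(j+1)) * qCatalan (j+1) * dd h (k - j)
        = ∑ i ∈ Finset.range (j+1),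
            X ^ ((h+1) + (h+2)*i + (h+1)*(j-i)) *
              (qCatalan i * (qCatalan (j-i) * dd h (k - i - (j-i)))) := by
      intro j hj
      rw [qCatalan_succ, Finset.mul_sum, Finset.sum_mul]
      refine Finset.sum_congr rfl ?_
      intro i hi
      have hij : i ≤ j := Nat.lt_succ_iff.mp (Finset.mem_range.mp hi)
      obtain ⟨l, rfl⟩ : ∃ l, j = i + l := ⟨j - i, by omega⟩
      have h3 : i + l - i = l := by omega
      have h4 : k - i - l = k - (i + l) := by omega
      rw [h3, h4]
      have h5 : (h+1) + (h+2)*i + (h+1)*l = (h+1)*(i+l+1) + i := by ring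
      rw [h5, pow_add]
      ring
    rw [Finset.sum_congr rfl step1,
      sum_tri (fun i l => X ^ ((h+1) + (h+2)*i + (h+1)*l) *
        (qCatalan i * (qCatalan l * dd h (k - i - l))))]
    have expand : dd (h+2) k = ∑ i ∈ Finset.range (k+1), X ^ ((h+2)*i) * qCatalan i * dd (h+1) (k - i) := by
      rw [dd]
    rw [expand, Finset.mul_sum]
    refine Finset.sum_congr rfl ?_
    intro i hi
    have hik : i ≤ k := Nat.lt_succ_iff.mp (Finset.mem_range.mp hi)
    have h6 : k+1-i = (k-i)+1 := by omega
    have expand2 : dd (h+1) (k-i) = ∑ l ∈ Finset.range ((k-i)+1), X ^ ((h+1)*l) * qCatalan l * dd h (k - i - l) := by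
      rw [dd]
    rw [h6, expand2, Finset.mul_sum, Finset.mul_sum]
    refine Finset.sum_congr rfl ?_
    intro l hl
    rw [pow_add, pow_add]
    ring
  have expand0 : dd (h+1) (k+1)
      = ∑ j ∈ Finset.range (k+2), X ^ ((h+1)*j) * qCatalan j * dd h (k+1-j) := by
    rw [dd]
  rw [expand0, Finset.sum_range_succ']
  simp only [Nat.mul_zero, pow_zero, Nat.sub_zero]
  have : ∀ j ∈ Finset.range (k+1), X ^ ((h+1)*(j+1)) * qCatalan (j+1) * dd h (k+1-(j+1))
      = X ^ ((h+1)*(j+1)) * qCatalan (j+1) * dd h (k-j) := by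
    intro j hj
    congr 2
    omega
  rw [Finset.sum_congr rfl this, key]
  simp [qCatalan]
  ring

noncomputable def mu (h n : ℕ) : Polynomial ℤ :=
  ∑ k ∈ Finset.range (n+1), (n.choose (2*k+h) : Polynomial ℤ) * dd h k

lemma mu_eq_zero {h n : ℕ} (hn : n < h) : mu h n = 0 := by
  unfold mu
  refine Finset.sum_eq_zero fun k _ => ?_
  rw [Nat.choose_eq_zero_of_lt (by omega)]
  simp

lemma mu_self (h : ℕ) : mu h h = 1 := by
  unfold mu
  rw [Finset.sum_eq_single 0]
  · simp [dd_zero_right]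
  · intro k _ hk
    rw [Nat.choose_eq_zero_of_lt (by omega)]
    simp
  · simp

lemma mu_extend (h n m : ℕ) (hm : n + 1 ≤ m) :
    mu h n = ∑ k ∈ Finset.range m, (n.choose (2*k+h) : Polynomial ℤ) * dd h k := by
  unfold mu
  refine Finset.sum_subset (by intro x hx; simp at *; omega) ?_
  intro k _ hk
  simp only [Finset.mem_range, not_lt] at hk
  rw [Nat.choose_eq_zero_of_lt (by omega)]
  simp

lemma mu_rec_zero (n : ℕ) : mu 0 (n+1) = mu 0 n + mu 1 n := by
  have e1 : mu 0 (n+1) = ∑ k ∈ Finset.range (n+2), ((n+1).choose (2*k) : Polynomial ℤ) * dd 0 k := by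
    unfold mu; rfl
  rw [e1, Finset.sum_range_succ']
  simp only [Nat.mul_zero, Nat.choose_zero_right, Nat.cast_one, one_mul]
  have e2 : ∀ k ∈ Finset.range (n+1),
      ((n+1).choose (2*(k+1)) : Polynomial ℤ) * dd 0 (k+1)
        = (n.choose (2*k+1) : Polynomial ℤ) * dd 1 k + (n.choose (2*(k+1)) : Polynomial ℤ) * dd 0 (k+1) := by
    intro k _
    rw [show 2*(k+1) = (2*k+1)+1 by ring, Nat.choose_succ_succ]
    push_cast
    rw [dd_one, ← dd_def0 (k+1)]
    ring
  rw [Finset.sum_congr rfl e2, Finset.sum_add_distrib]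
  have e3 : mu 1 n = ∑ k ∈ Finset.range (n+1), (n.choose (2*k+1) : Polynomial ℤ) * dd 1 k := rfl
  have e4 : mu 0 n = (∑ k ∈ Finset.range (n+1), (n.choose (2*(k+1)) : Polynomial ℤ) * dd 0 (k+1)) + 1 := by
    rw [mu_extend 0 n (n+2) (by omega), Finset.sum_range_succ']
    simp [dd_zero_right]
  rw [e3, e4, dd_zero_right]
  ring

lemma mu_rec_succ (h n : ℕ) :
    mu (h+1) (n+1) = mu h n + mu (h+1) n + X^(h+1) * mu (h+2) n := by
  have e1 : mu (h+1) (n+1)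
      = ∑ k ∈ Finset.range (n+2), ((n+1).choose (2*k+(h+1)) : Polynomial ℤ) * dd (h+1) k := rfl
  rw [e1]
  have e2 : ∀ k ∈ Finset.range (n+2),
      ((n+1).choose (2*k+(h+1)) : Polynomial ℤ) * dd (h+1) k
        = (n.choose (2*k+h) : Polynomial ℤ) * dd (h+1) k
          + (n.choose (2*k+(h+1)) : Polynomial ℤ) * dd (h+1) k := by
    intro k _
    rw [show 2*k+(h+1) = (2*k+h)+1 by ring, Nat.choose_succ_succ]
    push_cast; ring
  rw [Finset.sum_congr rfl e2, Finset.sum_add_distrib]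
  -- second piece is mu (h+1) n extended
  rw [← mu_extend (h+1) n (n+2) (by omega)]
  -- first piece: split dd (h+1) k via dd_rec
  have e3 : ∑ k ∈ Finset.range (n+2), (n.choose (2*k+h) : Polynomial ℤ) * dd (h+1) k
      = mu h n + X^(h+1) * mu (h+2) n := by
    rw [Finset.sum_range_succ']
    have e4 : ∀ k ∈ Finset.range (n+1),
        (n.choose (2*(k+1)+h) : Polynomial ℤ) * dd (h+1) (k+1)
          = (n.choose (2*(k+1)+h) : Polynomial ℤ) * dd h (k+1)
            + X^(h+1) * ((n.choose (2*k+(h+2)) : Polynomial ℤ) * dd (h+2) k) := by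
      intro k _
      rw [dd_rec]
      rw [show 2*(k+1)+h = 2*k+(h+2) by ring]
      ring
    rw [Finset.sum_congr rfl e4, Finset.sum_add_distrib, ← Finset.mul_sum]
    have e5 : mu (h+2) n = ∑ k ∈ Finset.range (n+1), (n.choose (2*k+(h+2)) : Polynomial ℤ) * dd (h+2) k := rfl
    have e6 : mu h n = (∑ k ∈ Finset.range (n+1), (n.choose (2*(k+1)+h) : Polynomial ℤ) * dd h (k+1))
        + (n.choose h : Polynomial ℤ) * dd (h+1) 0 := by
      have : mu h n = ∑ k ∈ Finset.range (n+2), (n.choose (2*k+h) : Polynomial ℤ) * dd h k :=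
        mu_extend h n (n+2) (by omega)
      rw [this, Finset.sum_range_succ']
      simp [dd_zero_right]
    rw [e5, e6]
    simp only [Nat.mul_zero, Nat.zero_add]
    ring
  rw [e3]
  ring

lemma qMotzkin_eq_mu (n : ℕ) : qMotzkin n = mu 0 n := by
  unfold qMotzkin mu
  rw [Finset.sum_subset (Finset.range_subset_range.mpr (by omega : n/2+1 ≤ n+1))]
  · refine Finset.sum_congr rfl fun k _ => ?_
    rw [dd_def0, Nat.add_zero]
  · intro k _ hk
    simp only [Finset.mem_range, not_lt] at hk
    rw [Nat.choose_eq_zero_of_lt (by omega)]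
    simp

noncomputable def aa : ℕ → ℕ → Polynomial ℤ
  | 0, k => if k = 0 then 1 else 0
  | 1, k => if k = 1 then 1 else if k = 0 then -1 else 0
  | (m+2), k => (if k = 0 then 0 else aa (m+1) (k-1)) - aa (m+1) k - X^m * aa m k

lemma aa_eq_zero : ∀ m k, m < k → aa m k = 0
  | 0, k, h => by rw [aa, if_neg (by omega)]
  | 1, k, h => by rw [aa, if_neg (by omega), if_neg (by omega)]
  | (m+2), k, h => by
    rw [aa, aa_eq_zero (m+1) k (by omega), aa_eq_zero m k (by omega)]
    have : ¬ (k = 0) := by omega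
    rw [if_neg this, aa_eq_zero (m+1) (k-1) (by omega)]
    simp

lemma aa_diag : ∀ m, aa m m = 1
  | 0 => by simp [aa]
  | 1 => by simp [aa]
  | (m+2) => by
    rw [aa, if_neg (by omega), show m+2-1 = m+1 by omega, aa_diag (m+1),
      aa_eq_zero (m+1) (m+2) (by omega), aa_eq_zero m (m+2) (by omega)]
    simp

noncomputable def nu (m k : ℕ) : Polynomial ℤ :=
  ∑ j ∈ Finset.range (m+1), aa m j * mu 0 (j + k)

lemma nu_extend (m k p : ℕ) (hp : m + 1 ≤ p) :
    nu m k = ∑ j ∈ Finset.range p, aa m j * mu 0 (j + k) := by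
  unfold nu
  refine Finset.sum_subset (Finset.range_subset_range.mpr hp) ?_
  intro j _ hj
  simp only [Finset.mem_range, not_lt] at hj
  rw [aa_eq_zero m j (by omega)]
  simp

lemma nu_eq : ∀ m k, nu m k = X^(m.choose 2) * mu m k
  | 0, k => by simp [nu, aa]
  | 1, k => by
    have : nu 1 k = aa 1 0 * mu 0 (0 + k) + aa 1 1 * mu 0 (1 + k) := by
      unfold nu
      rw [show (1:ℕ)+1 = 2 from rfl, Finset.sum_range_succ, Finset.sum_range_one]
    have h0 : aa 1 0 = -1 := by rw [aa, if_neg (by omega), if_pos rfl]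
    have h1 : aa 1 1 = 1 := by rw [aa, if_pos rfl]
    rw [this, h0, h1, Nat.zero_add, show (1:ℕ) + k = k + 1 by omega, mu_rec_zero]
    norm_num [Nat.choose]
  | (m+2), k => by
    have e1 : nu (m+2) k = ∑ j ∈ Finset.range (m+3),
        ((if j = 0 then 0 else aa (m+1) (j-1)) - aa (m+1) j - X^m * aa m j) * mu 0 (j + k) := by
      unfold nu
      refine Finset.sum_congr rfl fun j _ => ?_
      rw [aa]
    have e2 : nu (m+2) k = (∑ j ∈ Finset.range (m+3), (if j = 0 then 0 else aa (m+1) (j-1)) * mu 0 (j + k))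
        - nu (m+1) k - X^m * nu m k := by
      rw [e1]
      simp only [sub_mul, mul_assoc]
      rw [Finset.sum_sub_distrib, Finset.sum_sub_distrib, ← Finset.mul_sum]
      rw [← nu_extend (m+1) k (m+3) (by omega), ← nu_extend m k (m+3) (by omega)]
    have e3 : (∑ j ∈ Finset.range (m+3), (if j = 0 then 0 else aa (m+1) (j-1)) * mu 0 (j + k))
        = nu (m+1) (k+1) := by
      rw [Finset.sum_range_succ', nu_extend (m+1) (k+1) (m+2) (by omega)]
      rw [if_pos rfl, zero_mul, add_zero]
      refine Finset.sum_congr rfl fun j _ => ?_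
      rw [if_neg (Nat.succ_ne_zero j), Nat.add_sub_cancel, show j+1+k = j+(k+1) by omega]
    rw [e2, e3, nu_eq (m+1) (k+1), nu_eq (m+1) k, nu_eq m k, mu_rec_succ m k]
    rw [show (m+2).choose 2 = ((m+1).choose 2) + (m+1) by
      rw [Nat.choose_succ_succ (m+1) 1]; simp [Nat.choose_one_right]; omega]
    rw [show (m+1).choose 2 = (m.choose 2) + m by
      rw [Nat.choose_succ_succ m 1]; simp [Nat.choose_one_right]; omega]
    rw [pow_add, pow_add, pow_add]
    ring

/-- The Hankel matrix `(Motz_{i+j}(q))_{0≤i,j≤n}` has SSNF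
`diag(1, q^{C(1,2)}, q^{C(2,2)}, …, q^{C(n,2)})` over `ℤ[q]`. -/
theorem qMotzkin_hankel_SSNF (n : ℕ) :
    HasSSNF (fun i j : Fin (n+1) => qMotzkin ((i : ℕ) + (j : ℕ)))
      (fun i => Polynomial.X ^ ((i : ℕ).choose 2)) := by
  set N := n + 1 with hN
  set A : Matrix (Fin N) (Fin N) (Polynomial ℤ) :=
    fun i j : Fin N => qMotzkin ((i : ℕ) + (j : ℕ)) with hA
  set P : Matrix (Fin N) (Fin N) (Polynomial ℤ) := fun i k => aa (i : ℕ) (k : ℕ) with hP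
  set Q : Matrix (Fin N) (Fin N) (Polynomial ℤ) := fun l j => aa (j : ℕ) (l : ℕ) with hQ
  have detP : P.det = 1 := by
    rw [Matrix.det_of_lowerTriangular P (fun i j hij => aa_eq_zero _ _ hij)]
    simp [hP, aa_diag]
  have detQ : Q.det = 1 := by
    rw [Matrix.det_of_upperTriangular (M := Q) (fun i j hij => aa_eq_zero _ _ hij)]
    simp [hQ, aa_diag]
  have inner : ∀ (i l : Fin N), (P * A) i l = nu (i : ℕ) (l : ℕ) := by
    intro i l
    rw [Matrix.mul_apply]
    have e : ∀ k : Fin N, P i k * A k l = (fun k : ℕ => aa (i:ℕ) k * mu 0 (k + (l:ℕ))) (k : ℕ) := by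
      intro k
      simp only [hP, hA, qMotzkin_eq_mu]
    rw [Finset.sum_congr rfl (fun k _ => e k)]
    exact (Fin.sum_univ_eq_sum_range (fun k => aa (i:ℕ) k * mu 0 (k + (l:ℕ))) N).trans
      (nu_extend _ _ N i.isLt).symm
  have inner2 : ∀ (k j : Fin N), (A * Q) k j = nu (j : ℕ) (k : ℕ) := by
    intro k j
    rw [Matrix.mul_apply]
    have e : ∀ l : Fin N, A k l * Q l j = (fun l : ℕ => aa (j:ℕ) l * mu 0 (l + (k:ℕ))) (l : ℕ) := by
      intro l
      simp only [hA, hQ, qMotzkin_eq_mu, Nat.add_comm (k:ℕ) (l:ℕ)]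
      ring
    rw [Finset.sum_congr rfl (fun l _ => e l)]
    exact (Fin.sum_univ_eq_sum_range (fun l => aa (j:ℕ) l * mu 0 (l + (k:ℕ))) N).trans
      (nu_extend _ _ N j.isLt).symm
  constructor
  · refine ⟨P, Q, detP, detQ, ?_⟩
    refine Matrix.ext fun i j => ?_
    by_cases hij : i = j
    · subst hij
      rw [Matrix.mul_apply, Matrix.diagonal_apply_eq]
      rw [Finset.sum_eq_single i]
      · rw [inner i i, nu_eq, mu_self]
        have : Q i i = 1 := aa_diag (i : ℕ)
        rw [this]
        ring
      · intro l _ hl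
        have hne : (l:ℕ) ≠ (i:ℕ) := fun h => hl (Fin.ext h)
        rw [inner i l, nu_eq]
        rcases Nat.lt_or_ge (l:ℕ) (i:ℕ) with h | h
        · rw [mu_eq_zero h]
          simp
        · have : Q l i = 0 := aa_eq_zero _ _ (by omega)
          rw [this]
          ring
      · simp
    · rw [Matrix.diagonal_apply_ne _ hij]
      have hne : (i:ℕ) ≠ (j:ℕ) := fun h => hij (Fin.ext h)
      rcases Nat.lt_or_ge (j:ℕ) (i:ℕ) with h | h
      · rw [Matrix.mul_apply]
        refine Finset.sum_eq_zero fun l _ => ?_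
        rw [inner i l, nu_eq]
        rcases Nat.lt_or_ge (l:ℕ) (i:ℕ) with h2 | h2
        · rw [mu_eq_zero h2]
          simp
        · have : Q l j = 0 := aa_eq_zero _ _ (by omega)
          rw [this]
          ring
      · rw [Matrix.mul_assoc, Matrix.mul_apply]
        refine Finset.sum_eq_zero fun k _ => ?_
        rw [inner2 k j, nu_eq]
        rcases Nat.lt_or_ge (k:ℕ) (j:ℕ) with h2 | h2
        · rw [mu_eq_zero h2]
          simp
        · have : P i k = 0 := aa_eq_zero _ _ (by omega)
          rw [this]
          ring
  · intro i j hij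
    exact pow_dvd_pow X (Nat.choose_le_choose 2 hij)
end

section
/- Fix n ≥ 0. Then the (n+1)×(n+1) Hankel matrix (B_{i+j}(a,q))_{0≤i,j≤n} has SSNF diag(1, a q^{binom(1,2)} [1]!_q, a² q^{binom(2,2)} [2]!_q, …, a^n q^{binom(n,2)} [n]!_q) over ℤ[a,q], where binom(m,2) = m(m−1)/2. -/
-- We work in `ℤ[a,q] = MvPolynomial (Fin 2) ℤ`, with `a = X 0` and `q = X 1`.
namespace Stmt4

open scoped Matrix

noncomputable abbrev a : MvPolynomial (Fin 2) ℤ := MvPolynomial.X 0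
noncomputable abbrev q : MvPolynomial (Fin 2) ℤ := MvPolynomial.X 1

/-- `[m]_q = 1 + q + ⋯ + q^{m-1}` in `ℤ[a,q]`. -/
noncomputable def qNat (m : ℕ) : MvPolynomial (Fin 2) ℤ := ∑ i ∈ Finset.range m, q ^ i

/-- `[m]!_q = [1]_q [2]_q ⋯ [m]_q`. -/
noncomputable def qFactorial (m : ℕ) : MvPolynomial (Fin 2) ℤ :=
  ∏ i ∈ Finset.range m, qNat (i + 1)

/-- The `q`-Stirling numbers: `S_q(0,k) = δ_{0,k}`,
`S_q(n,k) = S_q(n-1,k-1) + [k]_q S_q(n-1,k)`. -/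
noncomputable def qStirling : ℕ → ℕ → MvPolynomial (Fin 2) ℤ
  | 0, k => if k = 0 then 1 else 0
  | n + 1, 0 => qNat 0 * qStirling n 0
  | n + 1, k + 1 => qStirling n k + qNat (k + 1) * qStirling n (k + 1)

/-- q-binomial coefficients (defined via a convenient q-Pascal recursion). -/
noncomputable def qb : ℕ → ℕ → MvPolynomial (Fin 2) ℤ
  | _, 0 => 1
  | 0, _ + 1 => 0
  | n + 1, k + 1 => qb n (k + 1) + q ^ (n - k) * qb n k

lemma qNat_zero : qNat 0 = 0 := by simp [qNat]
lemma qNat_one : qNat 1 = 1 := by simp [qNat]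
lemma qNat_add (m l : ℕ) : qNat (m + l) = qNat m + q ^ m * qNat l := by
  simp only [qNat, Finset.sum_range_add, pow_add, Finset.mul_sum]
lemma qb_eq_zero {n k : ℕ} (h : n < k) : qb n k = 0 := by
  induction n generalizing k with
  | zero => cases k with | zero => omega | succ k => rfl
  | succ n ih =>
    cases k with
    | zero => omega
    | succ k => rw [qb, ih (by omega), ih (by omega), mul_zero, add_zero]
lemma qb_diag (n : ℕ) : qb n n = 1 := by
  induction n with
  | zero => rfl
  | succ n ih => rw [qb, qb_eq_zero (by omega), ih, zero_add, Nat.sub_self, pow_zero, one_mul]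
lemma qStirling_eq_zero {n k : ℕ} (h : n < k) : qStirling n k = 0 := by
  induction n generalizing k with
  | zero => cases k with | zero => omega | succ k => simp [qStirling]
  | succ n ih =>
    cases k with
    | zero => omega
    | succ k => rw [qStirling, ih (by omega), ih (by omega), mul_zero, add_zero]
lemma qStirling_diag (n : ℕ) : qStirling n n = 1 := by
  induction n with
  | zero => simp [qStirling]
  | succ n ih => rw [qStirling, ih, qStirling_eq_zero (Nat.lt_succ_self n), mul_zero, add_zero]


lemma qb_zero_right (n : ℕ) : qb n 0 = 1 := by cases n <;> rfl

lemma qb_mul_qNat (v k : ℕ) : qNat (k + 1) * qb v (k + 1) = qNat (v - k) * qb v k := by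
  induction v generalizing k with
  | zero => rw [qb, Nat.zero_sub, qNat_zero, mul_zero, zero_mul]
  | succ v ih =>
    cases k with
    | zero =>
      rw [qb, qb, mul_add, ih 0, Nat.sub_zero, Nat.sub_zero, qNat_one, qNat_add v 1, qNat_one,
        qb_zero_right]
      ring
    | succ k =>
      rw [qb, qb, mul_add, mul_add, ih (k+1)]
      by_cases h : k + 1 ≤ v
      · have h4 : v + 1 - (k + 1) = v - k := by omega
        have e1 : qNat (v + 1) = qNat (v - (k+1)) + q ^ (v - (k+1)) * qNat (k + 2) := by
          rw [← qNat_add]; congr 1; omega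
        have e2 : qNat (v + 1) = qNat (v - k) + q ^ (v - k) * qNat (k + 1) := by
          rw [← qNat_add]; congr 1; omega
        have e3 : qNat (v - k) * (q ^ (v - k) * qb v k)
            = q ^ (v - k) * (qNat (k + 1) * qb v (k + 1)) := by rw [ih k]; ring
        have lhs : qNat (v - (k + 1)) * qb v (k + 1) + qNat (k + 1 + 1) * (q ^ (v - (k+1)) * qb v (k + 1))
            = qNat (v + 1) * qb v (k + 1) := by rw [e1]; ring
        have rhs : qNat (v + 1 - (k + 1)) * qb v (k + 1) + qNat (v + 1 - (k + 1)) * (q ^ (v - k) * qb v k)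
            = qNat (v + 1) * qb v (k + 1) := by
          rw [h4, e3, e2]; ring
        rw [lhs, rhs]
      · have hz : qb v (k+1) = 0 := qb_eq_zero (by omega)
        rw [hz]
        by_cases h2 : k = v
        · rw [show v + 1 - (k+1) = 0 from by omega, qNat_zero]; ring
        · rw [qb_eq_zero (show v < k from by omega)]; ring


lemma qFactorial_succ (k : ℕ) : qFactorial (k+1) = qFactorial k * qNat (k+1) :=
  Finset.prod_range_succ _ _

lemma choose_two_succ (k : ℕ) : (k+1).choose 2 = k.choose 2 + k := by
  show (k+1).choose (1+1) = _
  rw [Nat.choose_succ_succ, Nat.choose_one_right, Nat.add_comm]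

/-- The summand of the bilinear form. -/
noncomputable def Tm (u v k : ℕ) : MvPolynomial (Fin 2) ℤ :=
  a ^ (u + v - k) * q ^ (k.choose 2) * qFactorial k * qb u k * qb v k

/-- The bilinear form `P u v`. -/
noncomputable def Pm (u v : ℕ) : MvPolynomial (Fin 2) ℤ :=
  ∑ k ∈ Finset.range (u + v + 1), Tm u v k

lemma Tm_symm (u v k : ℕ) : Tm u v k = Tm v u k := by
  rw [Tm, Tm, Nat.add_comm u v]; ring

lemma Pm_symm (u v : ℕ) : Pm u v = Pm v u := by
  rw [Pm, Pm, Nat.add_comm u v]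
  exact Finset.sum_congr rfl fun k _ => Tm_symm u v k

lemma Pm_succ_left (u v : ℕ) :
    Pm (u+1) v = a * Pm u v
      + ∑ k ∈ Finset.range (u + v + 1), Tm u v k * (q ^ u * qNat (v - k)) := by
  have hsplit : ∀ k ∈ Finset.range (u+v+1), Tm (u+1) v (k+1)
      = (a ^ (u + v - k) * q ^ ((k+1).choose 2) * qFactorial (k+1) * qb u (k+1) * qb v (k+1))
        + Tm u v k * (q ^ u * qNat (v - k)) := by
    intro k _
    have h1 : u + 1 + v - (k+1) = u + v - k := by omega
    rw [Tm, qb, h1]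
    by_cases hu : k ≤ u
    · have e1 : qFactorial (k+1) * qb v (k+1) = qFactorial k * (qNat (v-k) * qb v k) := by
        rw [qFactorial_succ, mul_assoc, qb_mul_qNat]
      have e2 : q ^ ((k+1).choose 2) * q ^ (u - k) = q ^ (k.choose 2) * q ^ u := by
        rw [choose_two_succ, pow_add, mul_assoc, ← pow_add,
          show k + (u - k) = u from by omega]
      have expand : a ^ (u + v - k) * q ^ ((k + 1).choose 2) * qFactorial (k + 1) *
            (qb u (k + 1) + q ^ (u - k) * qb u k) * qb v (k + 1)
          = (a ^ (u + v - k) * q ^ ((k+1).choose 2) * qFactorial (k+1) * qb u (k+1) * qb v (k+1))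
            + (q ^ ((k+1).choose 2) * q ^ (u - k)) * (qFactorial (k+1) * qb v (k+1))
              * (a ^ (u + v - k) * qb u k) := by ring
      rw [expand, e1, e2, Tm]
      ring
    · rw [qb_eq_zero (show u < k from by omega), qb_eq_zero (show u < k + 1 from by omega),
        Tm, qb_eq_zero (show u < k from by omega)]
      ring
  have hTm0 : Tm (u+1) v 0 = a * Tm u v 0 := by
    rw [Tm, Tm, qb_zero_right, qb_zero_right, qb_zero_right,
      show u + 1 + v - 0 = (u + v - 0) + 1 from by omega, pow_succ]
    ring
  have hA : ∀ k ∈ Finset.range (u+v),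
      (a ^ (u + v - k) * q ^ ((k+1).choose 2) * qFactorial (k+1) * qb u (k+1) * qb v (k+1))
        = a * Tm u v (k+1) := by
    intro k hk
    rw [Finset.mem_range] at hk
    rw [Tm, show a ^ (u+v-k) = a * a ^ (u+v-(k+1)) from by
      rw [← pow_succ']; congr 1; omega]
    ring
  rw [Pm, show u + 1 + v + 1 = (u+v+1)+1 from by omega, Finset.sum_range_succ',
    Finset.sum_congr rfl hsplit, Finset.sum_add_distrib, hTm0]
  have : ∑ k ∈ Finset.range (u+v+1),
      (a ^ (u + v - k) * q ^ ((k+1).choose 2) * qFactorial (k+1) * qb u (k+1) * qb v (k+1))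
      + a * Tm u v 0 = a * Pm u v := by
    rw [Finset.sum_range_succ, qb_eq_zero (show u < u + v + 1 from by omega)]
    rw [Finset.sum_congr rfl hA, Pm, Finset.mul_sum, Finset.sum_range_succ']
    ring
  linear_combination this

lemma Pm_adj (u v : ℕ) :
    Pm (u+1) v + qNat u * Pm u v = Pm u (v+1) + qNat v * Pm u v := by
  have h2 : Pm u (v+1) = a * Pm u v
      + ∑ k ∈ Finset.range (u + v + 1), Tm u v k * (q ^ v * qNat (u - k)) := by
    rw [Pm_symm u (v+1), Pm_succ_left v u, Pm_symm v u, Nat.add_comm v u]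
    congr 1
    exact Finset.sum_congr rfl fun k _ => by rw [Tm_symm u v k]
  rw [Pm_succ_left, h2]
  have key : ∀ k ∈ Finset.range (u + v + 1),
      Tm u v k * (q ^ u * qNat (v - k)) + qNat u * Tm u v k
      = Tm u v k * (q ^ v * qNat (u - k)) + qNat v * Tm u v k := by
    intro k _
    by_cases h : k ≤ u ∧ k ≤ v
    · obtain ⟨hku, hkv⟩ := h
      have e : qNat u + q ^ u * qNat (v - k) = qNat v + q ^ v * qNat (u - k) := by
        rw [← qNat_add, ← qNat_add]; congr 1; omega
      linear_combination Tm u v k * e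
    · rcases not_and_or.1 h with h' | h'
      · rw [Tm, qb_eq_zero (show u < k from by omega)]; ring
      · rw [Tm, qb_eq_zero (show v < k from by omega)]; ring
  have hS : (∑ k ∈ Finset.range (u + v + 1), Tm u v k * (q ^ u * qNat (v - k)))
      + qNat u * Pm u v
      = (∑ k ∈ Finset.range (u + v + 1), Tm u v k * (q ^ v * qNat (u - k)))
        + qNat v * Pm u v := by
    rw [Pm, Finset.mul_sum, Finset.mul_sum, ← Finset.sum_add_distrib, ← Finset.sum_add_distrib]
    exact Finset.sum_congr rfl key
  linear_combination hS



/-- The `q`-Bell polynomials `B_n(a,q) = ∑_{k=0}^n S_q(n,k) a^k`. -/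
noncomputable def qBell (n : ℕ) : MvPolynomial (Fin 2) ℤ :=
  ∑ k ∈ Finset.range (n + 1), qStirling n k * a ^ k

/-- `A` has special Smith normal form `diag d` over `R`: `P * A * Q = diagonal d` for some
`P, Q` of determinant `1`, and `d j ∣ d i` whenever `j ≤ i`. -/
def HasSSNF {R : Type*} [CommRing R] {n : ℕ} (A : Matrix (Fin n) (Fin n) R) (d : Fin n → R) :
    Prop :=
  (∃ P Q : Matrix (Fin n) (Fin n) R, P.det = 1 ∧ Q.det = 1 ∧ P * A * Q = Matrix.diagonal d) ∧
  ∀ i j : Fin n, j ≤ i → d j ∣ d i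

lemma stirling_sum_succ (m : ℕ) (f : ℕ → MvPolynomial (Fin 2) ℤ) :
    ∑ u ∈ Finset.range (m+2), qStirling (m+1) u * f u
    = ∑ u ∈ Finset.range (m+1), qStirling m u * (f (u+1) + qNat u * f u) := by
  have g0 : qNat 0 * qStirling m 0 * f 0 = 0 := by rw [qNat_zero]; ring
  have gtop : qNat (m+1) * qStirling m (m+1) * f (m+1) = 0 := by
    rw [qStirling_eq_zero (Nat.lt_succ_self m)]; ring
  calc ∑ u ∈ Finset.range (m+2), qStirling (m+1) u * f u
      = ∑ u ∈ Finset.range (m+1), qStirling (m+1) (u+1) * f (u+1)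
        + qStirling (m+1) 0 * f 0 := Finset.sum_range_succ' _ _
    _ = ∑ u ∈ Finset.range (m+1),
          (qStirling m u * f (u+1) + qNat (u+1) * qStirling m (u+1) * f (u+1))
        + qNat 0 * qStirling m 0 * f 0 := by
        rw [show qStirling (m+1) 0 = qNat 0 * qStirling m 0 from rfl]
        congr 1
        exact Finset.sum_congr rfl fun u _ => by
          rw [show qStirling (m+1) (u+1)
            = qStirling m u + qNat (u+1) * qStirling m (u+1) from rfl]; ring
    _ = ∑ u ∈ Finset.range (m+1), qStirling m u * f (u+1)
        + (∑ u ∈ Finset.range (m+1), qNat (u+1) * qStirling m (u+1) * f (u+1)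
           + qNat 0 * qStirling m 0 * f 0) := by
        rw [Finset.sum_add_distrib]; ring
    _ = ∑ u ∈ Finset.range (m+1), qStirling m u * f (u+1)
        + ∑ u ∈ Finset.range (m+2), qNat u * qStirling m u * f u := by
        rw [Finset.sum_range_succ' (fun u => qNat u * qStirling m u * f u) (m+1)]
    _ = ∑ u ∈ Finset.range (m+1), qStirling m u * f (u+1)
        + ∑ u ∈ Finset.range (m+1), qNat u * qStirling m u * f u := by
        rw [Finset.sum_range_succ (fun u => qNat u * qStirling m u * f u) (m+1), gtop, add_zero]
    _ = ∑ u ∈ Finset.range (m+1), qStirling m u * (f (u+1) + qNat u * f u) := by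
        rw [← Finset.sum_add_distrib]
        exact Finset.sum_congr rfl fun u _ => by ring

/-- The double sum `G i j`. -/
noncomputable def G (i j : ℕ) : MvPolynomial (Fin 2) ℤ :=
  ∑ u ∈ Finset.range (i+1), qStirling i u
    * (∑ v ∈ Finset.range (j+1), qStirling j v * Pm u v)

lemma Pm_zero_left (v : ℕ) : Pm 0 v = a ^ v := by
  rw [Pm]
  rw [Finset.sum_eq_single_of_mem 0 (Finset.mem_range.2 (by omega))]
  · rw [Tm, qb_zero_right, qb_zero_right]
    simp [qFactorial]
  · intro k _ hk
    rw [Tm, qb_eq_zero (show 0 < k from Nat.pos_of_ne_zero hk)]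
    ring

lemma G_zero (j : ℕ) : G 0 j = qBell j := by
  rw [G, Finset.sum_range_one, show qStirling 0 0 = 1 from rfl, one_mul, qBell]
  exact Finset.sum_congr rfl fun v _ => by rw [Pm_zero_left]

lemma G_step (i j : ℕ) : G (i+1) j = G i (j+1) := by
  rw [G, G, stirling_sum_succ]
  refine Finset.sum_congr rfl fun u _ => ?_
  congr 1
  rw [stirling_sum_succ j (fun v => Pm u v), Finset.mul_sum, ← Finset.sum_add_distrib]
  refine Finset.sum_congr rfl fun v _ => ?_
  have := Pm_adj u v
  linear_combination qStirling j v * this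

lemma G_eq (i : ℕ) : ∀ j, G i j = qBell (i + j) := by
  induction i with
  | zero => intro j; rw [G_zero, Nat.zero_add]
  | succ i ih =>
    intro j
    rw [G_step, ih (j+1), show i + (j+1) = i + 1 + j from by omega]



/-- the entries of the unitriangular matrix `L`. -/
noncomputable def Lnat (i k : ℕ) : MvPolynomial (Fin 2) ℤ :=
  ∑ u ∈ Finset.range (i+1), qStirling i u * a ^ (u - k) * qb u k

lemma Lnat_eq_zero {i k : ℕ} (h : i < k) : Lnat i k = 0 :=
  Finset.sum_eq_zero fun u hu => by
    rw [qb_eq_zero (show u < k from by rw [Finset.mem_range] at hu; omega)]; ring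

lemma Lnat_diag (i : ℕ) : Lnat i i = 1 := by
  rw [Lnat, Finset.sum_eq_single_of_mem i (Finset.mem_range.2 (by omega))]
  · rw [qStirling_diag, qb_diag, Nat.sub_self]; ring
  · intro u hu hne
    rw [qb_eq_zero (show u < i from by rw [Finset.mem_range] at hu; omega)]; ring

lemma inner_eq (N u v : ℕ) (hu : u ≤ N) :
    ∑ k ∈ Finset.range (N+1),
      a ^ (u - k) * qb u k * (a ^ k * q ^ (k.choose 2) * qFactorial k) * (a ^ (v - k) * qb v k)
    = Pm u v := by
  have vanish : ∀ k ∈ Finset.range (N+1), k ∉ Finset.range (u+1) →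
      a ^ (u - k) * qb u k * (a ^ k * q ^ (k.choose 2) * qFactorial k) * (a ^ (v - k) * qb v k)
        = 0 := by
    intro k _ hk
    rw [Finset.mem_range, not_lt] at hk
    rw [qb_eq_zero (show u < k from by omega)]; ring
  have vanish2 : ∀ k ∈ Finset.range (u+v+1), k ∉ Finset.range (u+1) → Tm u v k = 0 := by
    intro k _ hk
    rw [Finset.mem_range, not_lt] at hk
    rw [Tm, qb_eq_zero (show u < k from by omega)]; ring
  rw [← Finset.sum_subset (show Finset.range (u+1) ⊆ Finset.range (N+1) from
      Finset.range_subset_range.2 (by omega)) vanish,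
    Pm, ← Finset.sum_subset (show Finset.range (u+1) ⊆ Finset.range (u+v+1) from
      Finset.range_subset_range.2 (by omega)) vanish2]
  refine Finset.sum_congr rfl fun k hk => ?_
  rw [Finset.mem_range] at hk
  by_cases hv : k ≤ v
  · rw [Tm, show a ^ (u+v-k) = a ^ (u-k) * a ^ k * a ^ (v-k) from by
      rw [← pow_add, ← pow_add]; congr 1; omega]
    ring
  · rw [Tm, qb_eq_zero (show v < k from by omega)]
    ring

lemma key (N i j : ℕ) (hi : i ≤ N) (hj : j ≤ N) :
    ∑ k ∈ Finset.range (N+1),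
      Lnat i k * (a ^ k * q ^ (k.choose 2) * qFactorial k) * Lnat j k
    = qBell (i + j) := by
  rw [← G_eq i j, G]
  have step1 : ∀ k ∈ Finset.range (N+1),
      Lnat i k * (a ^ k * q ^ (k.choose 2) * qFactorial k) * Lnat j k
      = ∑ u ∈ Finset.range (i+1), ∑ v ∈ Finset.range (j+1),
          qStirling i u * qStirling j v *
            (a ^ (u - k) * qb u k * (a ^ k * q ^ (k.choose 2) * qFactorial k)
              * (a ^ (v - k) * qb v k)) := by
    intro k _
    rw [Lnat, Lnat, Finset.sum_mul, Finset.sum_mul]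
    refine Finset.sum_congr rfl fun u _ => ?_
    rw [Finset.mul_sum]
    refine Finset.sum_congr rfl fun v _ => ?_
    ring
  rw [Finset.sum_congr rfl step1, Finset.sum_comm]
  refine Finset.sum_congr rfl fun u hu => ?_
  rw [Finset.sum_comm, Finset.mul_sum]
  refine Finset.sum_congr rfl fun v hv => ?_
  have hu' : u ≤ N := by rw [Finset.mem_range] at hu; omega
  calc ∑ k ∈ Finset.range (N + 1), qStirling i u * qStirling j v *
        (a ^ (u - k) * qb u k * (a ^ k * q ^ (k.choose 2) * qFactorial k)
          * (a ^ (v - k) * qb v k))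
      = qStirling i u * (qStirling j v * ∑ k ∈ Finset.range (N+1),
          a ^ (u - k) * qb u k * (a ^ k * q ^ (k.choose 2) * qFactorial k)
            * (a ^ (v - k) * qb v k)) := by
        rw [Finset.mul_sum, Finset.mul_sum]
        exact Finset.sum_congr rfl fun k _ => by ring
    _ = qStirling i u * (qStirling j v * Pm u v) := by rw [inner_eq N u v hu']


/-- The Hankel matrix `(B_{i+j}(a,q))_{0≤i,j≤n}` has SSNF
`diag(1, a q^{C(1,2)} [1]!_q, a² q^{C(2,2)} [2]!_q, …, aⁿ q^{C(n,2)} [n]!_q)` over `ℤ[a,q]`. -/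
theorem qBell_hankel_SSNF (n : ℕ) :
    HasSSNF (fun i j : Fin (n+1) => qBell ((i : ℕ) + (j : ℕ)))
      (fun i => a ^ (i : ℕ) * q ^ ((i : ℕ).choose 2) * qFactorial (i : ℕ)) := by
  set d : Fin (n+1) → MvPolynomial (Fin 2) ℤ :=
    fun i => a ^ (i : ℕ) * q ^ ((i : ℕ).choose 2) * qFactorial (i : ℕ) with hd
  set L : Matrix (Fin (n+1)) (Fin (n+1)) (MvPolynomial (Fin 2) ℤ) :=
    Matrix.of fun i k => Lnat (i : ℕ) (k : ℕ) with hL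
  have htri : L.BlockTriangular OrderDual.toDual := by
    intro i j hij
    exact Lnat_eq_zero (show (i : ℕ) < (j : ℕ) from hij)
  have hdet : L.det = 1 := by
    rw [Matrix.det_of_lowerTriangular L htri]
    exact Finset.prod_eq_one fun i _ => Lnat_diag (i : ℕ)
  have hdetT : (Lᵀ).det = 1 := by rw [Matrix.det_transpose, hdet]
  have hunit : IsUnit L.det := by rw [hdet]; exact isUnit_one
  have hunitT : IsUnit (Lᵀ).det := by rw [hdetT]; exact isUnit_one
  have hA : (fun i j : Fin (n+1) => qBell ((i : ℕ) + (j : ℕ)))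
      = L * Matrix.diagonal d * Lᵀ := by
    funext i j
    show qBell ((i : ℕ) + (j : ℕ)) = (L * Matrix.diagonal d * Lᵀ) i j
    calc qBell ((i : ℕ) + (j : ℕ))
        = ∑ k ∈ Finset.range (n+1),
            Lnat i k * (a ^ k * q ^ (k.choose 2) * qFactorial k) * Lnat j k :=
          (key n i j (by omega) (by omega)).symm
      _ = ∑ k : Fin (n+1),
            Lnat i (k : ℕ) * (a ^ (k : ℕ) * q ^ ((k : ℕ).choose 2) * qFactorial (k : ℕ))
              * Lnat j (k : ℕ) :=
          (Fin.sum_univ_eq_sum_range (fun k =>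
            Lnat i k * (a ^ k * q ^ (k.choose 2) * qFactorial k) * Lnat j k) (n+1)).symm
      _ = ∑ k : Fin (n+1), (L * Matrix.diagonal d) i k * Lᵀ k j := by
          refine Finset.sum_congr rfl fun k _ => ?_
          rw [Matrix.mul_diagonal, Matrix.transpose_apply]
          rfl
      _ = (L * Matrix.diagonal d * Lᵀ) i j := (Matrix.mul_apply).symm
  constructor
  · refine ⟨L⁻¹, (Lᵀ)⁻¹, ?_, ?_, ?_⟩
    · rw [Matrix.det_nonsing_inv, hdet, Ring.inverse_one]
    · rw [Matrix.det_nonsing_inv, hdetT, Ring.inverse_one]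
    · rw [hA, Matrix.mul_assoc L,
        Matrix.nonsing_inv_mul_cancel_left L (Matrix.diagonal d * Lᵀ) hunit]
      exact Matrix.mul_nonsing_inv_cancel_right Lᵀ (Matrix.diagonal d) hunitT
  · intro i j hij
    have hij' : (j : ℕ) ≤ (i : ℕ) := hij
    exact mul_dvd_mul (mul_dvd_mul (pow_dvd_pow a hij')
      (pow_dvd_pow q (Nat.choose_le_choose 2 hij')))
      (Finset.prod_dvd_prod_of_subset _ _ _ (Finset.range_subset_range.2 hij'))

end Stmt4
end

section
/- Fix n ≥ 0. Define the q-matching polynomials Match_m(q) = Σ_{k=0}^{⌊m/2⌋} binom(m,2k) · [1]_q[3]_q⋯[2k−1]_q ∈ ℤ[q], where binom(m,2k) is the ordinary binomial coefficient and [1]_q[3]_q⋯[2k−1]_q = ∏_{t=1}^k [2t−1]_q (an empty product being 1). Then the (n+1)×(n+1) Hankel matrix (Match_{i+j}(q))_{0≤i,j≤n} has SSNF diag(1, q^{binom(1,2)}[1]!_q, q^{binom(2,2)}[2]!_q, …, q^{binom(n,2)}[n]!_q) over ℤ[q], where binom(m,2) = m(m−1)/2. -/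
namespace Stmt5

/-- `[m]_q = 1 + q + ⋯ + q^{m-1}` in `ℤ[q]`. -/
noncomputable def qNat (m : ℕ) : Polynomial ℤ := ∑ i ∈ Finset.range m, Polynomial.X ^ i

/-- `[m]!_q = [1]_q [2]_q ⋯ [m]_q`. -/
noncomputable def qFactorial (m : ℕ) : Polynomial ℤ := ∏ i ∈ Finset.range m, qNat (i + 1)

/-- The `q`-matching polynomials
`Match_m(q) = ∑_{k=0}^{⌊m/2⌋} binom(m,2k) [1]_q [3]_q ⋯ [2k-1]_q`. -/
noncomputable def qMatch (m : ℕ) : Polynomial ℤ :=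
  ∑ k ∈ Finset.range (m / 2 + 1),
    (m.choose (2 * k) : Polynomial ℤ) * ∏ t ∈ Finset.range k, qNat (2 * t + 1)

/-- `A` has special Smith normal form `diag d` over `R`: `P * A * Q = diagonal d` for some
`P, Q` of determinant `1`, and `d j ∣ d i` whenever `j ≤ i`. -/
def HasSSNF {R : Type*} [CommRing R] {n : ℕ} (A : Matrix (Fin n) (Fin n) R) (d : Fin n → R) :
    Prop :=
  (∃ P Q : Matrix (Fin n) (Fin n) R, P.det = 1 ∧ Q.det = 1 ∧ P * A * Q = Matrix.diagonal d) ∧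
  ∀ i j : Fin n, j ≤ i → d j ∣ d i

open Polynomial Finset

lemma qNat_zero : qNat 0 = 0 := by simp [qNat]
lemma qNat_one : qNat 1 = 1 := by simp [qNat]

lemma qNat_add (a b : ℕ) : qNat (a + b) = qNat a + X ^ a * qNat b := by
  induction b with
  | zero => simp [qNat_zero]
  | succ b ih =>
      have h1 : qNat ((a+b)+1) = qNat (a+b) + X^(a+b) := by
        rw [qNat, Finset.sum_range_succ, ← qNat]
      have h2 : qNat (b+1) = qNat b + X^b := by
        rw [qNat, Finset.sum_range_succ, ← qNat]
      rw [show a + (b+1) = (a+b)+1 from rfl, h1, h2, ih, pow_add]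
      ring

/-- `ν_{2s} = [1][3]⋯[2s-1]`, `ν_odd = 0`. -/
noncomputable def nu : ℕ → Polynomial ℤ
  | 0 => 1
  | 1 => 0
  | (m+2) => qNat (m+1) * nu m

lemma nu_succ_succ (m : ℕ) : nu (m+2) = qNat (m+1) * nu m := rfl

lemma nu_two_mul (k : ℕ) : nu (2*k) = ∏ t ∈ Finset.range k, qNat (2*t+1) := by
  induction k with
  | zero => simp [nu]
  | succ k ih =>
      rw [show 2*(k+1) = 2*k+2 by ring, nu_succ_succ, ih, Finset.prod_range_succ]
      ring

lemma nu_odd (k : ℕ) : nu (2*k+1) = 0 := by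
  induction k with
  | zero => rfl
  | succ k ih =>
      rw [show 2*(k+1)+1 = (2*k+1)+2 by ring, nu_succ_succ, ih, mul_zero]

/-- Gaussian binomial coefficient. -/
noncomputable def qb : ℕ → ℕ → Polynomial ℤ
  | _, 0 => 1
  | 0, _+1 => 0
  | (n+1), (k+1) => qb n k + X^(k+1) * qb n (k+1)

lemma qb_zero_right (n : ℕ) : qb n 0 = 1 := by cases n <;> rfl
lemma qb_succ_succ (n k : ℕ) : qb (n+1) (k+1) = qb n k + X^(k+1) * qb n (k+1) := rfl

lemma qb_eq_zero {n k : ℕ} (h : n < k) : qb n k = 0 := by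
  induction n generalizing k with
  | zero => cases k with
      | zero => omega
      | succ k => rfl
  | succ n ih =>
      cases k with
      | zero => omega
      | succ k => rw [qb_succ_succ, ih (by omega), ih (by omega), mul_zero, add_zero]

lemma qb_self (n : ℕ) : qb n n = 1 := by
  induction n with
  | zero => rfl
  | succ n ih => rw [qb_succ_succ, ih, qb_eq_zero (by omega), mul_zero, add_zero]

lemma qb_one (n : ℕ) : qb n 1 = qNat n := by
  induction n with
  | zero => rw [qb_eq_zero (by omega), qNat_zero]
  | succ n ih =>
      rw [qb_succ_succ, qb_zero_right, ih, show n+1 = 1+n by omega, qNat_add, qNat_one, pow_one]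

/-- Key Gaussian binomial identity `[k+1]·qb(n,k+1) = [n-k]·qb(n,k)`. -/
lemma qb_key (n k : ℕ) : qNat (k+1) * qb n (k+1) = qNat (n - k) * qb n k := by
  induction n generalizing k with
  | zero => rw [qb_eq_zero (by omega), mul_zero, Nat.zero_sub, qNat_zero, zero_mul]
  | succ n ih =>
      cases k with
      | zero =>
          rw [qNat_one, one_mul, qb_one, Nat.sub_zero, qb_zero_right, mul_one]
      | succ k =>
          by_cases hk : k + 1 ≤ n
          · have ih1 := ih (k+1)
            have ih0 := ih k
            have h1 : qNat (k+2) + X^(k+2) * qNat (n-(k+1)) = qNat (n+1) := by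
              rw [← qNat_add]; congr 1; omega
            have h2 : qNat (k+1) + X^(k+1) * qNat (n-k) = qNat (n+1) := by
              rw [← qNat_add]; congr 1; omega
            rw [show n+1-(k+1) = n-k by omega]
            calc qNat (k+1+1) * qb (n+1) (k+1+1)
                = qNat (k+2) * qb n (k+1) + X^(k+2) * (qNat (k+2) * qb n (k+2)) := by
                  rw [qb_succ_succ]; ring
              _ = qNat (k+2) * qb n (k+1) + X^(k+2) * (qNat (n-(k+1)) * qb n (k+1)) := by rw [ih1]
              _ = (qNat (k+2) + X^(k+2) * qNat (n-(k+1))) * qb n (k+1) := by ring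
              _ = (qNat (k+1) + X^(k+1) * qNat (n-k)) * qb n (k+1) := by rw [h1, h2]
              _ = qNat (k+1) * qb n (k+1) + qNat (n-k) * (X^(k+1) * qb n (k+1)) := by ring
              _ = qNat (n-k) * qb n k + qNat (n-k) * (X^(k+1) * qb n (k+1)) := by rw [ih0]
              _ = qNat (n-k) * qb (n+1) (k+1) := by rw [qb_succ_succ]; ring
          · rw [qb_eq_zero (show n+1 < k+2 by omega), mul_zero,
              show n+1 - (k+1) = 0 by omega, qNat_zero, zero_mul]


/-- `c j k = qb(j,k) ν_{j-k}`. -/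
noncomputable def cc (j k : ℕ) : Polynomial ℤ := qb j k * nu (j - k)

lemma cc_eq_zero {j k : ℕ} (h : j < k) : cc j k = 0 := by
  rw [cc, qb_eq_zero h, zero_mul]

lemma cc_self (j : ℕ) : cc j j = 1 := by
  rw [cc, qb_self, Nat.sub_self, one_mul]; rfl

lemma nu_step (m : ℕ) : nu (m+1) = qNat m * nu (m-1) := by
  cases m with
  | zero => show (0:Polynomial ℤ) = qNat 0 * nu 0; rw [qNat_zero, zero_mul]
  | succ m => exact nu_succ_succ m

lemma cc_rec0 (j : ℕ) : cc (j+1) 0 = cc j 1 := by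
  rw [cc, cc, qb_zero_right, one_mul, Nat.sub_zero, qb_one, nu_step]

lemma cc_rec (j k : ℕ) : cc (j+1) (k+1) = cc j k + X^(k+1) * (qNat (k+2) * cc j (k+2)) := by
  rcases lt_trichotomy j k with h | h | h
  · rw [cc_eq_zero (by omega), cc_eq_zero (by omega), cc_eq_zero (by omega)]
    ring
  · subst h
    rw [cc_self, cc_self, cc_eq_zero (by omega)]
    ring
  · rcases Nat.lt_or_ge j (k+2) with h2 | h2
    · -- j = k+1
      have hj : j = k + 1 := by omega
      subst hj
      rw [cc, cc, cc_eq_zero (by omega), show k+1+1 - (k+1) = 1 by omega,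
        show k+1-k = 1 by omega, show nu 1 = 0 from rfl]
      ring
    · -- j ≥ k+2
      have hnu : nu (j - k) = qNat (j - (k+1)) * nu (j - (k+2)) := by
        have h3 : j - k = (j - (k+1)) + 1 := by omega
        rw [h3, nu_step]
        congr 2
      have hkey := qb_key j (k+1)
      rw [cc, cc, cc, show j+1 - (k+1) = j - k by omega, qb_succ_succ]
      calc (qb j k + X^(k+1) * qb j (k+1)) * nu (j-k)
          = qb j k * nu (j-k) + X^(k+1) * (qb j (k+1) * (qNat (j-(k+1)) * nu (j-(k+2)))) := by
            rw [← hnu]; ring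
        _ = qb j k * nu (j-k) + X^(k+1) * ((qNat (k+1+1) * qb j (k+1+1)) * nu (j-(k+2))) := by
            linear_combination (-(X^(k+1) * nu (j - (k+2)))) * hkey
        _ = _ := by ring

/-- The Cholesky-type triangle. -/
noncomputable def MM (i k : ℕ) : Polynomial ℤ :=
  ∑ j ∈ Finset.range (i+1), (i.choose j : Polynomial ℤ) * cc j k

lemma MM_eq_zero {i k : ℕ} (h : i < k) : MM i k = 0 := by
  apply Finset.sum_eq_zero
  intro j hj
  rw [cc_eq_zero (by simp only [Finset.mem_range] at hj; omega), mul_zero]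

lemma MM_self (i : ℕ) : MM i i = 1 := by
  rw [MM, Finset.sum_eq_single i]
  · rw [Nat.choose_self, Nat.cast_one, one_mul, cc_self]
  · intro j hj hne
    rw [cc_eq_zero (by simp only [Finset.mem_range] at hj; omega), mul_zero]
  · intro h
    exact absurd (Finset.self_mem_range_succ i) h

lemma choose_sum_shift (f : ℕ → Polynomial ℤ) (i : ℕ) :
    ∑ j ∈ Finset.range (i+1+1), ((i+1).choose j : Polynomial ℤ) * f j
    = ∑ j ∈ Finset.range (i+1), (i.choose j : Polynomial ℤ) * f j
      + ∑ j ∈ Finset.range (i+1), (i.choose j : Polynomial ℤ) * f (j+1) := by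
  have h1 : ∑ j ∈ Finset.range (i+1+1), ((i+1).choose j : Polynomial ℤ) * f j
      = ∑ j ∈ Finset.range (i+1), ((i+1).choose (j+1) : Polynomial ℤ) * f (j+1)
        + ((i+1).choose 0 : Polynomial ℤ) * f 0 :=
    Finset.sum_range_succ' (fun j => ((i+1).choose j : Polynomial ℤ) * f j) (i+1)
  have h2 : ∑ j ∈ Finset.range (i+1), ((i+1).choose (j+1) : Polynomial ℤ) * f (j+1)
      = ∑ j ∈ Finset.range (i+1), (i.choose j : Polynomial ℤ) * f (j+1)
        + ∑ j ∈ Finset.range (i+1), (i.choose (j+1) : Polynomial ℤ) * f (j+1) := by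
    rw [← Finset.sum_add_distrib]
    apply Finset.sum_congr rfl
    intro j _
    rw [Nat.choose_succ_succ]
    push_cast
    ring
  have h3 : ∑ j ∈ Finset.range (i+1), (i.choose (j+1) : Polynomial ℤ) * f (j+1)
        + ((i).choose 0 : Polynomial ℤ) * f 0
      = ∑ j ∈ Finset.range (i+1+1), (i.choose j : Polynomial ℤ) * f j :=
    (Finset.sum_range_succ' (fun j => ((i).choose j : Polynomial ℤ) * f j) (i+1)).symm
  have h4 : ∑ j ∈ Finset.range (i+1+1), (i.choose j : Polynomial ℤ) * f j
      = ∑ j ∈ Finset.range (i+1), (i.choose j : Polynomial ℤ) * f j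
        + (i.choose (i+1) : Polynomial ℤ) * f (i+1) :=
    Finset.sum_range_succ _ (i+1)
  have h5 : (i.choose (i+1) : Polynomial ℤ) = 0 := by
    rw [Nat.choose_eq_zero_of_lt (by omega), Nat.cast_zero]
  have h6 : ((i+1).choose 0 : Polynomial ℤ) = 1 := by simp
  have h7 : ((i).choose 0 : Polynomial ℤ) = 1 := by simp
  linear_combination h1 + h2 + h3 + h4 + (f 0) * h6 - (f 0) * h7 + (f (i+1)) * h5

lemma MM_rec0 (i : ℕ) : MM (i+1) 0 = MM i 0 + MM i 1 := by
  rw [MM, choose_sum_shift (fun j => cc j 0) i, ← MM]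
  congr 1
  rw [MM]
  apply Finset.sum_congr rfl
  intro j _
  rw [cc_rec0]

lemma MM_rec (i k : ℕ) :
    MM (i+1) (k+1) = MM i k + MM i (k+1) + X^(k+1) * (qNat (k+2) * MM i (k+2)) := by
  rw [MM, choose_sum_shift (fun j => cc j (k+1)) i, ← MM]
  have h : ∑ j ∈ Finset.range (i+1), (i.choose j : Polynomial ℤ) * cc (j+1) (k+1)
      = MM i k + X^(k+1) * (qNat (k+2) * MM i (k+2)) := by
    rw [MM, MM, Finset.mul_sum, Finset.mul_sum, ← Finset.sum_add_distrib]
    apply Finset.sum_congr rfl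
    intro j _
    rw [cc_rec]
    ring
  rw [h]
  ring


noncomputable def DD (k : ℕ) : Polynomial ℤ := X^(k.choose 2) * qFactorial k

lemma DD_zero : DD 0 = 1 := by simp [DD, qFactorial]

lemma DD_one : DD 1 = 1 := by
  rw [DD, qFactorial]
  simp [qNat_one]

lemma DD_succ (k : ℕ) : DD (k+1) = X^k * qNat (k+1) * DD k := by
  rw [DD, DD, qFactorial, Finset.prod_range_succ, ← qFactorial,
    show (k+1).choose 2 = k.choose 2 + k by
      have h1 : (k+1).choose 2 = k.choose 1 + k.choose 2 := Nat.choose_succ_succ k 1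
      have h2 := Nat.choose_one_right k
      omega,
    pow_add]
  ring

lemma swap_lemma (i j : ℕ) :
    ∑ k ∈ Finset.range (i+j+1+1), MM (i+1) k * (DD k * MM j k)
    = ∑ k ∈ Finset.range (i+j+1+1), MM i k * (DD k * MM (j+1) k) := by
  set N := i + j + 1 with hN
  have hL : ∑ k ∈ Finset.range (N+1), MM (i+1) k * (DD k * MM j k)
      = ∑ k ∈ Finset.range N, MM (i+1) (k+1) * (DD (k+1) * MM j (k+1))
        + MM (i+1) 0 * (DD 0 * MM j 0) :=
    Finset.sum_range_succ' (fun k => MM (i+1) k * (DD k * MM j k)) N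
  have hR : ∑ k ∈ Finset.range (N+1), MM i k * (DD k * MM (j+1) k)
      = ∑ k ∈ Finset.range N, MM i (k+1) * (DD (k+1) * MM (j+1) (k+1))
        + MM i 0 * (DD 0 * MM (j+1) 0) :=
    Finset.sum_range_succ' (fun k => MM i k * (DD k * MM (j+1) k)) N
  have hG : ∑ k ∈ Finset.range N, MM (i+1) (k+1) * (DD (k+1) * MM j (k+1))
      = (∑ k ∈ Finset.range N, MM i k * (DD (k+1) * MM j (k+1)))
        + (∑ k ∈ Finset.range N, MM i (k+1) * (DD (k+1) * MM j (k+1)))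
        + (∑ k ∈ Finset.range N, MM i (k+2) * (DD (k+2) * MM j (k+1))) := by
    rw [← Finset.sum_add_distrib, ← Finset.sum_add_distrib]
    apply Finset.sum_congr rfl
    intro k _
    rw [MM_rec, DD_succ (k+1)]
    ring
  have hH : ∑ k ∈ Finset.range N, MM i (k+1) * (DD (k+1) * MM (j+1) (k+1))
      = (∑ k ∈ Finset.range N, MM i (k+1) * (DD (k+1) * MM j k))
        + (∑ k ∈ Finset.range N, MM i (k+1) * (DD (k+1) * MM j (k+1)))
        + (∑ k ∈ Finset.range N, MM i (k+1) * (DD (k+2) * MM j (k+2))) := by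
    rw [← Finset.sum_add_distrib, ← Finset.sum_add_distrib]
    apply Finset.sum_congr rfl
    intro k _
    rw [MM_rec j k, DD_succ (k+1)]
    ring
  -- shift sums for the F-family
  have hA : ∑ k ∈ Finset.range (N+1), MM i (k+1) * (DD (k+1) * MM j k)
      = ∑ k ∈ Finset.range N, MM i (k+2) * (DD (k+2) * MM j (k+1))
        + MM i 1 * (DD 1 * MM j 0) :=
    Finset.sum_range_succ' (fun k => MM i (k+1) * (DD (k+1) * MM j k)) N
  have hA2 : ∑ k ∈ Finset.range (N+1), MM i (k+1) * (DD (k+1) * MM j k)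
      = ∑ k ∈ Finset.range N, MM i (k+1) * (DD (k+1) * MM j k)
        + MM i (N+1) * (DD (N+1) * MM j N) :=
    Finset.sum_range_succ _ N
  have hFN : MM i (N+1) = 0 := MM_eq_zero (by omega)
  -- shift sums for the G-family
  have hB : ∑ k ∈ Finset.range (N+1), MM i k * (DD (k+1) * MM j (k+1))
      = ∑ k ∈ Finset.range N, MM i (k+1) * (DD (k+2) * MM j (k+2))
        + MM i 0 * (DD 1 * MM j 1) :=
    Finset.sum_range_succ' (fun k => MM i k * (DD (k+1) * MM j (k+1))) N
  have hB2 : ∑ k ∈ Finset.range (N+1), MM i k * (DD (k+1) * MM j (k+1))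
      = ∑ k ∈ Finset.range N, MM i k * (DD (k+1) * MM j (k+1))
        + MM i N * (DD (N+1) * MM j (N+1)) :=
    Finset.sum_range_succ _ N
  have hGN : MM j (N+1) = 0 := MM_eq_zero (by omega)
  have hM0 : MM (i+1) 0 = MM i 0 + MM i 1 := MM_rec0 i
  have hMj0 : MM (j+1) 0 = MM j 0 + MM j 1 := MM_rec0 j
  have d0 : DD 0 = 1 := DD_zero
  have d1 : DD 1 = 1 := DD_one
  rw [hFN] at hA2
  rw [hGN] at hB2
  linear_combination hL - hR + hG - hH + hA2 - hA + hB - hB2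
    + (MM j 0) * hM0 - (MM i 0) * hMj0
    + (MM (i+1) 0 * MM j 0 - MM i 0 * MM (j+1) 0) * d0
    + (MM i 0 * MM j 1 - MM i 1 * MM j 0) * d1

lemma main_sum (i : ℕ) : ∀ j : ℕ,
    ∑ k ∈ Finset.range (i+j+1), MM i k * (DD k * MM j k) = MM (i+j) 0 := by
  induction i with
  | zero =>
      intro j
      rw [Finset.sum_eq_single 0]
      · rw [MM_self, DD_zero, one_mul, one_mul]
        norm_num
      · intro k hk hne
        rw [MM_eq_zero (show 0 < k by omega), zero_mul]
      · intro h
        exact absurd (Finset.mem_range.mpr (by omega)) h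
  | succ i ih =>
      intro j
      rw [show i+1+j+1 = i+j+1+1 by omega]
      rw [swap_lemma i j]
      rw [show i+j+1+1 = i+(j+1)+1 by omega]
      rw [ih (j+1), show i+(j+1) = i+1+j by omega]


lemma MM_zero_eq_qMatch (m : ℕ) : MM m 0 = qMatch m := by
  have h0 : ∀ j, cc j 0 = nu j := by
    intro j
    rw [cc, qb_zero_right, one_mul, Nat.sub_zero]
  have h1 : MM m 0 = ∑ j ∈ (Finset.range (m+1)).filter (fun j => j % 2 = 0),
      (m.choose j : Polynomial ℤ) * nu j := by
    rw [MM]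
    rw [Finset.sum_filter_of_ne]
    · apply Finset.sum_congr rfl
      intro j _
      rw [h0]
    · intro j _ hne
      by_contra hodd
      have : j = 2 * (j / 2) + 1 := by omega
      rw [this, nu_odd, mul_zero] at hne
      exact hne rfl
  rw [h1, qMatch]
  refine Finset.sum_nbij' (fun j => j / 2) (fun k => 2 * k) ?_ ?_ ?_ ?_ ?_
  · intro a ha
    simp only [Finset.mem_filter, Finset.mem_range] at ha
    simp only [Finset.mem_range]
    omega
  · intro a ha
    simp only [Finset.mem_range] at ha
    simp only [Finset.mem_filter, Finset.mem_range]
    omega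
  · intro a ha
    simp only [Finset.mem_filter, Finset.mem_range] at ha
    show 2 * (a / 2) = a
    omega
  · intro a _
    show (2 * a) / 2 = a
    omega
  · intro a ha
    simp only [Finset.mem_filter, Finset.mem_range] at ha
    have h2 : a = 2 * (a / 2) := by omega
    calc (m.choose a : Polynomial ℤ) * nu a
        = (m.choose (2*(a/2)) : Polynomial ℤ) * nu (2*(a/2)) := by rw [← h2]
      _ = _ := by rw [nu_two_mul]



/-- The Hankel matrix `(Match_{i+j}(q))_{0≤i,j≤n}` has SSNF
`diag(1, q^{C(1,2)}[1]!_q, q^{C(2,2)}[2]!_q, …, q^{C(n,2)}[n]!_q)` over `ℤ[q]`. -/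
theorem qMatch_hankel_SSNF (n : ℕ) :
    HasSSNF (fun i j : Fin (n+1) => qMatch ((i : ℕ) + (j : ℕ)))
      (fun i => Polynomial.X ^ ((i : ℕ).choose 2) * qFactorial (i : ℕ)) := by
  classical
  set Lm : Matrix (Fin (n+1)) (Fin (n+1)) (Polynomial ℤ) :=
    Matrix.of (fun i k : Fin (n+1) => MM (i : ℕ) (k : ℕ)) with hLm
  set dd : Fin (n+1) → Polynomial ℤ :=
    fun i => Polynomial.X ^ ((i : ℕ).choose 2) * qFactorial (i : ℕ) with hdd
  have hddDD : ∀ k : Fin (n+1), dd k = DD (k : ℕ) := fun _ => rfl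
  have hLtri : Lm.BlockTriangular OrderDual.toDual := by
    intro i k h
    have hik : (i : ℕ) < (k : ℕ) := h
    exact MM_eq_zero hik
  have hdet : Lm.det = 1 := by
    rw [Matrix.det_of_lowerTriangular Lm hLtri]
    rw [Finset.prod_congr rfl (fun i _ => show Lm i i = 1 from MM_self (i : ℕ))]
    exact Finset.prod_const_one
  have hfact : (fun i j : Fin (n+1) => qMatch ((i : ℕ) + (j : ℕ)))
      = Lm * Matrix.diagonal dd * Lm.transpose := by
    ext i j
    rw [Matrix.mul_apply]
    have e0 : ∀ k : Fin (n+1), (Lm * Matrix.diagonal dd) i k * Lm.transpose k j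
        = MM (i:ℕ) (k:ℕ) * (DD (k:ℕ) * MM (j:ℕ) (k:ℕ)) := by
      intro k
      rw [Matrix.mul_diagonal, Matrix.transpose_apply, hddDD]
      show MM (i:ℕ) (k:ℕ) * DD (k:ℕ) * MM (j:ℕ) (k:ℕ) = _
      ring
    rw [Finset.sum_congr rfl (fun k _ => e0 k)]
    rw [Fin.sum_univ_eq_sum_range (fun k => MM (i:ℕ) k * (DD k * MM (j:ℕ) k)) (n+1)]
    have sub : ∀ N : ℕ, (i:ℕ) + 1 ≤ N →
        ∑ k ∈ Finset.range N, MM (i:ℕ) k * (DD k * MM (j:ℕ) k)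
        = ∑ k ∈ Finset.range ((i:ℕ)+1), MM (i:ℕ) k * (DD k * MM (j:ℕ) k) := by
      intro N hN
      refine (Finset.sum_subset (Finset.range_subset_range.mpr hN) ?_).symm
      intro k _ hk
      rw [MM_eq_zero (by simp only [Finset.mem_range] at hk; omega), zero_mul]
    rw [sub (n+1) (by omega), ← sub ((i:ℕ)+(j:ℕ)+1) (by omega)]
    rw [main_sum (i:ℕ) (j:ℕ), MM_zero_eq_qMatch]
  constructor
  · refine ⟨Lm.adjugate, Lm.transpose.adjugate, ?_, ?_, ?_⟩
    · rw [Matrix.det_adjugate, hdet, one_pow]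
    · rw [Matrix.det_adjugate, Matrix.det_transpose, hdet, one_pow]
    · rw [hfact]
      rw [show Lm.adjugate * (Lm * Matrix.diagonal dd * Lm.transpose) * Lm.transpose.adjugate
          = (Lm.adjugate * Lm) * (Matrix.diagonal dd * (Lm.transpose * Lm.transpose.adjugate)) by
        simp only [Matrix.mul_assoc]]
      rw [Matrix.adjugate_mul, Matrix.mul_adjugate, hdet, Matrix.det_transpose, hdet, one_smul,
        Matrix.mul_one, Matrix.one_mul]
  · intro i j hij
    have h : (j : ℕ) ≤ (i : ℕ) := hij
    exact mul_dvd_mul (pow_dvd_pow _ (Nat.choose_le_choose 2 h))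
      (Finset.prod_dvd_prod_of_subset _ _ _ (Finset.range_subset_range.mpr h))

end Stmt5
end

section
/- Fix n ≥ 0. Define PM_m(q) ∈ ℤ[q] by PM_m(q) = [1]_q[3]_q⋯[m−1]_q = ∏_{t=1}^{m/2}[2t−1]_q if m is even (so PM_0(q) = 1), and PM_m(q) = 0 if m is odd. Then the (n+1)×(n+1) Hankel matrix (PM_{i+j}(q))_{0≤i,j≤n} has SSNF diag(1, q^{binom(1,2)}[1]!_q, q^{binom(2,2)}[2]!_q, …, q^{binom(n,2)}[n]!_q) over ℤ[q], where binom(m,2) = m(m−1)/2. -/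
namespace Stmt6

/-- `[m]_q = 1 + q + ⋯ + q^{m-1}` in `ℤ[q]`. -/
noncomputable def qNat (m : ℕ) : Polynomial ℤ := ∑ i ∈ Finset.range m, Polynomial.X ^ i

/-- `[m]!_q = [1]_q [2]_q ⋯ [m]_q`. -/
noncomputable def qFactorial (m : ℕ) : Polynomial ℤ := ∏ i ∈ Finset.range m, qNat (i + 1)

/-- `PM_m(q) = [1]_q [3]_q ⋯ [m-1]_q` for even `m`, and `0` for odd `m`. -/
noncomputable def qPM (m : ℕ) : Polynomial ℤ :=
  if m % 2 = 0 then ∏ t ∈ Finset.range (m / 2), qNat (2 * t + 1) else 0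

/-- `A` has special Smith normal form `diag d` over `R`: `P * A * Q = diagonal d` for some
`P, Q` of determinant `1`, and `d j ∣ d i` whenever `j ≤ i`. -/
def HasSSNF {R : Type*} [CommRing R] {n : ℕ} (A : Matrix (Fin n) (Fin n) R) (d : Fin n → R) :
    Prop :=
  (∃ P Q : Matrix (Fin n) (Fin n) R, P.det = 1 ∧ Q.det = 1 ∧ P * A * Q = Matrix.diagonal d) ∧
  ∀ i j : Fin n, j ≤ i → d j ∣ d i

open Polynomial Finset

noncomputable def lam (k : ℕ) : Polynomial ℤ := X ^ k * qNat (k + 1)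

noncomputable def dD (k : ℕ) : Polynomial ℤ := X ^ (k.choose 2) * qFactorial k

noncomputable def qb : ℕ → ℕ → Polynomial ℤ
  | 0, 0 => 1
  | 0, _ + 1 => 0
  | n + 1, 0 => qb n 0
  | n + 1, k + 1 => qb n k + X ^ (k + 1) * qb n (k + 1)

noncomputable def Lf (i k : ℕ) : Polynomial ℤ := qb i k * qPM (i - k)

lemma qNat_succ (m : ℕ) : qNat (m + 1) = qNat m + X ^ m := by
  simp [qNat, Finset.sum_range_succ]

lemma qNat_succ' (m : ℕ) : qNat (m + 1) = 1 + X * qNat m := by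
  simp only [qNat, Finset.mul_sum]
  rw [Finset.sum_range_succ']
  simp only [pow_succ, pow_zero]
  rw [add_comm]
  apply congrArg
  apply Finset.sum_congr rfl
  intros; ring

lemma qb_zero (n : ℕ) : qb n 0 = 1 := by
  induction n with
  | zero => rfl
  | succ n ih => rw [qb, ih]

lemma qb_eq_zero : ∀ n k, n < k → qb n k = 0 := by
  intro n
  induction n with
  | zero => intro k hk; match k, hk with | k + 1, _ => rfl
  | succ n ih =>
    intro k hk
    match k, hk with
    | k + 1, hk =>
      rw [qb, ih k (by omega), ih (k+1) (by omega)]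
      ring

lemma qb_diag (n : ℕ) : qb n n = 1 := by
  induction n with
  | zero => rfl
  | succ n ih => rw [qb, ih, qb_eq_zero n (n+1) (by omega)]; ring

lemma qPM_zero : qPM 0 = 1 := by simp [qPM]

lemma qPM_one : qPM 1 = 0 := by simp [qPM]

lemma qPM_add_two (m : ℕ) : qPM (m + 2) = qNat (m + 1) * qPM m := by
  rcases Nat.even_or_odd m with ⟨a, ha⟩ | ⟨a, ha⟩
  · subst ha
    have h1 : (a + a) % 2 = 0 := by omega
    have h2 : (a + a + 2) % 2 = 0 := by omega
    have h3 : (a + a) / 2 = a := by omega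
    have h4 : (a + a + 2) / 2 = a + 1 := by omega
    rw [qPM, qPM, if_pos h1, if_pos h2, h3, h4, Finset.prod_range_succ]
    have : 2 * a + 1 = a + a + 1 := by ring
    rw [this, mul_comm]
  · subst ha
    have h1 : (2 * a + 1) % 2 ≠ 0 := by omega
    have h2 : (2 * a + 1 + 2) % 2 ≠ 0 := by omega
    rw [qPM, qPM, if_neg h1, if_neg h2, mul_zero]

lemma dD_zero : dD 0 = 1 := by simp [dD, qFactorial]

lemma dD_succ (k : ℕ) : dD (k + 1) = lam k * dD k := by
  have hc : (k + 1).choose 2 = k.choose 2 + k := by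
    rw [Nat.choose_succ_succ]
    simp [Nat.choose_one_right, Nat.add_comm]
  rw [dD, dD, lam, hc, qFactorial, Finset.prod_range_succ, pow_add, ← qFactorial]
  ring

lemma absorb : ∀ n k, qb n k * qNat (n - k) = qNat (k + 1) * qb n (k + 1) := by
  intro n
  induction n with
  | zero =>
    intro k
    match k with
    | 0 => simp [qb, qNat]
    | k + 1 => rw [qb_eq_zero 0 (k+1) (by omega), qb_eq_zero 0 (k+2) (by omega)]; ring
  | succ n ih =>
    intro k
    match k with
    | 0 =>
      show qb (n+1) 0 * qNat (n + 1) = qNat 1 * qb (n+1) 1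
      have h1 : qb (n+1) 0 = qb n 0 := rfl
      have h2 : qb (n+1) 1 = qb n 0 + X ^ 1 * qb n 1 := rfl
      have h3 := ih 0
      rw [Nat.sub_zero] at h3
      rw [h1, h2, qNat_succ' n]
      have : qNat 1 = 1 := by simp [qNat]
      rw [this]
      calc qb n 0 * (1 + X * qNat n) = qb n 0 + X * (qb n 0 * qNat n) := by ring
        _ = qb n 0 + X * (qNat 1 * qb n 1) := by rw [h3]
        _ = 1 * (qb n 0 + X ^ 1 * qb n 1) := by
            have : qNat 1 = 1 := by simp [qNat]
            rw [this]; ring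
    | k + 1 =>
      show qb (n+1) (k+1) * qNat (n + 1 - (k+1)) = qNat (k + 2) * qb (n+1) (k+2)
      have h1 : qb (n+1) (k+1) = qb n k + X ^ (k+1) * qb n (k+1) := rfl
      have h2 : qb (n+1) (k+2) = qb n (k+1) + X ^ (k+2) * qb n (k+2) := rfl
      have hik := ih k
      have hik1 := ih (k+1)
      by_cases hkn : k + 1 ≤ n
      · have e1 : n + 1 - (k + 1) = (n - (k+1)) + 1 := by omega
        have e2 : n - k = (n - (k+1)) + 1 := by omega
        rw [h1, h2, e1]
        rw [e2] at hik
        set m := n - (k + 1) with hm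
        -- hik : qb n k * qNat (m+1) = qNat (k+1) * qb n (k+1)
        -- hik1 : qb n (k+1) * qNat m = qNat (k+2) * qb n (k+2)  (since n-(k+1)=m)
        have hik1' : qb n (k+1) * qNat m = qNat (k+2) * qb n (k+2) := hik1
        rw [qNat_succ (k+1), qNat_succ' m]
        -- goal: (qb n k + X^(k+1) qb n (k+1)) * (1 + X * qNat m)
        --     = (qNat (k+1) + X^(k+1)) * (qb n (k+1) + X^(k+2) * qb n (k+2))
        have key : (qb n k + X ^ (k+1) * qb n (k+1)) * (1 + X * qNat m)
            = qb n k + X * (qb n k * qNat m) + X ^ (k+1) * qb n (k+1)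
              + X ^ (k+1) * X * (qb n (k+1) * qNat m) := by ring
        rw [key, hik1']
        have hik' : qb n k * (1 + X * qNat m) = qNat (k+1) * qb n (k+1) := by
          rw [← qNat_succ' m]; exact hik
        have : qb n k + X * (qb n k * qNat m) = qNat (k+1) * qb n (k+1) := by
          have := hik'
          ring_nf at this ⊢
          linear_combination this
        rw [this, qNat_succ (k+1)]
        ring
      · -- k + 1 > n, so qb n (k+1) = 0 and qb n (k+2) = 0
        have z1 : qb n (k+1) = 0 := qb_eq_zero n (k+1) (by omega)
        have z2 : qb n (k+2) = 0 := qb_eq_zero n (k+2) (by omega)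
        by_cases hkn2 : k ≤ n
        · -- then k = n, n + 1 - (k+1) = 0
          have hk : k = n := by omega
          have e : n + 1 - (k + 1) = 0 := by omega
          rw [h1, h2, e, z1, z2]
          simp [qNat]
        · have z0 : qb n k = 0 := qb_eq_zero n k (by omega)
          rw [h1, h2, z0, z1, z2]
          ring

lemma Lf_eq_zero {i k : ℕ} (h : i < k) : Lf i k = 0 := by
  rw [Lf, qb_eq_zero i k h, zero_mul]

lemma Lf_diag (i : ℕ) : Lf i i = 1 := by
  rw [Lf, qb_diag, Nat.sub_self, qPM_zero, one_mul]

lemma Lf_succ_succ (i k : ℕ) : Lf (i+1) (k+1) = Lf i k + lam (k+1) * Lf i (k+2) := by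
  have h1 : qb (i+1) (k+1) = qb i k + X ^ (k+1) * qb i (k+1) := rfl
  rw [Lf, Lf, Lf, h1, lam]
  have e0 : i + 1 - (k + 1) = i - k := by omega
  rw [e0, add_mul]
  congr 1
  -- X^(k+1) * qb i (k+1) * qPM (i-k) = X^(k+1) * qNat (k+2) * (qb i (k+2) * qPM (i - (k+2)))
  by_cases h : k + 2 ≤ i
  · have e1 : i - k = (i - (k+2)) + 2 := by omega
    have e2 : i - (k + 1) = (i - (k+2)) + 1 := by omega
    rw [e1, qPM_add_two]
    have ha := absorb i (k+1)
    rw [e2] at ha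
    calc X ^ (k+1) * qb i (k+1) * (qNat (i - (k+2) + 1) * qPM (i - (k+2)))
        = X ^ (k+1) * ((qb i (k+1) * qNat (i - (k+2) + 1)) * qPM (i - (k+2))) := by ring
      _ = X ^ (k+1) * ((qNat (k+2) * qb i (k+2)) * qPM (i - (k+2))) := by rw [ha]
      _ = X ^ (k+1) * qNat (k+2) * (qb i (k+2) * qPM (i - (k+2))) := by ring
  · by_cases h2 : k + 1 ≤ i
    · -- i = k+1 : qPM (i-k) = qPM 1 = 0, and qb i (k+2) = 0
      have hik : i = k + 1 := by omega
      have e1 : i - k = 1 := by omega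
      rw [e1, qPM_one, qb_eq_zero i (k+2) (by omega)]
      ring
    · rw [qb_eq_zero i (k+1) (by omega), qb_eq_zero i (k+2) (by omega)]
      ring

lemma Lf_succ_zero (i : ℕ) : Lf (i+1) 0 = lam 0 * Lf i 1 := by
  rw [Lf, Lf, qb_zero, one_mul, Nat.sub_zero, lam, pow_zero, one_mul]
  have hq1 : qNat 1 = 1 := by simp [qNat]
  rw [hq1, one_mul]
  by_cases h : 1 ≤ i
  · have ha := absorb i 0
    rw [Nat.sub_zero, qb_zero, one_mul, hq1, one_mul] at ha
    have e : i + 1 = (i - 1) + 2 := by omega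
    have e2 : i - 1 + 1 = i := by omega
    rw [e, qPM_add_two, e2, ha]
  · have hi : i = 0 := by omega
    subst hi
    rw [qPM_one, qb_eq_zero 0 1 (by omega), zero_mul]

/-- The unified recurrence. -/
lemma Lf_succ (i k : ℕ) :
    Lf (i+1) k = (if k = 0 then 0 else Lf i (k-1)) + lam k * Lf i (k+1) := by
  match k with
  | 0 => simpa using Lf_succ_zero i
  | k + 1 => simpa using Lf_succ_succ i k

lemma half (i j M : ℕ) (hj : j < M) :
    ∑ k ∈ Finset.range M, Lf (i+1) k * dD k * Lf j k
      = ∑ k ∈ Finset.range M, lam k * dD k * (Lf i k * Lf j (k+1) + Lf i (k+1) * Lf j k) := by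
  obtain ⟨M', rfl⟩ : ∃ M', M = M' + 1 := ⟨M - 1, by omega⟩
  have split : ∀ k, Lf (i+1) k * dD k * Lf j k
      = (if k = 0 then 0 else Lf i (k-1)) * dD k * Lf j k
        + lam k * dD k * (Lf i (k+1) * Lf j k) := by
    intro k; rw [Lf_succ]; ring
  simp only [split]
  rw [Finset.sum_add_distrib]
  have h2 : ∑ k ∈ Finset.range (M'+1),
        lam k * dD k * (Lf i k * Lf j (k+1) + Lf i (k+1) * Lf j k)
      = (∑ k ∈ Finset.range (M'+1), lam k * dD k * (Lf i k * Lf j (k+1)))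
        + ∑ k ∈ Finset.range (M'+1), lam k * dD k * (Lf i (k+1) * Lf j k) := by
    rw [← Finset.sum_add_distrib]
    apply Finset.sum_congr rfl
    intros; ring
  rw [h2]
  congr 1
  rw [Finset.sum_range_succ'
    (fun k => (if k = 0 then 0 else Lf i (k-1)) * dD k * Lf j k) M']
  have hz : (if (0:ℕ) = 0 then (0:Polynomial ℤ) else Lf i (0-1)) * dD 0 * Lf j 0 = 0 := by
    simp
  rw [hz, add_zero]
  rw [Finset.sum_range_succ (fun k => lam k * dD k * (Lf i k * Lf j (k+1))) M']
  have hjz : Lf j (M' + 1) = 0 := Lf_eq_zero (by omega)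
  simp only [hjz, mul_zero, add_zero]
  apply Finset.sum_congr rfl
  intro k _
  simp only [Nat.add_sub_cancel, if_neg (Nat.succ_ne_zero k)]
  rw [dD_succ]
  ring

lemma key (i j : ℕ) :
    ∑ k ∈ Finset.range (i+j+3), Lf (i+1) k * dD k * Lf j k
      = ∑ k ∈ Finset.range (i+j+3), Lf i k * dD k * Lf (j+1) k := by
  rw [half i j (i+j+3) (by omega)]
  have : ∑ k ∈ Finset.range (i+j+3), Lf i k * dD k * Lf (j+1) k
      = ∑ k ∈ Finset.range (i+j+3), Lf (j+1) k * dD k * Lf i k := by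
    apply Finset.sum_congr rfl; intro k _; ring
  rw [this, half j i (i+j+3) (by omega)]
  apply Finset.sum_congr rfl
  intro k _
  ring

lemma Bval : ∀ i j : ℕ, ∑ k ∈ Finset.range (i+j+2), Lf i k * dD k * Lf j k = qPM (i+j) := by
  intro i
  induction i with
  | zero =>
    intro j
    rw [Finset.sum_eq_single 0]
    · rw [Lf_diag 0, dD_zero, Lf, qb_zero, Nat.sub_zero, Nat.zero_add]
      ring
    · intro k _ hk
      rw [Lf_eq_zero (show 0 < k by omega)]
      ring
    · intro h; exact absurd (Finset.mem_range.2 (by omega)) h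
  | succ i ih =>
    intro j
    have e : i + 1 + j + 2 = i + j + 3 := by omega
    rw [e, key i j]
    have e2 : i + j + 3 = i + (j+1) + 2 := by omega
    have e3 : i + 1 + j = i + (j + 1) := by omega
    rw [e2, ih (j+1), e3]

lemma Lf_cast (i k : ℕ) : Lf i k = qb i k * qPM (i - k) := rfl

/-- The Hankel matrix `(PM_{i+j}(q))_{0≤i,j≤n}` has SSNF
`diag(1, q^{C(1,2)}[1]!_q, q^{C(2,2)}[2]!_q, …, q^{C(n,2)}[n]!_q)` over `ℤ[q]`. -/
theorem qPM_hankel_SSNF (n : ℕ) :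
    HasSSNF (fun i j : Fin (n+1) => qPM ((i : ℕ) + (j : ℕ)))
      (fun i => Polynomial.X ^ ((i : ℕ).choose 2) * qFactorial (i : ℕ)) := by

  set d : Fin (n+1) → Polynomial ℤ :=
    fun i => Polynomial.X ^ ((i : ℕ).choose 2) * qFactorial (i : ℕ) with hd
  have hdD : ∀ i : Fin (n+1), d i = dD (i : ℕ) := fun i => rfl
  set Lm : Matrix (Fin (n+1)) (Fin (n+1)) (Polynomial ℤ) :=
    Matrix.of (fun i k : Fin (n+1) => Lf (i : ℕ) (k : ℕ)) with hLm
  have hLtri : Lm.BlockTriangular OrderDual.toDual := by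
    intro i k h
    exact Lf_eq_zero (show (i:ℕ) < (k:ℕ) from h)
  have hdet : Lm.det = 1 := by
    rw [Matrix.det_of_lowerTriangular Lm hLtri]
    apply Finset.prod_eq_one
    intro i _
    exact Lf_diag _
  have hdetT : Lm.transpose.det = 1 := by rw [Matrix.det_transpose]; exact hdet
  have hA : (fun i j : Fin (n+1) => qPM ((i : ℕ) + (j : ℕ)))
      = Lm * Matrix.diagonal d * Lm.transpose := by
    funext i j
    show qPM ((i:ℕ) + (j:ℕ)) = (Lm * Matrix.diagonal d * Lm.transpose) i j
    rw [Matrix.mul_apply]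
    have entry : ∀ k : Fin (n+1),
        (Lm * Matrix.diagonal d) i k * Lm.transpose k j = Lf (i:ℕ) (k:ℕ) * dD (k:ℕ) * Lf (j:ℕ) (k:ℕ) := by
      intro k
      rw [Matrix.mul_diagonal, Matrix.transpose_apply, hdD]
      rfl
    simp only [entry]
    rw [← Bval (i:ℕ) (j:ℕ)]
    -- both sums equal the sum over range (i+1)
    rw [Fin.sum_univ_eq_sum_range (fun k => Lf (i:ℕ) k * dD k * Lf (j:ℕ) k) (n+1)]
    have hsub1 : Finset.range ((i:ℕ)+1) ⊆ Finset.range (n+1) :=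
      Finset.range_subset_range.2 (by omega)
    have hsub2 : Finset.range ((i:ℕ)+1) ⊆ Finset.range ((i:ℕ)+(j:ℕ)+2) :=
      Finset.range_subset_range.2 (by omega)
    rw [← Finset.sum_subset hsub1, ← Finset.sum_subset hsub2]
    · intro k _ hk
      rw [Lf_eq_zero (show (i:ℕ) < k by simp only [Finset.mem_range] at hk ⊢; omega)]
      ring
    · intro k _ hk
      rw [Lf_eq_zero (show (i:ℕ) < k by simp only [Finset.mem_range] at hk ⊢; omega)]
      ring
  constructor
  · refine ⟨Lm⁻¹, Lm.transpose⁻¹, ?_, ?_, ?_⟩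
    · rw [Matrix.det_nonsing_inv, hdet]; simp
    · rw [Matrix.det_nonsing_inv, hdetT]; simp
    · have hu : IsUnit Lm.det := by rw [hdet]; exact isUnit_one
      have huT : IsUnit Lm.transpose.det := by rw [hdetT]; exact isUnit_one
      rw [hA]
      calc Lm⁻¹ * (Lm * Matrix.diagonal d * Lm.transpose) * Lm.transpose⁻¹
          = (Lm⁻¹ * Lm) * Matrix.diagonal d * (Lm.transpose * Lm.transpose⁻¹) := by
            simp only [Matrix.mul_assoc]
        _ = Matrix.diagonal d := by
            rw [Matrix.nonsing_inv_mul Lm hu, Matrix.mul_nonsing_inv Lm.transpose huT]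
            simp
  · intro i j hij
    apply mul_dvd_mul
    · exact pow_dvd_pow _ (Nat.choose_le_choose 2 hij)
    · exact Finset.prod_dvd_prod_of_subset _ _ _ (Finset.range_subset_range.2 hij)


end Stmt6
end

section
/- Let R be a commutative ring, let λ = (λ_1, λ_2, …) be a sequence in R, set λ_0 = 0, and let b = (0, 0, …). Let μ_m ∈ R be the m-th moment of (b, λ). Define p_m ∈ R[x] by p_{m+1}(x) = x·p_m(x) − λ_m p_{m−1}(x) with p_{−1} = 0, p_0 = 1, and define e_m, o_m ∈ R[x] by e_{m+1}(x) = (x − λ_{2m} − λ_{2m+1}) e_m(x) − λ_{2m−1}λ_{2m} e_{m−1}(x) and o_{m+1}(x) = (x − λ_{2m+1} − λ_{2m+2}) o_m(x) − λ_{2m}λ_{2m+1} o_{m−1}(x), each with e_{−1} = o_{−1} = 0 and e_0 = o_0 = 1. Then for all n ≥ 0: (1) μ_{2n+1} = 0; (2) p_{2n}(x) = e_n(x²) and p_{2n+1}(x) = x·o_n(x²); (3) μ_{2n} equals the n-th moment of the pair (b^e, λ^e), where b^e_m = λ_{2m} + λ_{2m+1} and λ^e_m = λ_{2m−1}λ_{2m};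 (4) μ_{2n+2} equals λ_1 times the n-th moment of the pair (b^o, λ^o), where b^o_m = λ_{2m+1} + λ_{2m+2} and λ^o_m = λ_{2m}λ_{2m+1}. -/
open Polynomial

namespace OET

/-- Motzkin-style paths of length `t` from height `0` to height `h`. -/
def mpaths (t h : ℕ) : Finset (Fin (t+1) → ℕ) :=
  (Fintype.piFinset fun _ : Fin (t+1) => Finset.range (t+1)).filter
    (fun ω => ω 0 = 0 ∧ ω (Fin.last t) = h ∧
      ∀ i : Fin t, ω i.succ ≤ ω i.castSucc + 1 ∧ ω i.castSucc ≤ ω i.succ + 1)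

lemma height_bound {t : ℕ} {ω : Fin (t+1) → ℕ} (h0 : ω 0 = 0)
    (hs : ∀ i : Fin t, ω i.succ ≤ ω i.castSucc + 1) :
    ∀ j : ℕ, ∀ hj : j < t + 1, ω ⟨j, hj⟩ ≤ j := by
  intro j
  induction j with
  | zero => intro hj; exact le_of_eq h0
  | succ j ih =>
    intro hj
    have hj' : j < t := by omega
    have h1 : ω ⟨j+1, hj⟩ ≤ ω ⟨j, by omega⟩ + 1 := hs ⟨j, hj'⟩
    have h2 : ω ⟨j, by omega⟩ ≤ j := ih (by omega)
    omega

lemma mem_mpaths {t h : ℕ} {ω : Fin (t+1) → ℕ} :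
    ω ∈ mpaths t h ↔ ω 0 = 0 ∧ ω (Fin.last t) = h ∧
      ∀ i : Fin t, ω i.succ ≤ ω i.castSucc + 1 ∧ ω i.castSucc ≤ ω i.succ + 1 := by
  constructor
  · intro hω; exact (Finset.mem_filter.mp hω).2
  · intro hω
    refine Finset.mem_filter.mpr ⟨?_, hω⟩
    refine Fintype.mem_piFinset.mpr fun i => Finset.mem_range.mpr ?_
    have h2 : ω ⟨i.val, i.isLt⟩ ≤ i.val :=
      height_bound hω.1 (fun i => (hω.2.2 i).1) i.val i.isLt
    rw [Fin.eta] at h2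
    exact lt_of_le_of_lt h2 i.isLt

lemma mpaths_eq_empty {t h : ℕ} (hh : t < h) : mpaths t h = ∅ := by
  refine Finset.eq_empty_of_forall_notMem fun ω hω => ?_
  obtain ⟨h0, hl, hs⟩ := mem_mpaths.mp hω
  have h2 : ω ⟨t, by omega⟩ ≤ t := height_bound h0 (fun i => (hs i).1) t (by omega)
  have h3 : ω (Fin.last t) = ω ⟨t, by omega⟩ := rfl
  omega

variable {R : Type*} [CommRing R]

/-- The sum of weights of paths of length `t` from `0` to `h`. -/
def S (b lam : ℕ → R) (t h : ℕ) : R := ∑ ω ∈ mpaths t h, motzkinWeight b lam ω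

lemma S_eq_zero_of_gt (b lam : ℕ → R) {t h : ℕ} (hh : t < h) : S b lam t h = 0 := by
  rw [S, mpaths_eq_empty hh, Finset.sum_empty]

lemma S_zero (b lam : ℕ → R) (h : ℕ) : S b lam 0 h = if h = 0 then 1 else 0 := by
  rcases Nat.eq_zero_or_pos h with rfl | hpos
  · have hset : mpaths 0 0 = {fun _ => 0} := by
      ext ω
      simp only [mem_mpaths, Finset.mem_singleton]
      constructor
      · rintro ⟨h0, -, -⟩
        funext i
        have hi : i = 0 := by omega
        rw [hi, h0]
      · rintro rfl
        exact ⟨rfl, rfl, fun i => i.elim0⟩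
    rw [S, hset, if_pos rfl, Finset.sum_singleton]
    simp [motzkinWeight]
  · rw [S_eq_zero_of_gt b lam hpos, if_neg (by omega)]

lemma fiber_sum (b lam : ℕ → R) (t h h' : ℕ) :
    ∑ ω ∈ (mpaths (t+1) h).filter (fun ω => ω (Fin.castSucc (Fin.last t)) = h'),
      motzkinWeight b lam ω
    = (if h' = h then b h else if h' = h + 1 then lam h'
        else if h' + 1 = h then 1 else 0) * S b lam t h' := by
  by_cases hnear : h' = h ∨ h' = h + 1 ∨ h' + 1 = h
  case neg =>
    push_neg at hnear
    have hemp : (mpaths (t+1) h).filter (fun ω => ω (Fin.castSucc (Fin.last t)) = h') = ∅ := by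
      refine Finset.filter_eq_empty_iff.mpr ?_
      intro ω hω hpen
      obtain ⟨h0, hl, hs⟩ := mem_mpaths.mp hω
      have hcond := hs (Fin.last t)
      rw [Fin.succ_last, hl, hpen] at hcond
      omega
    rw [hemp, Finset.sum_empty, if_neg hnear.1, if_neg hnear.2.1, if_neg hnear.2.2, zero_mul]
  case pos =>
    rw [S, Finset.mul_sum]
    refine Finset.sum_nbij' (fun ω => ω ∘ Fin.castSucc) (fun ω' => Fin.snoc ω' h)
      ?_ ?_ ?_ ?_ ?_
    · -- restriction lands in mpaths t h'
      intro ω hω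
      obtain ⟨hω', hpen⟩ := Finset.mem_filter.mp hω
      obtain ⟨h0, hl, hs⟩ := mem_mpaths.mp hω'
      refine mem_mpaths.mpr ⟨by simpa using h0, hpen, fun i => ?_⟩
      have hc := hs i.castSucc
      rw [Fin.succ_castSucc] at hc
      exact hc
    · -- snoc lands in the filter
      intro ω' hω'
      obtain ⟨h0, hl, hs⟩ := mem_mpaths.mp hω'
      refine Finset.mem_filter.mpr ⟨mem_mpaths.mpr ⟨?_, ?_, ?_⟩, ?_⟩
      · have h00 : (0 : Fin (t+1+1)) = Fin.castSucc 0 := rfl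
        rw [h00]
        simp only [Fin.snoc_castSucc]
        exact h0
      · simp only [Fin.snoc_last]
      · intro i
        refine Fin.lastCases ?_ (fun j => ?_) i
        · simp only [Fin.succ_last, Fin.snoc_last, Fin.snoc_castSucc, hl]
          omega
        · simp only [Fin.succ_castSucc, Fin.snoc_castSucc]
          exact hs j
      · simp only [Fin.snoc_castSucc]
        exact hl
    · -- left inverse
      intro ω hω
      obtain ⟨hω', hpen⟩ := Finset.mem_filter.mp hω
      obtain ⟨h0, hl, hs⟩ := mem_mpaths.mp hω'
      funext i
      refine Fin.lastCases ?_ (fun j => ?_) i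
      · simp only [Fin.snoc_last]
        exact hl.symm
      · simp only [Fin.snoc_castSucc]
        rfl
    · -- right inverse
      intro ω' hω'
      funext i
      simp [Fin.snoc_castSucc]
    · -- weights
      intro ω hω
      obtain ⟨hω', hpen⟩ := Finset.mem_filter.mp hω
      obtain ⟨h0, hl, hs⟩ := mem_mpaths.mp hω'
      show motzkinWeight b lam ω = _
      unfold motzkinWeight
      rw [Fin.prod_univ_castSucc]
      have hlastterm :
          (if ω (Fin.last t).succ = ω (Fin.last t).castSucc then b (ω (Fin.last t).castSucc)
            else if ω (Fin.last t).succ + 1 = ω (Fin.last t).castSucc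
              then lam (ω (Fin.last t).castSucc) else 1)
          = (if h' = h then b h else if h' = h + 1 then lam h'
              else if h' + 1 = h then 1 else 0) := by
        rw [Fin.succ_last, hl, hpen]
        rcases hnear with h1 | h1 | h1 <;> subst h1 <;>
          split_ifs <;> first | rfl | (exfalso; omega)
      rw [hlastterm, mul_comm]
      refine congrArg _ (Finset.prod_congr rfl fun i _ => ?_)
      simp only [Fin.succ_castSucc, Function.comp_apply]


lemma S_step (b lam : ℕ → R) (t h : ℕ) :
    S b lam (t+1) h = (if h = 0 then 0 else S b lam t (h-1))
      + b h * S b lam t h + lam (h+1) * S b lam t (h+1) := by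
  have hmaps : ∀ ω ∈ mpaths (t+1) h,
      ω (Fin.castSucc (Fin.last t)) ∈ Finset.range (t+2) := by
    intro ω hω
    obtain ⟨h0, hl, hs⟩ := mem_mpaths.mp hω
    have hb : ω ⟨t, by omega⟩ ≤ t := height_bound h0 (fun i => (hs i).1) t (by omega)
    have : ω (Fin.castSucc (Fin.last t)) = ω ⟨t, by omega⟩ := rfl
    rw [Finset.mem_range]
    omega
  have h1 : S b lam (t+1) h
      = ∑ h' ∈ Finset.range (t+2),
          ∑ ω ∈ (mpaths (t+1) h).filter (fun ω => ω (Fin.castSucc (Fin.last t)) = h'),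
            motzkinWeight b lam ω := by
    rw [S, Finset.sum_fiberwise_of_maps_to hmaps]
  rw [h1]
  rw [Finset.sum_congr rfl fun h' _ => fiber_sum b lam t h h']
  have h2 : ∀ h' : ℕ,
      (if h' = h then b h else if h' = h + 1 then lam h'
        else if h' + 1 = h then 1 else 0) * S b lam t h'
      = (if h' = h then b h * S b lam t h else 0)
        + (if h' = h + 1 then lam (h+1) * S b lam t (h+1) else 0)
        + (if h' + 1 = h then S b lam t h' else 0) := by
    intro h'
    split_ifs with e1 e2 e3 <;> first | (exfalso; omega) | (subst_vars; ring)
  rw [Finset.sum_congr rfl fun h' _ => h2 h']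
  rw [Finset.sum_add_distrib, Finset.sum_add_distrib]
  have hA : (∑ h' ∈ Finset.range (t+2), if h' = h then b h * S b lam t h else 0)
      = b h * S b lam t h := by
    rw [Finset.sum_ite_eq' (Finset.range (t+2)) h (fun _ => b h * S b lam t h)]
    split_ifs with hmem
    · rfl
    · rw [Finset.mem_range] at hmem
      rw [S_eq_zero_of_gt b lam (by omega : t < h), mul_zero]
  have hB : (∑ h' ∈ Finset.range (t+2),
        if h' = h + 1 then lam (h+1) * S b lam t (h+1) else 0)
      = lam (h+1) * S b lam t (h+1) := by
    rw [Finset.sum_ite_eq' (Finset.range (t+2)) (h+1)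
      (fun _ => lam (h+1) * S b lam t (h+1))]
    split_ifs with hmem
    · rfl
    · rw [Finset.mem_range] at hmem
      rw [S_eq_zero_of_gt b lam (by omega : t < h + 1), mul_zero]
  have hC : (∑ h' ∈ Finset.range (t+2), if h' + 1 = h then S b lam t h' else 0)
      = (if h = 0 then 0 else S b lam t (h-1)) := by
    rcases h with _ | k
    · simp
    · simp only [add_left_inj]
      rw [Finset.sum_ite_eq' (Finset.range (t+2)) k (fun h' => S b lam t h')]
      rw [if_neg (by omega : ¬ (k + 1 = 0))]
      split_ifs with hmem
      · rfl
      · rw [Finset.mem_range] at hmem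
        exact (S_eq_zero_of_gt b lam (by omega : t < k + 1 - 1)).symm
  rw [hA, hB, hC]
  ring

section Main
variable (lam : ℕ → R) (hlam0 : lam 0 = 0)

lemma step0 (t h : ℕ) :
    S (fun _ => (0:R)) lam (t+1) h
      = (if h = 0 then 0 else S (fun _ => (0:R)) lam t (h-1))
        + lam (h+1) * S (fun _ => (0:R)) lam t (h+1) := by
  rw [S_step]
  simp only [zero_mul, add_zero]

lemma S_parity : ∀ t h : ℕ, (t + h) % 2 = 1 → S (fun _ => (0:R)) lam t h = 0 := by
  intro t
  induction t with
  | zero =>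
    intro h hp
    rw [S_zero, if_neg (by omega)]
  | succ t ih =>
    intro h hp
    rw [step0]
    have h1 : S (fun _ => (0:R)) lam t (h+1) = 0 := ih (h+1) (by omega)
    have h2 : (if h = 0 then 0 else S (fun _ => (0:R)) lam t (h-1)) = 0 := by
      split_ifs with h0
      · rfl
      · exact ih (h-1) (by omega)
    rw [h1, h2, mul_zero, add_zero]

lemma stepE (t h : ℕ) :
    S (fun m => lam (2*m) + lam (2*m+1)) (fun m => lam (2*m-1) * lam (2*m)) (t+1) h
      = (if h = 0 then 0
          else S (fun m => lam (2*m) + lam (2*m+1)) (fun m => lam (2*m-1) * lam (2*m)) t (h-1))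
        + (lam (2*h) + lam (2*h+1))
            * S (fun m => lam (2*m) + lam (2*m+1)) (fun m => lam (2*m-1) * lam (2*m)) t h
        + lam (2*h+1) * lam (2*h+2)
            * S (fun m => lam (2*m) + lam (2*m+1)) (fun m => lam (2*m-1) * lam (2*m)) t (h+1) := by
  rw [S_step]
  have i1 : 2*(h+1)-1 = 2*h+1 := by omega
  have i2 : 2*(h+1) = 2*h+2 := by omega
  have i3 : 2*h+2-1 = 2*h+1 := by omega
  simp only [i1, i2, i3]

lemma stepO (t h : ℕ) :
    S (fun m => lam (2*m+1) + lam (2*m+2)) (fun m => lam (2*m) * lam (2*m+1)) (t+1) h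
      = (if h = 0 then 0
          else S (fun m => lam (2*m+1) + lam (2*m+2)) (fun m => lam (2*m) * lam (2*m+1)) t (h-1))
        + (lam (2*h+1) + lam (2*h+2))
            * S (fun m => lam (2*m+1) + lam (2*m+2)) (fun m => lam (2*m) * lam (2*m+1)) t h
        + lam (2*h+2) * lam (2*h+3)
            * S (fun m => lam (2*m+1) + lam (2*m+2)) (fun m => lam (2*m) * lam (2*m+1)) t (h+1) := by
  rw [S_step]
  have i1 : 2*(h+1) = 2*h+2 := by omega
  have i2 : 2*(h+1)+1 = 2*h+3 := by omega
  have i3 : 2*h+2+1 = 2*h+3 := by omega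
  simp only [i1, i2, i3]

include hlam0 in
lemma S_even : ∀ t h : ℕ, S (fun _ => (0:R)) lam (2*t) (2*h)
    = S (fun m => lam (2*m) + lam (2*m+1)) (fun m => lam (2*m-1) * lam (2*m)) t h := by
  intro t
  induction t with
  | zero =>
    intro h
    rw [show 2*0 = 0 from rfl, S_zero, S_zero]
    by_cases h0 : h = 0 <;> simp [h0]
  | succ t ih =>
    intro h
    have e1 : 2*(t+1) = (2*t+1)+1 := by omega
    rw [e1, step0]
    rcases h with _ | k
    · -- h = 0
      rw [if_pos rfl, stepE]
      have eB : S (fun _ => (0:R)) lam (2*t+1) (2*0+1)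
          = S (fun _ => (0:R)) lam (2*t) 0
            + lam 2 * S (fun _ => (0:R)) lam (2*t) 2 := by
        rw [show (2*0+1 : ℕ) = 0+1 from rfl, step0]
        norm_num
      rw [eB]
      have h1 := ih 0
      have h2 := ih 1
      norm_num at h1 h2 ⊢
      rw [h1, h2, hlam0]
      ring
    · -- h = k+1
      rw [if_neg (by omega), stepE]
      have hk1 : 2*(k+1) - 1 = 2*k+1 := by omega
      rw [hk1]
      have eA : S (fun _ => (0:R)) lam (2*t+1) (2*k+1)
          = S (fun _ => (0:R)) lam (2*t) (2*k)
            + lam (2*k+2) * S (fun _ => (0:R)) lam (2*t) (2*k+2) := by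
        rw [show (2*k+1 : ℕ) = (2*k)+1 from rfl, step0]
        have : ¬ (2*k+1 = 0) := by omega
        rw [if_neg this]
        norm_num
      have eB : S (fun _ => (0:R)) lam (2*t+1) (2*(k+1)+1)
          = S (fun _ => (0:R)) lam (2*t) (2*(k+1))
            + lam (2*(k+1)+2) * S (fun _ => (0:R)) lam (2*t) (2*(k+1)+2) := by
        rw [show (2*(k+1)+1 : ℕ) = (2*(k+1))+1 from rfl, step0]
        rw [if_neg (by omega)]
        have j1 : 2*(k+1)+1-1 = 2*(k+1) := by omega
        have j2 : 2*(k+1)+1+1 = 2*(k+1)+2 := by omega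
        rw [j1, j2]
      rw [eA, eB, if_neg (Nat.succ_ne_zero k)]
      have h1 := ih k
      have h2 := ih (k+1)
      have h3 := ih (k+2)
      simp only [show (2*(k+1) : ℕ) = 2*k+2 by omega, show (2*(k+2) : ℕ) = 2*k+2+2 by omega,
        show (2*(k+1)+2 : ℕ) = 2*k+2+2 by omega, show (k+1-1 : ℕ) = k by omega,
        show (2*(k+1)+1 : ℕ) = 2*k+2+1 by omega, show (2*k+3 : ℕ) = 2*k+2+1 by omega]
        at h1 h2 h3 ⊢
      rw [h1, h2, h3]
      ring

lemma S_odd : ∀ t h : ℕ, S (fun _ => (0:R)) lam (2*t+1) (2*h+1)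
    = S (fun m => lam (2*m+1) + lam (2*m+2)) (fun m => lam (2*m) * lam (2*m+1)) t h := by
  intro t
  induction t with
  | zero =>
    intro h
    rw [show (2*0+1 : ℕ) = 0+1 from rfl, step0, if_neg (by omega : ¬ (2*h+1 = 0))]
    rw [show (2*h+1-1 : ℕ) = 2*h by omega, show (2*h+1+1 : ℕ) = 2*h+2 by omega]
    rw [S_zero, S_zero, S_zero, if_neg (by omega : ¬ (2*h+2 = 0)), mul_zero, add_zero]
    by_cases h0 : h = 0 <;> simp [h0]
  | succ t ih =>
    intro h
    rw [show (2*(t+1)+1 : ℕ) = (2*t+2)+1 by omega, step0,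
      if_neg (by omega : ¬ (2*h+1 = 0)),
      show (2*h+1-1 : ℕ) = 2*h by omega, show (2*h+1+1 : ℕ) = 2*h+2 by omega]
    have eA : S (fun _ => (0:R)) lam (2*t+2) (2*h)
        = (if h = 0 then 0 else S (fun _ => (0:R)) lam (2*t+1) (2*h-1))
          + lam (2*h+1) * S (fun _ => (0:R)) lam (2*t+1) (2*h+1) := by
      rw [show (2*t+2 : ℕ) = (2*t+1)+1 by omega, step0]
      by_cases h0 : h = 0
      · subst h0; norm_num
      · rw [if_neg (by omega : ¬ (2*h = 0)), if_neg h0]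
    have eB : S (fun _ => (0:R)) lam (2*t+2) (2*h+2)
        = S (fun _ => (0:R)) lam (2*t+1) (2*h+1)
          + lam (2*h+3) * S (fun _ => (0:R)) lam (2*t+1) (2*h+3) := by
      rw [show (2*t+2 : ℕ) = (2*t+1)+1 by omega, step0,
        if_neg (by omega : ¬ (2*h+2 = 0)),
        show (2*h+2-1 : ℕ) = 2*h+1 by omega, show (2*h+2+1 : ℕ) = 2*h+3 by omega]
    rw [eA, eB, stepO]
    have h2 := ih h
    have h3 := ih (h+1)
    rw [show (2*(h+1)+1 : ℕ) = 2*h+3 by omega] at h3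
    rw [h2, h3]
    rcases h with _ | k
    · norm_num
      ring
    · have h1 := ih k
      rw [show (2*(k+1)-1 : ℕ) = 2*k+1 by omega, show (k+1-1 : ℕ) = k by omega,
        if_neg (Nat.succ_ne_zero k), if_neg (Nat.succ_ne_zero k), h1]
      ring

end Main
lemma polyAux {R : Type*} [CommRing R] (lam : ℕ → R) (hlam0 : lam 0 = 0)
    (p e o : ℕ → Polynomial R)
    (hp0 : p 0 = 1) (hp1 : p 1 = X)
    (hp : ∀ m : ℕ, p (m + 2) = X * p (m + 1) - C (lam (m + 1)) * p m)
    (he0 : e 0 = 1) (he1 : e 1 = X - C (lam 0 + lam 1))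
    (he : ∀ m : ℕ, e (m + 2) =
      (X - C (lam (2 * (m + 1)) + lam (2 * (m + 1) + 1))) * e (m + 1)
        - C (lam (2 * m + 1) * lam (2 * (m + 1))) * e m)
    (ho0 : o 0 = 1) (ho1 : o 1 = X - C (lam 1 + lam 2))
    (ho : ∀ m : ℕ, o (m + 2) =
      (X - C (lam (2 * (m + 1) + 1) + lam (2 * (m + 1) + 2))) * o (m + 1)
        - C (lam (2 * (m + 1)) * lam (2 * (m + 1) + 1)) * o m) :
    ∀ n : ℕ, (p (2 * n) = (e n).comp (X ^ 2) ∧ p (2 * n + 1) = X * (o n).comp (X ^ 2)) := by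
  have ptwo : ∀ m : ℕ, p (m+4) = (X^2 - C (lam (m+2) + lam (m+3))) * p (m+2)
      - C (lam (m+1) * lam (m+2)) * p m := by
    intro m
    have h4 : p (m+4) = X * p (m+3) - C (lam (m+3)) * p (m+2) := by
      have := hp (m+2)
      rwa [show m+2+2 = m+4 by omega, show m+2+1 = m+3 by omega] at this
    have h3 : p (m+3) = X * p (m+2) - C (lam (m+2)) * p (m+1) := by
      have := hp (m+1)
      rwa [show m+1+2 = m+3 by omega, show m+1+1 = m+2 by omega] at this
    rw [h4, h3, hp m]
    simp only [map_add, map_mul]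
    ring
  have h2 : p 2 = X^2 - C (lam 1) := by
    have := hp 0
    norm_num at this
    rw [this, hp0, hp1]
    ring
  have keyE : ∀ n : ℕ, p (2*n) = (e n).comp (X^2) ∧ p (2*(n+1)) = (e (n+1)).comp (X^2) := by
    intro n
    induction n with
    | zero =>
      constructor
      · rw [show 2*0 = 0 by omega, hp0, he0, one_comp]
      · rw [show 2*(0+1) = 2 by omega, h2, he1, sub_comp, X_comp, C_comp, hlam0, zero_add]
    | succ n ih =>
      obtain ⟨ih1, ih2⟩ := ih
      refine ⟨ih2, ?_⟩
      have hstep := ptwo (2*n)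
      rw [show 2*n+4 = 2*(n+1+1) by omega, show 2*n+2 = 2*(n+1) by omega] at hstep
      have hem := he n
      rw [hstep, hem, sub_comp, mul_comp, mul_comp, sub_comp, X_comp, C_comp, C_comp,
        ih2, ih1]
      rw [show 2*(n+1) = 2*n+2 by omega, show 2*n+2+1 = 2*n+3 by omega]
  have keyO : ∀ n : ℕ, p (2*n+1) = X * (o n).comp (X^2)
      ∧ p (2*(n+1)+1) = X * (o (n+1)).comp (X^2) := by
    intro n
    induction n with
    | zero =>
      constructor
      · rw [show 2*0+1 = 1 by omega, hp1, ho0, one_comp, mul_one]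
      · have h3 : p 3 = X * p 2 - C (lam 2) * p 1 := by
          have := hp 1; norm_num at this; exact this
        rw [show 2*(0+1)+1 = 3 by omega, h3, h2, hp1, ho1, sub_comp, X_comp, C_comp]
        simp only [map_add]
        ring
    | succ n ih =>
      obtain ⟨ih1, ih2⟩ := ih
      refine ⟨ih2, ?_⟩
      have hstep := ptwo (2*n+1)
      rw [show 2*n+1+4 = 2*(n+1+1)+1 by omega, show 2*n+1+2 = 2*(n+1)+1 by omega] at hstep
      have hom := ho n
      rw [hstep, hom, sub_comp, mul_comp, mul_comp, sub_comp, X_comp, C_comp, C_comp,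
        ih2, ih1]
      rw [show 2*n+1+1 = 2*(n+1) by omega, show 2*n+1+3 = 2*(n+1)+2 by omega]
      ring
  intro n
  exact ⟨(keyE n).1, (keyO n).1⟩

end OET

/-- the odd–even trick, Chihara. Suppose `b = (0,0,…)`, `λ₀ = 0`, and
`p, e, o` satisfy the indicated three-term recurrences (with `p₋₁ = e₋₁ = o₋₁ = 0`, so the
recurrences at the bottom read `p 1 = X`, `e 1 = X - (λ₀ + λ₁)`, `o 1 = X - (λ₁ + λ₂)`).
Then for all `n`: `μ_{2n+1} = 0`; `p_{2n}(x) = e_n(x²)` and `p_{2n+1}(x) = x·o_n(x²)`;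
`μ_{2n}` is the `n`-th moment of `(bᵉ, λᵉ)`; and `μ_{2n+2} = λ₁ ·` (the `n`-th moment of
`(bᵒ, λᵒ)`). -/
theorem oddEvenTrick {R : Type*} [CommRing R] (lam : ℕ → R) (hlam0 : lam 0 = 0)
    (p e o : ℕ → Polynomial R)
    (hp0 : p 0 = 1) (hp1 : p 1 = X)
    (hp : ∀ m : ℕ, p (m + 2) = X * p (m + 1) - C (lam (m + 1)) * p m)
    (he0 : e 0 = 1) (he1 : e 1 = X - C (lam 0 + lam 1))
    (he : ∀ m : ℕ, e (m + 2) =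
      (X - C (lam (2 * (m + 1)) + lam (2 * (m + 1) + 1))) * e (m + 1)
        - C (lam (2 * m + 1) * lam (2 * (m + 1))) * e m)
    (ho0 : o 0 = 1) (ho1 : o 1 = X - C (lam 1 + lam 2))
    (ho : ∀ m : ℕ, o (m + 2) =
      (X - C (lam (2 * (m + 1) + 1) + lam (2 * (m + 1) + 2))) * o (m + 1)
        - C (lam (2 * (m + 1)) * lam (2 * (m + 1) + 1)) * o m) :
    ∀ n : ℕ,
      motzkinMoment (fun _ => (0 : R)) lam (2 * n + 1) = 0 ∧
      p (2 * n) = (e n).comp (X ^ 2) ∧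
      p (2 * n + 1) = X * (o n).comp (X ^ 2) ∧
      motzkinMoment (fun _ => (0 : R)) lam (2 * n) =
        motzkinMoment (fun m => lam (2 * m) + lam (2 * m + 1))
          (fun m => lam (2 * m - 1) * lam (2 * m)) n ∧
      motzkinMoment (fun _ => (0 : R)) lam (2 * n + 2) =
        lam 1 * motzkinMoment (fun m => lam (2 * m + 1) + lam (2 * m + 2))
          (fun m => lam (2 * m) * lam (2 * m + 1)) n := by

  have hSM : ∀ (b lam' : ℕ → R) (t : ℕ), motzkinMoment b lam' t = OET.S b lam' t 0 :=
    fun _ _ _ => rfl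
  have hpoly := OET.polyAux lam hlam0 p e o hp0 hp1 hp he0 he1 he ho0 ho1 ho
  intro n
  refine ⟨?_, (hpoly n).1, (hpoly n).2, ?_, ?_⟩
  · rw [hSM]
    exact OET.S_parity lam (2*n+1) 0 (by omega)
  · rw [hSM, hSM]
    have := OET.S_even lam hlam0 n 0
    rw [show 2*0 = 0 by omega] at this
    exact this
  · rw [hSM, hSM]
    rw [show 2*n+2 = (2*n+1)+1 by omega, OET.step0, if_pos rfl]
    have := OET.S_odd lam n 0
    rw [show 2*0+1 = 0+1 by omega] at this
    rw [this]
    ring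
end

section
/- Fix n ≥ 0. Let R = ℤ[λ_1, λ_2, …] be the polynomial ring over ℤ in the indeterminates λ_i (i ≥ 1), let b = (0, 0, …), let μ_m ∈ R be the m-th moment of (b, λ), and put s_k = λ_1λ_2⋯λ_k (s_0 = 1). Then over R: (i) the matrix (μ_{i+j})_{0≤i,j≤n} has SSNF diag(s_0, s_1, s_2, …, s_n); (ii) the matrix (μ_{2i+2j})_{0≤i,j≤n} has SSNF diag(s_0, s_2, s_4, …, s_{2n}); (iii) the matrix (μ_{2i+2j+2})_{0≤i,j≤n} has SSNF diag(s_1, s_3, s_5, …, s_{2n+1}). -/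
/-!
Let `G t k` be the weighted count of Motzkin prefixes of length `t` from height `0` to height `k`,
so that `μ_t = G t 0` and the matrix `(G i k)` is lower unitriangular. Because
`s_{h+1} = s_h λ_{h+1}`, the weights `s_h` are in detailed balance with the step weights `w`:
`s_h w(h', h) = s_{h'} w(h, h')`. Moving the last step of a prefix from one factor to the
other therefore shows that `∑_k s_k G(i, k) G(j, k)` depends only on `i + j`; at `j = 0` it
is `μ_i`.
Thus `(μ_{i+j}) = L diag(s) Lᵀ` with `L = (G(i, k))` of determinant `1`, which is an SSNF.
When `b = 0`, `G t k` vanishes unless `t ≡ k (mod 2)`, so the rows and columns of even (odd) index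
alone give the same factorisation for `(μ_{2i+2j})` (resp. `(μ_{2i+2j+2})`).
-/

open Finset

variable {R : Type*} [CommRing R]

def motzkinPathsTo (t k : ℕ) : Finset (Fin (t+1) → ℕ) :=
  (Fintype.piFinset fun _ : Fin (t+1) => range (t+1)).filter
    (fun ω => ω 0 = 0 ∧ ω (Fin.last t) = k ∧
      ∀ i : Fin t, ω i.succ ≤ ω i.castSucc + 1 ∧ ω i.castSucc ≤ ω i.succ + 1)

/-- Weighted count of Motzkin prefixes of length `t` ending at height `k`;
`partialMoment b lam t 0` is definitionally `motzkinMoment b lam t`. -/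
def partialMoment (b lam : ℕ → R) (t k : ℕ) : R :=
  ∑ ω ∈ motzkinPathsTo t k, motzkinWeight b lam ω

def stepWeight (b lam : ℕ → R) (h k : ℕ) : R :=
  if k = h then b h else if k + 1 = h then lam h else if h + 1 = k then 1 else 0

def lambdaProd (lam : ℕ → R) (k : ℕ) : R :=
  ∏ t ∈ Icc 1 k, lam t

section Paths

variable {t k : ℕ}

lemma le_of_motzkin_steps {ω : Fin (t+1) → ℕ} (h0 : ω 0 = 0)
    (hstep : ∀ i : Fin t, ω i.succ ≤ ω i.castSucc + 1 ∧ ω i.castSucc ≤ ω i.succ + 1)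
    (i : Fin (t+1)) : ω i ≤ i := by
  induction i using Fin.induction with
  | zero => simp [h0]
  | succ i ih =>
    have := (hstep i).1
    simp only [Fin.val_castSucc, Fin.val_succ] at ih ⊢
    omega

lemma mem_motzkinPathsTo {ω : Fin (t+1) → ℕ} :
    ω ∈ motzkinPathsTo t k ↔ ω 0 = 0 ∧ ω (Fin.last t) = k ∧
      ∀ i : Fin t, ω i.succ ≤ ω i.castSucc + 1 ∧ ω i.castSucc ≤ ω i.succ + 1 := by
  simp only [motzkinPathsTo, mem_filter, Fintype.mem_piFinset, mem_range, and_iff_right_iff_imp]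
  rintro ⟨h0, -, hstep⟩ i
  have := le_of_motzkin_steps h0 hstep i
  omega

lemma le_of_mem_motzkinPathsTo {ω : Fin (t+1) → ℕ} (hω : ω ∈ motzkinPathsTo t k) :
    k ≤ t := by
  obtain ⟨h0, rfl, hstep⟩ := mem_motzkinPathsTo.1 hω
  simpa using le_of_motzkin_steps h0 hstep (Fin.last t)

lemma motzkinPathsTo_eq_empty (h : t < k) : motzkinPathsTo t k = ∅ :=
  eq_empty_of_forall_notMem fun _ hω => (le_of_mem_motzkinPathsTo hω).not_gt h

lemma motzkinPathsTo_zero_zero : motzkinPathsTo 0 0 = {0} := by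
  ext ω
  simp [mem_motzkinPathsTo, funext_iff, Fin.forall_fin_one]

lemma snoc_mem_motzkinPathsTo {h : ℕ} {ω : Fin (t+1) → ℕ} (hω : ω ∈ motzkinPathsTo t h)
    (hk : k ≤ h + 1) (hh : h ≤ k + 1) :
    (Fin.snoc ω k : Fin (t+2) → ℕ) ∈ motzkinPathsTo (t+1) k := by
  obtain ⟨h0, hlast, hstep⟩ := mem_motzkinPathsTo.1 hω
  refine mem_motzkinPathsTo.2 ⟨?_, Fin.snoc_last _ _, fun i => ?_⟩
  · rw [show (0 : Fin (t+2)) = Fin.castSucc 0 from rfl, Fin.snoc_castSucc]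
    exact h0
  · induction i using Fin.lastCases with
    | last => simpa [hlast] using ⟨hk, hh⟩
    | cast j => simpa only [Fin.succ_castSucc, Fin.snoc_castSucc] using hstep j

lemma init_mem_motzkinPathsTo {ω : Fin (t+2) → ℕ} (hω : ω ∈ motzkinPathsTo (t+1) k) :
    Fin.init ω ∈ motzkinPathsTo t (ω (Fin.last t).castSucc) := by
  obtain ⟨h0, -, hstep⟩ := mem_motzkinPathsTo.1 hω
  exact mem_motzkinPathsTo.2 ⟨h0, rfl, fun i => by simpa [Fin.init] using hstep i.castSucc⟩

lemma last_adjacent_of_mem_motzkinPathsTo {ω : Fin (t+2) → ℕ}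
    (hω : ω ∈ motzkinPathsTo (t+1) k) :
    k ≤ ω (Fin.last t).castSucc + 1 ∧ ω (Fin.last t).castSucc ≤ k + 1 := by
  obtain ⟨-, hlast, hstep⟩ := mem_motzkinPathsTo.1 hω
  simpa [hlast] using hstep (Fin.last t)

end Paths

variable (b lam : ℕ → R)

lemma stepWeight_eq_zero {h k : ℕ} (hv : ¬(k ≤ h + 1 ∧ h ≤ k + 1)) :
    stepWeight b lam h k = 0 := by
  simp only [stepWeight]
  split_ifs <;> first | rfl | omega

lemma stepWeight_up (h : ℕ) : stepWeight b lam h (h+1) = 1 := by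
  rw [stepWeight, if_neg (by omega), if_neg (by omega), if_pos rfl]

lemma stepWeight_down (h : ℕ) : stepWeight b lam (h+1) h = lam (h+1) := by
  rw [stepWeight, if_neg (by omega), if_pos rfl]

lemma motzkinWeight_snoc {t k : ℕ} (ω : Fin (t+1) → ℕ)
    (hk : k ≤ ω (Fin.last t) + 1) (hh : ω (Fin.last t) ≤ k + 1) :
    motzkinWeight b lam (Fin.snoc ω k : Fin (t+2) → ℕ)
      = stepWeight b lam (ω (Fin.last t)) k * motzkinWeight b lam ω := by
  rw [motzkinWeight, Fin.prod_univ_castSucc, mul_comm, motzkinWeight]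
  congr 1
  · simp only [Fin.succ_last, Fin.snoc_last, Fin.snoc_castSucc, stepWeight]
    split_ifs <;> first | rfl | omega
  · simp only [Fin.succ_castSucc, Fin.snoc_castSucc]

lemma partialMoment_eq_zero_of_lt {t k : ℕ} (h : t < k) : partialMoment b lam t k = 0 := by
  rw [partialMoment, motzkinPathsTo_eq_empty h, sum_empty]

lemma partialMoment_zero (k : ℕ) : partialMoment b lam 0 k = if k = 0 then 1 else 0 := by
  split_ifs with hk
  · simp [partialMoment, hk, motzkinPathsTo_zero_zero, motzkinWeight]
  · exact partialMoment_eq_zero_of_lt b lam (Nat.pos_of_ne_zero hk)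

lemma partialMoment_succ (t k : ℕ) :
    partialMoment b lam (t+1) k
      = ∑ h ∈ range (t+1), stepWeight b lam h k * partialMoment b lam t h := by
  simp only [partialMoment, mul_sum]
  rw [sum_sigma', eq_comm, ← sum_filter_of_ne (p := fun p => k ≤ p.1 + 1 ∧ p.1 ≤ k + 1)
    fun p _ hne => by_contra fun hadj => hne (by rw [stepWeight_eq_zero b lam hadj, zero_mul])]
  refine sum_bij' (fun p _ => Fin.snoc p.2 k)
    (fun ω _ => ⟨ω (Fin.last t).castSucc, Fin.init ω⟩)
    (fun p hp => ?_) (fun ω hω => ?_) (fun p hp => ?_) (fun ω hω => ?_) (fun p hp => ?_)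
  · simp only [mem_filter, mem_sigma] at hp
    exact snoc_mem_motzkinPathsTo hp.1.2 hp.2.1 hp.2.2
  · have hinit := init_mem_motzkinPathsTo hω
    simpa [le_of_mem_motzkinPathsTo hinit, Nat.lt_succ_iff, hinit] using
      last_adjacent_of_mem_motzkinPathsTo hω
  · simp only [mem_filter, mem_sigma] at hp
    simp [Fin.init_snoc, (mem_motzkinPathsTo.1 hp.1.2).2.1]
  · rw [← (mem_motzkinPathsTo.1 hω).2.1]
    exact Fin.snoc_init_self ω
  · simp only [mem_filter, mem_sigma] at hp
    have hlast := (mem_motzkinPathsTo.1 hp.1.2).2.1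
    rw [motzkinWeight_snoc b lam _ (hlast ▸ hp.2.1) (hlast ▸ hp.2.2), hlast]

lemma partialMoment_succ_of_le {t N : ℕ} (hN : t + 1 ≤ N) (k : ℕ) :
    partialMoment b lam (t+1) k
      = ∑ h ∈ range N, stepWeight b lam h k * partialMoment b lam t h := by
  rw [partialMoment_succ]
  refine sum_subset (range_subset_range.2 hN) fun h _ hh => ?_
  rw [partialMoment_eq_zero_of_lt b lam (by simpa using hh), mul_zero]

lemma partialMoment_self (t : ℕ) : partialMoment b lam t t = 1 := by
  induction t with
  | zero => simp [partialMoment_zero]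
  | succ t ih =>
    rw [partialMoment_succ, sum_eq_single_of_mem t (self_mem_range_succ t), ih, mul_one,
      stepWeight_up]
    intro h hh hne
    rw [stepWeight_eq_zero b lam (by simp at hh; omega), zero_mul]

lemma partialMoment_eq_zero_of_odd (t : ℕ) {k : ℕ} (hodd : Odd (t + k)) :
    partialMoment 0 lam t k = 0 := by
  induction t generalizing k with
  | zero => rw [partialMoment_zero, if_neg (by rintro rfl; simp at hodd)]
  | succ t ih =>
    rw [partialMoment_succ]
    refine sum_eq_zero fun h _ => ?_
    rcases Nat.even_or_odd (t + h) with heven | hodd'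
    · have : stepWeight 0 lam h k = 0 := by
        rw [Nat.odd_iff] at hodd
        rw [Nat.even_iff] at heven
        simp only [stepWeight]
        split_ifs <;> first | rfl | omega
      rw [this, zero_mul]
    · rw [ih hodd', mul_zero]

lemma lambdaProd_succ (k : ℕ) : lambdaProd lam (k+1) = lambdaProd lam k * lam (k+1) :=
  prod_Icc_succ_top (by omega) lam

lemma lambdaProd_dvd {j k : ℕ} (h : j ≤ k) : lambdaProd lam j ∣ lambdaProd lam k :=
  prod_dvd_prod_of_subset _ _ lam (Icc_subset_Icc_right h)

/-- Detailed balance: this symmetry is what makes the Hankel matrix factor as `L D Lᵀ`. -/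
lemma lambdaProd_mul_stepWeight_comm (h h' : ℕ) :
    lambdaProd lam h * stepWeight b lam h' h = lambdaProd lam h' * stepWeight b lam h h' := by
  rcases eq_or_ne h h' with rfl | hne
  · rfl
  by_cases hadj : h ≤ h' + 1 ∧ h' ≤ h + 1
  · obtain rfl | rfl : h = h' + 1 ∨ h' = h + 1 := by omega
    · rw [stepWeight_up, stepWeight_down, lambdaProd_succ, mul_one]
    · rw [stepWeight_up, stepWeight_down, lambdaProd_succ, mul_one]
  · rw [stepWeight_eq_zero b lam hadj, stepWeight_eq_zero b lam (by omega), mul_zero, mul_zero]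

lemma sum_lambdaProd_mul_partialMoment_succ_left {i j N : ℕ} (hN : i + j + 1 ≤ N) :
    ∑ k ∈ range N, lambdaProd lam k * partialMoment b lam (i+1) k * partialMoment b lam j k
      = ∑ k ∈ range N,
          lambdaProd lam k * partialMoment b lam i k * partialMoment b lam (j+1) k := by
  simp only [partialMoment_succ_of_le b lam (show i + 1 ≤ N by omega),
    partialMoment_succ_of_le b lam (show j + 1 ≤ N by omega), mul_sum, sum_mul]
  rw [sum_comm]
  refine sum_congr rfl fun h _ => sum_congr rfl fun k _ => ?_
  linear_combination
    partialMoment b lam i h * partialMoment b lam j k * lambdaProd_mul_stepWeight_comm b lam k h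

theorem partialMoment_add_eq_sum {N : ℕ} (i j : ℕ) (hN : i + j + 1 ≤ N) :
    partialMoment b lam (i + j) 0
      = ∑ k ∈ range N,
          lambdaProd lam k * partialMoment b lam i k * partialMoment b lam j k := by
  induction j generalizing i with
  | zero =>
    rw [sum_eq_single_of_mem 0 (by simp; omega)]
    · simp [partialMoment_zero, lambdaProd]
    · intro k _ hk
      rw [partialMoment_zero, if_neg hk, mul_zero]
  | succ j ih =>
    rw [show i + (j + 1) = i + 1 + j by omega, ih (i+1) (by omega),
      sum_lambdaProd_mul_partialMoment_succ_left b lam (by omega)]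

lemma HasSSNF.of_eq_mul_diagonal_mul_transpose {n : ℕ} {A F : Matrix (Fin n) (Fin n) R}
    {d : Fin n → R} (hF : F.det = 1) (hA : A = F * Matrix.diagonal d * F.transpose)
    (hd : ∀ i j, j ≤ i → d j ∣ d i) : HasSSNF A d := by
  have hu : IsUnit F.det := hF ▸ isUnit_one
  have hut : IsUnit F.transpose.det := (Matrix.det_transpose F).symm ▸ hu
  refine ⟨⟨F⁻¹, F.transpose⁻¹, ?_, ?_, ?_⟩, hd⟩
  · rw [Matrix.det_nonsing_inv, hF, Ring.inverse_one]
  · rw [Matrix.det_nonsing_inv, Matrix.det_transpose, hF, Ring.inverse_one]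
  · rw [hA, Matrix.mul_assoc, Matrix.mul_assoc, Matrix.mul_nonsing_inv _ hut, Matrix.mul_one,
      Matrix.nonsing_inv_mul_cancel_left _ _ hu]

lemma motzkinMoment_add_eq_sum_fin {n : ℕ} {e : ℕ → ℕ} (he : StrictMono e)
    (hsupp : ∀ j ≤ n, ∀ h, partialMoment b lam (e j) h ≠ 0 → ∃ k ≤ n, e k = h)
    (i j : Fin (n+1)) :
    motzkinMoment b lam (e i + e j) = ∑ k : Fin (n+1), lambdaProd lam (e k) *
      partialMoment b lam (e i) (e k) * partialMoment b lam (e j) (e k) := by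
  have hj := Nat.lt_succ_iff.1 j.isLt
  have hi := Nat.lt_succ_iff.1 i.isLt
  rw [Fin.sum_univ_eq_sum_range (fun k => lambdaProd lam (e k) * partialMoment b lam (e i) (e k)
    * partialMoment b lam (e j) (e k)),
    ← sum_image (f := fun h => lambdaProd lam h * partialMoment b lam (e i) h
      * partialMoment b lam (e j) h) he.injective.injOn]
  refine (partialMoment_add_eq_sum b lam _ _ (N := e n + e n + 1)
    (by have := he.monotone hi; have := he.monotone hj; omega)).trans (sum_subset ?_ ?_).symm
  · intro h hh
    obtain ⟨k, hk, rfl⟩ := mem_image.1 hh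
    have := he.monotone (Nat.lt_succ_iff.1 (mem_range.1 hk))
    simp only [mem_range]
    omega
  · intro h _ hh
    by_contra hne
    obtain ⟨k, hk, rfl⟩ := hsupp j hj h (right_ne_zero_of_mul hne)
    exact hh (mem_image_of_mem e (mem_range.2 (Nat.lt_succ_of_le hk)))

theorem hasSSNF_hankel (n : ℕ) {e : ℕ → ℕ} (he : StrictMono e)
    (hsupp : ∀ j ≤ n, ∀ h, partialMoment b lam (e j) h ≠ 0 → ∃ k ≤ n, e k = h) :
    HasSSNF (fun i j : Fin (n+1) => motzkinMoment b lam (e i + e j))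
      (fun i => lambdaProd lam (e i)) := by
  let F : Matrix (Fin (n+1)) (Fin (n+1)) R :=
    Matrix.of fun i k => partialMoment b lam (e i) (e k)
  have hF : F.IsLowerTriangular := fun i k hik =>
    partialMoment_eq_zero_of_lt b lam (he (show (i : ℕ) < k from hik))
  refine .of_eq_mul_diagonal_mul_transpose (F := F) ?_ ?_
    fun i j hij => lambdaProd_dvd lam (he.monotone hij)
  · simp [Matrix.det_of_isLowerTriangular F hF, F, partialMoment_self]
  · ext i j
    rw [motzkinMoment_add_eq_sum_fin b lam he hsupp, Matrix.mul_apply]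
    simp only [F, Matrix.mul_diagonal, Matrix.transpose_apply, Matrix.of_apply]
    exact sum_congr rfl fun k _ => by ring

lemma le_and_even_of_partialMoment_ne_zero {t k : ℕ} (hne : partialMoment 0 lam t k ≠ 0) :
    k ≤ t ∧ Even (t + k) :=
  ⟨le_of_not_gt fun h => hne (partialMoment_eq_zero_of_lt 0 lam h),
    Nat.not_odd_iff_even.1 fun h => hne (partialMoment_eq_zero_of_odd lam t h)⟩

/-- Over `R = ℤ[λ₁, λ₂, …]`, with `b = (0,0,…)`, `μ_m` the moments of
`(b, λ)` and `s_k = λ₁λ₂⋯λ_k`: (i) `(μ_{i+j})` has SSNF `diag(s_0, …, s_n)`;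
(ii) `(μ_{2i+2j})` has SSNF `diag(s_0, s_2, …, s_{2n})`;
(iii) `(μ_{2i+2j+2})` has SSNF `diag(s_1, s_3, …, s_{2n+1})`. -/
theorem moment_hankel_SSNF_zero_b (n : ℕ) :
    let R := MvPolynomial ℕ+ ℤ
    let lam : ℕ → R := fun i => if h : 0 < i then MvPolynomial.X (⟨i, h⟩ : ℕ+) else 0
    let μ : ℕ → R := motzkinMoment (fun _ => (0 : R)) lam
    let s : ℕ → R := fun k => ∏ t ∈ Finset.Icc 1 k, lam t
    HasSSNF (fun i j : Fin (n+1) => μ ((i : ℕ) + (j : ℕ))) (fun i => s (i : ℕ)) ∧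
    HasSSNF (fun i j : Fin (n+1) => μ (2 * (i : ℕ) + 2 * (j : ℕ))) (fun i => s (2 * (i : ℕ))) ∧
    HasSSNF (fun i j : Fin (n+1) => μ (2 * (i : ℕ) + 2 * (j : ℕ) + 2))
      (fun i => s (2 * (i : ℕ) + 1)) := by
  intro R lam μ s
  have hsupp {t k : ℕ} (hne : partialMoment 0 lam t k ≠ 0) : k ≤ t ∧ (t + k) % 2 = 0 :=
    (le_and_even_of_partialMoment_ne_zero lam hne).imp_right Nat.even_iff.1
  have hid := hasSSNF_hankel (0 : ℕ → R) lam n strictMono_id fun j hj h hne =>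
    ⟨h, (hsupp hne).1.trans hj, rfl⟩
  have heven := hasSSNF_hankel (0 : ℕ → R) lam n (e := (2 * ·))
    (strictMono_mul_left_of_pos two_pos) fun j hj h hne => by
      have := hsupp hne
      exact ⟨h / 2, by omega, by omega⟩
  have hodd := hasSSNF_hankel (0 : ℕ → R) lam n (e := (2 * · + 1))
    ((strictMono_mul_left_of_pos two_pos).add_const 1) fun j hj h hne => by
      have := hsupp hne
      exact ⟨h / 2, by omega, by omega⟩
  simp only [show ∀ i j : ℕ, 2 * i + 1 + (2 * j + 1) = 2 * i + 2 * j + 2 from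
    fun _ _ => by omega] at hodd
  exact ⟨hid, heven, hodd⟩
end
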